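/- arXiv:2104.10540 — 12 statements merged into one kernel-verified Lean document; each statement's English description precedes it below -/
import Mathlib

section
/- Let n ≥ 2 and let u_1, …, u_n be pairwise distinct complex numbers. Then the sum over all permutations σ of {1,…,n} of the products ∏_{i=1}^{n−1} 1/(u_{σ(i)} − u_{σ(i+1)}) vanishes: ∑_{σ ∈ S_n} ∏_{i=1}^{n−1} (u_{σ(i)} − u_{σ(i+1)})^{−1} = 0. -/
open Finset Polynomial

/-- Lagrange identity, evaluation form. -/
lemma aux_lagrange_eval (m : ℕ) (c : ℂ) (v : Fin (m + 1) → ℂ) (hv : Function.Injective v)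
    (hc : ∀ j, c ≠ v j) :
    ∑ p, (c - v p)⁻¹ * ∏ j ∈ univ.erase p, (v p - v j)⁻¹ = ∏ j, (c - v j)⁻¹ := by
  have h1 := Lagrange.sum_basis (Set.injOn_of_injective hv) (univ_nonempty)
  have h2 := congrArg (Polynomial.eval c) h1
  simp only [eval_finset_sum, Lagrange.basis, eval_prod, Lagrange.basisDivisor,
    eval_mul, eval_C, eval_sub, eval_X, eval_one] at h2
  have key : ∀ p : Fin (m + 1),
      (c - v p)⁻¹ * ∏ j ∈ univ.erase p, (v p - v j)⁻¹
        = (∏ j ∈ univ.erase p, ((v p - v j)⁻¹ * (c - v j))) * ∏ j, (c - v j)⁻¹ := by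
    intro p
    rw [prod_mul_distrib, ← Finset.mul_prod_erase _ (fun j => (c - v j)⁻¹) (mem_univ p)]
    have h3 : (∏ j ∈ univ.erase p, (c - v j)) * ∏ j ∈ univ.erase p, (c - v j)⁻¹ = 1 := by
      rw [← prod_mul_distrib]
      exact Finset.prod_eq_one fun j _ => mul_inv_cancel₀ (sub_ne_zero_of_ne (hc j))
    linear_combination (-((c - v p)⁻¹ * ∏ j ∈ univ.erase p, (v p - v j)⁻¹)) * h3
  calc ∑ p, (c - v p)⁻¹ * ∏ j ∈ univ.erase p, (v p - v j)⁻¹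
      = ∑ p, (∏ j ∈ univ.erase p, ((v p - v j)⁻¹ * (c - v j))) * ∏ j, (c - v j)⁻¹ :=
        Finset.sum_congr rfl fun p _ => key p
    _ = ∏ j, (c - v j)⁻¹ := by rw [← Finset.sum_mul, h2, one_mul]

/-- Lagrange identity, leading coefficient form. -/
lemma aux_lagrange_coeff (m : ℕ) (v : Fin (m + 2) → ℂ) (hv : Function.Injective v) :
    ∑ p, ∏ j ∈ univ.erase p, (v p - v j)⁻¹ = 0 := by
  have h1 := Lagrange.sum_basis (Set.injOn_of_injective hv) (univ_nonempty)
  have h2 := congrArg (fun q : ℂ[X] => q.coeff (m + 1)) h1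
  simp only [Polynomial.finset_sum_coeff, Polynomial.coeff_one] at h2
  have hb : ∀ p : Fin (m + 2),
      (Lagrange.basis univ v p).coeff (m + 1) = ∏ j ∈ univ.erase p, (v p - v j)⁻¹ := by
    intro p
    have hB : Lagrange.basis univ v p
        = C (∏ j ∈ univ.erase p, (v p - v j)⁻¹) * Lagrange.nodal (univ.erase p) v := by
      rw [Lagrange.basis, Lagrange.nodal_eq]
      simp only [Lagrange.basisDivisor]
      rw [prod_mul_distrib, map_prod]
    have hdeg : (Lagrange.nodal (univ.erase p) v).natDegree = m + 1 := by
      rw [Lagrange.natDegree_nodal]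
      simp [Finset.card_erase_of_mem]
    rw [hB, coeff_C_mul, ← hdeg, (Lagrange.nodal_monic).coeff_natDegree, mul_one]
  simp only [hb] at h2
  simpa using h2

/-- Reindexing: `x ↦ swap 0 p x.succ` is a bijection `Fin (m+1) → Fin (m+2) \ {p}`. -/
lemma aux_reindex (m : ℕ) (v : Fin (m + 2) → ℂ) (p : Fin (m + 2)) (a : ℂ) :
    ∏ x : Fin (m + 1), (a - v (Equiv.swap 0 p x.succ))⁻¹
      = ∏ j ∈ univ.erase p, (a - v j)⁻¹ := by
  refine Finset.prod_nbij (fun x => Equiv.swap 0 p x.succ) ?_ ?_ ?_ ?_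
  · intro x _
    refine Finset.mem_erase.2 ⟨fun h => ?_, mem_univ _⟩
    have := congrArg (Equiv.swap (0 : Fin (m+2)) p) h
    rw [Equiv.swap_apply_self, Equiv.swap_apply_right] at this
    exact Fin.succ_ne_zero x this
  · intro x _ y _ h
    exact Fin.succ_injective _ ((Equiv.swap 0 p).injective h)
  · intro j hj
    have hj' := Finset.mem_erase.1 (by exact hj)
    have h0 : Equiv.swap (0 : Fin (m+2)) p j ≠ 0 := by
      intro h
      have := congrArg (Equiv.swap (0 : Fin (m+2)) p) h
      rw [Equiv.swap_apply_self, Equiv.swap_apply_left] at this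
      exact hj'.1 this
    refine ⟨(Equiv.swap (0 : Fin (m+2)) p j).pred h0, mem_coe.2 (mem_univ _), ?_⟩
    simp [Fin.succ_pred]
  · intro x _
    rfl

/-- Sum over chains starting at a fixed value `c`. -/
lemma aux_chain : ∀ (m : ℕ) (c : ℂ) (v : Fin (m + 1) → ℂ), Function.Injective v →
    (∀ j, c ≠ v j) →
    ∑ e : Equiv.Perm (Fin (m + 1)),
        (c - v (e 0))⁻¹ * ∏ i : Fin m, (v (e i.castSucc) - v (e i.succ))⁻¹
      = ∏ j, (c - v j)⁻¹ := by
  intro m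
  induction m with
  | zero =>
    intro c v hv hc
    have h1 : ∀ e : Equiv.Perm (Fin 1),
        (c - v (e 0))⁻¹ * ∏ i : Fin 0, (v (e i.castSucc) - v (e i.succ))⁻¹ = (c - v 0)⁻¹ := by
      intro e
      rw [Subsingleton.elim (e 0) 0]
      simp
    rw [Finset.sum_congr rfl fun e _ => h1 e, Finset.sum_const, Finset.card_univ,
      Fintype.card_perm, Fin.prod_univ_one]
    simp
  | succ m ih =>
    intro c v hv hc
    rw [← Equiv.sum_comp (Equiv.Perm.decomposeFin.symm)
      (fun σ : Equiv.Perm (Fin (m + 2)) =>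
        (c - v (σ 0))⁻¹ * ∏ i : Fin (m + 1), (v (σ i.castSucc) - v (σ i.succ))⁻¹),
      Fintype.sum_prod_type]
    have key : ∀ p : Fin (m + 2),
        (∑ e : Equiv.Perm (Fin (m + 1)),
          (c - v ((Equiv.Perm.decomposeFin.symm (p, e)) 0))⁻¹ *
            ∏ i : Fin (m + 1), (v ((Equiv.Perm.decomposeFin.symm (p, e)) i.castSucc)
              - v ((Equiv.Perm.decomposeFin.symm (p, e)) i.succ))⁻¹)
        = (c - v p)⁻¹ * ∏ j ∈ univ.erase p, (v p - v j)⁻¹ := by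
      intro p
      set w : Fin (m + 1) → ℂ := fun x => v (Equiv.swap 0 p x.succ) with hw
      have hwinj : Function.Injective w :=
        hv.comp ((Equiv.swap 0 p).injective.comp (Fin.succ_injective _))
      have hwc : ∀ j, v p ≠ w j := by
        intro j h
        have h2 : p = Equiv.swap 0 p j.succ := hv h
        have := congrArg (Equiv.swap (0 : Fin (m+2)) p) h2
        rw [Equiv.swap_apply_self, Equiv.swap_apply_right] at this
        exact Fin.succ_ne_zero j this.symm
      have hterm : ∀ e : Equiv.Perm (Fin (m + 1)),
          (c - v ((Equiv.Perm.decomposeFin.symm (p, e)) 0))⁻¹ *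
            ∏ i : Fin (m + 1), (v ((Equiv.Perm.decomposeFin.symm (p, e)) i.castSucc)
              - v ((Equiv.Perm.decomposeFin.symm (p, e)) i.succ))⁻¹
          = (c - v p)⁻¹ *
            ((v p - w (e 0))⁻¹ * ∏ i : Fin m, (w (e i.castSucc) - w (e i.succ))⁻¹) := by
        intro e
        rw [Fin.prod_univ_succ]
        congr 1
        · rw [Equiv.Perm.decomposeFin_symm_apply_zero]
        congr 1
        · rw [Fin.castSucc_zero, Equiv.Perm.decomposeFin_symm_apply_zero,
            Fin.succ_zero_eq_one]
          have : (1 : Fin (m + 2)) = (0 : Fin (m + 1)).succ := rfl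
          rw [this, Equiv.Perm.decomposeFin_symm_apply_succ]
        · refine Finset.prod_congr rfl fun i _ => ?_
          rw [← Fin.succ_castSucc, Equiv.Perm.decomposeFin_symm_apply_succ,
            Equiv.Perm.decomposeFin_symm_apply_succ]
      rw [Finset.sum_congr rfl fun e _ => hterm e, ← Finset.mul_sum,
        ih (v p) w hwinj hwc]
      congr 1
      exact aux_reindex m v p (v p)
    rw [Finset.sum_congr rfl fun p _ => key p]
    exact aux_lagrange_eval (m + 1) c v hv hc

/-- For `n ≥ 2` and pairwise distinct complex numbers `u_1, …, u_n`, the sum over all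
permutations `σ` of the products `∏_{i=1}^{n-1} 1/(u_{σ(i)} - u_{σ(i+1)})` vanishes.
Here `n` is encoded as `n + 2`. -/
theorem sum_perm_prod_inv_sub_eq_zero (n : ℕ) (u : Fin (n + 2) → ℂ)
    (hu : Function.Injective u) :
    ∑ σ : Equiv.Perm (Fin (n + 2)),
      ∏ i : Fin (n + 1), (u (σ i.castSucc) - u (σ i.succ))⁻¹ = 0 := by
  rw [← Equiv.sum_comp (Equiv.Perm.decomposeFin.symm)
    (fun σ : Equiv.Perm (Fin (n + 2)) =>
      ∏ i : Fin (n + 1), (u (σ i.castSucc) - u (σ i.succ))⁻¹),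
    Fintype.sum_prod_type]
  have key : ∀ p : Fin (n + 2),
      (∑ e : Equiv.Perm (Fin (n + 1)),
        ∏ i : Fin (n + 1), (u ((Equiv.Perm.decomposeFin.symm (p, e)) i.castSucc)
          - u ((Equiv.Perm.decomposeFin.symm (p, e)) i.succ))⁻¹)
      = ∏ j ∈ univ.erase p, (u p - u j)⁻¹ := by
    intro p
    set w : Fin (n + 1) → ℂ := fun x => u (Equiv.swap 0 p x.succ) with hw
    have hwinj : Function.Injective w :=
      hu.comp ((Equiv.swap 0 p).injective.comp (Fin.succ_injective _))
    have hwc : ∀ j, u p ≠ w j := by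
      intro j h
      have h2 : p = Equiv.swap 0 p j.succ := hu h
      have := congrArg (Equiv.swap (0 : Fin (n+2)) p) h2
      rw [Equiv.swap_apply_self, Equiv.swap_apply_right] at this
      exact Fin.succ_ne_zero j this.symm
    have hterm : ∀ e : Equiv.Perm (Fin (n + 1)),
        ∏ i : Fin (n + 1), (u ((Equiv.Perm.decomposeFin.symm (p, e)) i.castSucc)
          - u ((Equiv.Perm.decomposeFin.symm (p, e)) i.succ))⁻¹
        = (u p - w (e 0))⁻¹ * ∏ i : Fin n, (w (e i.castSucc) - w (e i.succ))⁻¹ := by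
      intro e
      rw [Fin.prod_univ_succ]
      congr 1
      · rw [Fin.castSucc_zero, Equiv.Perm.decomposeFin_symm_apply_zero,
          Fin.succ_zero_eq_one]
        have : (1 : Fin (n + 2)) = (0 : Fin (n + 1)).succ := rfl
        rw [this, Equiv.Perm.decomposeFin_symm_apply_succ]
      · refine Finset.prod_congr rfl fun i _ => ?_
        rw [← Fin.succ_castSucc, Equiv.Perm.decomposeFin_symm_apply_succ,
          Equiv.Perm.decomposeFin_symm_apply_succ]
    rw [Finset.sum_congr rfl fun e _ => hterm e, aux_chain n (u p) w hwinj hwc]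
    exact aux_reindex n u p (u p)
  rw [Finset.sum_congr rfl fun p _ => key p]
  exact aux_lagrange_coeff n u hu
end

section
/- Let n ≥ 2 and let t_1, …, t_n be pairwise distinct complex numbers. Then ∑_{σ ∈ S_n} ∏_{i=1}^{n−1} ( t_{σ(i)} t_{σ(i+1)} / (t_{σ(i+1)} − t_{σ(i)}) ) = 0. -/
open Finset Polynomial

-- product over swap∘succ equals product over erase
lemma prod_swap_succ {m : ℕ} (f : Fin (m+1) → ℂ) (p : Fin (m+1)) :
    ∏ j : Fin m, f (Equiv.swap 0 p j.succ) = ∏ k ∈ Finset.univ.erase p, f k := by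
  refine Finset.prod_bij' (fun j _ => Equiv.swap 0 p j.succ)
    (fun k hk => (Equiv.swap 0 p k).pred ?_) ?_ ?_ ?_ ?_ ?_
  · intro h
    have : k = p := by
      have := congrArg (Equiv.swap 0 p) h
      simpa [Equiv.swap_apply_self, Equiv.swap_apply_left] using this
    exact (Finset.mem_erase.mp hk).1 this
  · intro a _
    simp only [Finset.mem_erase, Finset.mem_univ, and_true]
    intro h
    have := congrArg (Equiv.swap 0 p) h
    simp [Equiv.swap_apply_self, Equiv.swap_apply_right] at this
  · intro a ha; exact Finset.mem_univ _
  · intro a _; simp [Equiv.swap_apply_self]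
  · intro k hk; simp [Fin.succ_pred, Equiv.swap_apply_self]
  · intro a _; rfl

lemma lagrange_eval (m : ℕ) (x : Fin (m+1) → ℂ) (hx : Function.Injective x) (a : ℂ) :
    ∑ p : Fin (m+1), ∏ j ∈ Finset.univ.erase p, ((x p - x j)⁻¹ * (a - x j)) = 1 := by
  have key := Lagrange.sum_basis (s := (Finset.univ : Finset (Fin (m+1)))) (v := x)
    (Set.injOn_of_injective hx) Finset.univ_nonempty
  have := congrArg (Polynomial.eval a) key
  simpa [Lagrange.basis, Lagrange.basisDivisor, Polynomial.eval_finset_sum,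
    Polynomial.eval_prod] using this

lemma lagrange_step (m : ℕ) (x : Fin (m+1) → ℂ) (hx : Function.Injective x) (a : ℂ)
    (ha : ∀ j, a ≠ x j) :
    ∑ p : Fin (m+1), (a - x p)⁻¹ * ∏ k ∈ Finset.univ.erase p, (x p - x k)⁻¹
    = ∏ k : Fin (m+1), (a - x k)⁻¹ := by
  have hD : ∀ k, a - x k ≠ 0 := fun k => sub_ne_zero_of_ne (ha k)
  set D := ∏ k : Fin (m+1), (a - x k) with hDdef
  have hDne : D ≠ 0 := Finset.prod_ne_zero_iff.mpr (fun k _ => hD k)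
  have h2 : (∑ p : Fin (m+1), (a - x p)⁻¹ * ∏ k ∈ Finset.univ.erase p, (x p - x k)⁻¹) * D
      = 1 := by
    rw [Finset.sum_mul, ← lagrange_eval m x hx a]
    refine Finset.sum_congr rfl fun p _ => ?_
    rw [Finset.prod_mul_distrib]
    have hsplit : D = (a - x p) * ∏ j ∈ Finset.univ.erase p, (a - x j) :=
      (Finset.mul_prod_erase _ _ (Finset.mem_univ p)).symm
    rw [hsplit,
      show (a - x p)⁻¹ * (∏ k ∈ Finset.univ.erase p, (x p - x k)⁻¹)
          * ((a - x p) * ∏ j ∈ Finset.univ.erase p, (a - x j))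
        = ((a - x p)⁻¹ * (a - x p)) * ((∏ k ∈ Finset.univ.erase p, (x p - x k)⁻¹)
          * ∏ j ∈ Finset.univ.erase p, (a - x j)) from by ring,
      inv_mul_cancel₀ (hD p), one_mul]
  rw [Finset.prod_inv_distrib]
  exact eq_inv_of_mul_eq_one_left h2

lemma leading_sum (m : ℕ) (x : Fin (m+2) → ℂ) (hx : Function.Injective x) :
    ∑ p : Fin (m+2), ∏ k ∈ Finset.univ.erase p, (x p - x k)⁻¹ = 0 := by
  have key := Lagrange.sum_basis (s := (Finset.univ : Finset (Fin (m+2)))) (v := x)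
    (Set.injOn_of_injective hx) Finset.univ_nonempty
  have hc := congrArg (fun q : ℂ[X] => q.coeff (m+1)) key
  simp only [Polynomial.finset_sum_coeff] at hc
  have hone : (1 : ℂ[X]).coeff (m+1) = 0 := by
    simp [Polynomial.coeff_one]
  rw [hone] at hc
  rw [← hc]
  refine Finset.sum_congr rfl fun p _ => ?_
  have hcard : (Finset.univ.erase p).card = m + 1 := by
    rw [Finset.card_erase_of_mem (Finset.mem_univ p), Finset.card_univ, Fintype.card_fin]
    omega
  have hne : ∀ j ∈ Finset.univ.erase p, x p ≠ x j := by
    intro j hj h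
    exact (Finset.mem_erase.mp hj).1 (hx h).symm
  have hrw : Lagrange.basis Finset.univ x p
      = Polynomial.C (∏ k ∈ Finset.univ.erase p, (x p - x k)⁻¹)
        * ∏ k ∈ Finset.univ.erase p, (X - Polynomial.C (x k)) := by
    rw [Lagrange.basis]
    simp_rw [Lagrange.basisDivisor]
    rw [Finset.prod_mul_distrib, map_prod]
  rw [hrw, Polynomial.coeff_C_mul]
  have hM : (∏ k ∈ Finset.univ.erase p, (X - Polynomial.C (x k))).coeff (m+1) = 1 := by
    have hmonic : (∏ k ∈ Finset.univ.erase p, (X - Polynomial.C (x k))).Monic :=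
      Polynomial.monic_prod_of_monic _ _ (fun k _ => Polynomial.monic_X_sub_C _)
    have hdeg : (∏ k ∈ Finset.univ.erase p, (X - Polynomial.C (x k))).natDegree = m + 1 := by
      rw [Polynomial.natDegree_prod _ _ (fun k _ => Polynomial.X_sub_C_ne_zero _)]
      simp [Polynomial.natDegree_X_sub_C, hcard]
    have := hmonic.coeff_natDegree
    rwa [hdeg] at this
  rw [hM, mul_one]

lemma cons_decompose {m : ℕ} (x : Fin (m+1) → ℂ) (p : Fin (m+1)) (τ : Equiv.Perm (Fin m)) :
    x ∘ (Equiv.Perm.decomposeFin.symm (p, τ))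
      = Fin.cons (x p) ((fun j => x (Equiv.swap 0 p j.succ)) ∘ τ) := by
  funext k
  refine Fin.cases ?_ ?_ k
  · simp [Equiv.Perm.decomposeFin_symm_apply_zero]
  · intro j
    simp [Equiv.Perm.decomposeFin_symm_apply_succ]

lemma prod_cons_shift {m : ℕ} (y : Fin (m+1) → ℂ) (a : ℂ) :
    ∏ i : Fin (m+1), ((Fin.cons a y : Fin (m+2) → ℂ) i.castSucc - (Fin.cons a y : Fin (m+2) → ℂ) i.succ)⁻¹
    = (a - y 0)⁻¹ * ∏ i : Fin m, (y i.castSucc - y i.succ)⁻¹ := by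
  rw [Fin.prod_univ_succ]
  have h0 : ((Fin.cons a y : Fin (m+2) → ℂ) (0 : Fin (m+1)).castSucc
      - (Fin.cons a y : Fin (m+2) → ℂ) (0 : Fin (m+1)).succ)⁻¹ = (a - y 0)⁻¹ := by
    rw [Fin.castSucc_zero, Fin.cons_zero, Fin.cons_succ]
  rw [h0]
  congr 1

lemma w_injective {m : ℕ} (x : Fin (m+1) → ℂ) (hx : Function.Injective x) (p : Fin (m+1)) :
    Function.Injective (fun j : Fin m => x (Equiv.swap 0 p j.succ)) :=
  hx.comp ((Equiv.swap 0 p).injective.comp (Fin.succ_injective m))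

lemma w_ne {m : ℕ} (x : Fin (m+1) → ℂ) (hx : Function.Injective x) (p : Fin (m+1)) :
    ∀ j : Fin m, x p ≠ x (Equiv.swap 0 p j.succ) := by
  intro j h
  have h2 : p = Equiv.swap 0 p j.succ := hx h
  have := congrArg (Equiv.swap 0 p) h2
  simp [Equiv.swap_apply_self, Equiv.swap_apply_right] at this
  exact (Fin.succ_ne_zero j) this.symm

lemma chain_sum : ∀ (m : ℕ) (x : Fin m → ℂ), Function.Injective x → ∀ a : ℂ,
    (∀ j, a ≠ x j) →
    ∑ σ : Equiv.Perm (Fin m), ∏ i : Fin m,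
      ((Fin.cons a (x ∘ σ) : Fin (m+1) → ℂ) i.castSucc - (Fin.cons a (x ∘ σ) : _ → ℂ) i.succ)⁻¹
    = ∏ j, (a - x j)⁻¹ := by
  intro m
  induction m with
  | zero =>
    intro x hx a ha
    simp
  | succ m ih =>
    intro x hx a ha
    rw [← Equiv.sum_comp (Equiv.Perm.decomposeFin.symm)
      (fun σ : Equiv.Perm (Fin (m+1)) => ∏ i : Fin (m+1),
        ((Fin.cons a (x ∘ σ) : Fin (m+2) → ℂ) i.castSucc - (Fin.cons a (x ∘ σ) : _ → ℂ) i.succ)⁻¹),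
      Fintype.sum_prod_type]
    have hterm : ∀ (p : Fin (m+1)) (τ : Equiv.Perm (Fin m)),
        ∏ i : Fin (m+1),
          ((Fin.cons a (x ∘ Equiv.Perm.decomposeFin.symm (p, τ)) : Fin (m+2) → ℂ) i.castSucc
            - (Fin.cons a (x ∘ Equiv.Perm.decomposeFin.symm (p, τ)) : Fin (m+2) → ℂ) i.succ)⁻¹
        = (a - x p)⁻¹ * ∏ i : Fin m,
            ((Fin.cons (x p) ((fun j => x (Equiv.swap 0 p j.succ)) ∘ τ) : Fin (m+1) → ℂ) i.castSucc
              - (Fin.cons (x p) ((fun j => x (Equiv.swap 0 p j.succ)) ∘ τ) : Fin (m+1) → ℂ) i.succ)⁻¹ := by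
      intro p τ
      rw [cons_decompose x p τ, prod_cons_shift, Fin.cons_zero]
    have hinner : ∀ p : Fin (m+1),
        ∑ τ : Equiv.Perm (Fin m), ∏ i : Fin (m+1),
          ((Fin.cons a (x ∘ Equiv.Perm.decomposeFin.symm (p, τ)) : Fin (m+2) → ℂ) i.castSucc
            - (Fin.cons a (x ∘ Equiv.Perm.decomposeFin.symm (p, τ)) : Fin (m+2) → ℂ) i.succ)⁻¹
        = (a - x p)⁻¹ * ∏ k ∈ Finset.univ.erase p, (x p - x k)⁻¹ := by
      intro p
      rw [Finset.sum_congr rfl (fun τ _ => hterm p τ), ← Finset.mul_sum,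
        ih (fun j => x (Equiv.swap 0 p j.succ)) (w_injective x hx p) (x p) (w_ne x hx p),
        prod_swap_succ (fun k => (x p - x k)⁻¹) p]
    rw [Finset.sum_congr rfl (fun p _ => hinner p)]
    exact lagrange_step m x hx a ha

/-- For `n ≥ 2` and pairwise distinct complex numbers `t_1, …, t_n`,
`∑_{σ ∈ S_n} ∏_{i=1}^{n-1} t_{σ(i)} t_{σ(i+1)} / (t_{σ(i+1)} - t_{σ(i)}) = 0`.
Here `n` is encoded as `n + 2`. -/
theorem sum_perm_prod_kernel_eq_zero (n : ℕ) (t : Fin (n + 2) → ℂ)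
    (ht : Function.Injective t) :
    ∑ σ : Equiv.Perm (Fin (n + 2)),
      ∏ i : Fin (n + 1),
        t (σ i.castSucc) * t (σ i.succ) / (t (σ i.succ) - t (σ i.castSucc)) = 0 := by
  by_cases hz : ∃ j, t j = 0
  · obtain ⟨j, hj⟩ := hz
    refine Finset.sum_eq_zero fun σ _ => ?_
    by_cases hk : σ.symm j = Fin.last (n+1)
    · refine Finset.prod_eq_zero (Finset.mem_univ (Fin.last n)) ?_
      have h1 : (Fin.last n).succ = σ.symm j := by rw [hk, Fin.succ_last]
      rw [h1, Equiv.apply_symm_apply, hj, mul_zero, zero_div]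
    · have h1 : ((σ.symm j).castPred hk).castSucc = σ.symm j := Fin.castSucc_castPred _ hk
      refine Finset.prod_eq_zero (Finset.mem_univ ((σ.symm j).castPred hk)) ?_
      rw [h1, Equiv.apply_symm_apply, hj, zero_mul, zero_div]
  · push_neg at hz
    set s : Fin (n+2) → ℂ := fun k => (t k)⁻¹ with hsdef
    have hs : Function.Injective s := fun a b h => ht (inv_injective h)
    have hfac : ∀ (a b : Fin (n+2)), a ≠ b →
        t a * t b / (t b - t a) = (s a - s b)⁻¹ := by
      intro a b hab
      have hAB : t b - t a ≠ 0 := sub_ne_zero_of_ne (fun h => hab (ht h.symm))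
      have h2 : s a - s b = (t b - t a) / (t a * t b) := by
        rw [hsdef]
        field_simp [hz a, hz b]
      rw [h2, inv_div]
    have hsum : ∀ σ : Equiv.Perm (Fin (n+2)),
        ∏ i : Fin (n+1), t (σ i.castSucc) * t (σ i.succ) / (t (σ i.succ) - t (σ i.castSucc))
        = ∏ i : Fin (n+1), (s (σ i.castSucc) - s (σ i.succ))⁻¹ := fun σ =>
      Finset.prod_congr rfl fun i _ =>
        hfac _ _ (σ.injective.ne_iff.mpr (Fin.castSucc_lt_succ (i := i)).ne)
    rw [Finset.sum_congr rfl (fun σ _ => hsum σ),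
      ← Equiv.sum_comp (Equiv.Perm.decomposeFin.symm)
        (fun σ : Equiv.Perm (Fin (n+2)) =>
          ∏ i : Fin (n+1), (s (σ i.castSucc) - s (σ i.succ))⁻¹),
      Fintype.sum_prod_type]
    have hterm : ∀ (p : Fin (n+2)) (τ : Equiv.Perm (Fin (n+1))),
        ∏ i : Fin (n+1), (s (Equiv.Perm.decomposeFin.symm (p, τ) i.castSucc)
            - s (Equiv.Perm.decomposeFin.symm (p, τ) i.succ))⁻¹
        = ∏ i : Fin (n+1),
            ((Fin.cons (s p) ((fun j => s (Equiv.swap 0 p j.succ)) ∘ τ) : Fin (n+2) → ℂ) i.castSucc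
              - (Fin.cons (s p) ((fun j => s (Equiv.swap 0 p j.succ)) ∘ τ) : Fin (n+2) → ℂ) i.succ)⁻¹ := by
      intro p τ
      have hc := cons_decompose s p τ
      refine Finset.prod_congr rfl fun i _ => ?_
      rw [← congrFun hc i.castSucc, ← congrFun hc i.succ]
      rfl
    have hinner : ∀ p : Fin (n+2),
        ∑ τ : Equiv.Perm (Fin (n+1)),
          ∏ i : Fin (n+1), (s (Equiv.Perm.decomposeFin.symm (p, τ) i.castSucc)
            - s (Equiv.Perm.decomposeFin.symm (p, τ) i.succ))⁻¹
        = ∏ k ∈ Finset.univ.erase p, (s p - s k)⁻¹ := by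
      intro p
      rw [Finset.sum_congr rfl (fun τ _ => hterm p τ),
        chain_sum (n+1) (fun j => s (Equiv.swap 0 p j.succ)) (w_injective s hs p) (s p)
          (w_ne s hs p),
        prod_swap_succ (fun k => (s p - s k)⁻¹) p]
    rw [Finset.sum_congr rfl (fun p _ => hinner p)]
    exact leading_sum n s hs
end

section
/- Let t_1, t_2, t_3 be pairwise distinct complex numbers, set k_{ab} = t_a t_b/(t_b − t_a), and let γ_{ab} (1 ≤ a,b ≤ 3) be complex numbers with γ_{ab} = −γ_{ba}. Then ∑_{σ ∈ S_3} γ_{σ(1)σ(2)} γ_{σ(2)σ(3)} k_{σ(1)σ(2)} k_{σ(2)σ(3)} = (1/2) ∑_{σ ∈ S_3} γ_{σ(1)σ(2)} γ_{σ(2)σ(3)} ( k_{σ(1)σ(2)} k_{σ(2)σ(3)} + k_{σ(1)σ(2)} k_{σ(1)σ(3)} + k_{σ(1)σ(3)} k_{σ(2)σ(3)} ). -/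
theorem sum_perm3 (f : Equiv.Perm (Fin 3) → ℂ) :
    ∑ σ : Equiv.Perm (Fin 3), f σ =
      f 1 + f (Equiv.swap 0 1) + f (Equiv.swap 0 2) + f (Equiv.swap 1 2)
        + f (Equiv.swap 0 1 * Equiv.swap 1 2) + f (Equiv.swap 1 2 * Equiv.swap 0 1) := by
  have h : (Finset.univ : Finset (Equiv.Perm (Fin 3))) =
      {1, Equiv.swap 0 1, Equiv.swap 0 2, Equiv.swap 1 2,
       Equiv.swap 0 1 * Equiv.swap 1 2, Equiv.swap 1 2 * Equiv.swap 0 1} := by decide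
  rw [h, Finset.sum_insert (by decide), Finset.sum_insert (by decide),
    Finset.sum_insert (by decide), Finset.sum_insert (by decide),
    Finset.sum_insert (by decide), Finset.sum_singleton]
  ring

/-- Conjecture 1 for `n = 3`: for pairwise distinct `t_1, t_2, t_3`, kernels
`k_{ab} = t_a t_b/(t_b - t_a)` and a skew-symmetric array `γ_{ab}`,
`∑_{σ ∈ S_3} γ_{σ(1)σ(2)} γ_{σ(2)σ(3)} k_{σ(1)σ(2)} k_{σ(2)σ(3)}
  = (1/2) ∑_{σ ∈ S_3} γ_{σ(1)σ(2)} γ_{σ(2)σ(3)}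
      (k_{σ(1)σ(2)} k_{σ(2)σ(3)} + k_{σ(1)σ(2)} k_{σ(1)σ(3)} + k_{σ(1)σ(3)} k_{σ(2)σ(3)})`. -/
theorem conjecture_n3 (t : Fin 3 → ℂ) (ht : Function.Injective t)
    (γ : Fin 3 → Fin 3 → ℂ) (hγ : ∀ a b, γ a b = -γ b a)
    (k : Fin 3 → Fin 3 → ℂ) (hk : ∀ a b, k a b = t a * t b / (t b - t a)) :
    ∑ σ : Equiv.Perm (Fin 3),
        γ (σ 0) (σ 1) * γ (σ 1) (σ 2) * (k (σ 0) (σ 1) * k (σ 1) (σ 2))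
      = (1 / 2) * ∑ σ : Equiv.Perm (Fin 3),
          γ (σ 0) (σ 1) * γ (σ 1) (σ 2) *
            (k (σ 0) (σ 1) * k (σ 1) (σ 2) + k (σ 0) (σ 1) * k (σ 0) (σ 2)
              + k (σ 0) (σ 2) * k (σ 1) (σ 2)) := by
  have h01 : t 1 - t 0 ≠ 0 := sub_ne_zero.mpr fun h => by simpa using ht h
  have h02 : t 2 - t 0 ≠ 0 := sub_ne_zero.mpr fun h => by simpa using ht h
  have h12 : t 2 - t 1 ≠ 0 := sub_ne_zero.mpr fun h => by simpa using ht h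
  -- antisymmetry of k
  have hrev : ∀ a b : Fin 3, k b a = -k a b := by
    intro a b
    rw [hk, hk, mul_comm, ← neg_sub (t b) (t a), div_neg]
  -- the key quadratic relation among the kernels
  have key : k 0 1 * k 0 2 + k 0 2 * k 1 2 - k 0 1 * k 1 2 = 0 := by
    rw [hk, hk, hk]
    field_simp
    ring
  rw [sum_perm3, sum_perm3]
  have e01 : (Equiv.swap (0 : Fin 3) 1) 0 = 1 := by decide
  have e02 : (Equiv.swap (0 : Fin 3) 1) 1 = 0 := by decide
  have e03 : (Equiv.swap (0 : Fin 3) 1) 2 = 2 := by decide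
  have f01 : (Equiv.swap (0 : Fin 3) 2) 0 = 2 := by decide
  have f02 : (Equiv.swap (0 : Fin 3) 2) 1 = 1 := by decide
  have f03 : (Equiv.swap (0 : Fin 3) 2) 2 = 0 := by decide
  have g01 : (Equiv.swap (1 : Fin 3) 2) 0 = 0 := by decide
  have g02 : (Equiv.swap (1 : Fin 3) 2) 1 = 2 := by decide
  have g03 : (Equiv.swap (1 : Fin 3) 2) 2 = 1 := by decide
  simp only [Equiv.Perm.one_apply, Equiv.Perm.mul_apply, e01, e02, e03, f01, f02, f03,
    g01, g02, g03, hγ 1 0, hγ 2 0, hγ 2 1, hrev 0 1, hrev 0 2, hrev 1 2]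
  linear_combination (γ 0 1 * γ 0 2 + γ 0 2 * γ 1 2 - γ 0 1 * γ 1 2) * key
end

section
/- Let t_1, t_2, t_3, t_4 be pairwise distinct complex numbers, set k_{ab} = t_a t_b/(t_b − t_a), and let γ_{ab} (1 ≤ a,b ≤ 4) be complex numbers with γ_{ab} = −γ_{ba}. Then ∑_{σ ∈ S_4} γ_{σ(1)σ(2)} γ_{σ(2)σ(3)} γ_{σ(3)σ(4)} k_{σ(1)σ(2)} k_{σ(2)σ(3)} k_{σ(3)σ(4)} = (1/4) ∑_{σ ∈ S_4} P(σ) · k_{σ(1)σ(2)} k_{σ(2)σ(3)} k_{σ(3)σ(4)}, where P(σ) is obtained by permuting the indices in the sum of twelve monomials γ12γ23γ34 + γ12γ13γ34 + γ12γ24γ34 + γ12γ14γ34 + γ13γ23γ24 + γ14γ23γ24 + γ12γ23γ14 + γ13γ24γ34 + γ12γ13γ24 + γ14γ23γ34 + γ13γ23γ14 + γ13γ14γ24 (i.e. replacing each index a by σ(a)). -/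
def conj4_plist : List (Equiv.Perm (Fin 4)) := [(⟨![0,1,2,3], ![0,1,2,3], by decide, by decide⟩ : Equiv.Perm (Fin 4)),
  (⟨![0,1,3,2], ![0,1,3,2], by decide, by decide⟩ : Equiv.Perm (Fin 4)),
  (⟨![0,2,1,3], ![0,2,1,3], by decide, by decide⟩ : Equiv.Perm (Fin 4)),
  (⟨![0,2,3,1], ![0,3,1,2], by decide, by decide⟩ : Equiv.Perm (Fin 4)),
  (⟨![0,3,1,2], ![0,2,3,1], by decide, by decide⟩ : Equiv.Perm (Fin 4)),
  (⟨![0,3,2,1], ![0,3,2,1], by decide, by decide⟩ : Equiv.Perm (Fin 4)),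
  (⟨![1,0,2,3], ![1,0,2,3], by decide, by decide⟩ : Equiv.Perm (Fin 4)),
  (⟨![1,0,3,2], ![1,0,3,2], by decide, by decide⟩ : Equiv.Perm (Fin 4)),
  (⟨![1,2,0,3], ![2,0,1,3], by decide, by decide⟩ : Equiv.Perm (Fin 4)),
  (⟨![1,2,3,0], ![3,0,1,2], by decide, by decide⟩ : Equiv.Perm (Fin 4)),
  (⟨![1,3,0,2], ![2,0,3,1], by decide, by decide⟩ : Equiv.Perm (Fin 4)),
  (⟨![1,3,2,0], ![3,0,2,1], by decide, by decide⟩ : Equiv.Perm (Fin 4)),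
  (⟨![2,0,1,3], ![1,2,0,3], by decide, by decide⟩ : Equiv.Perm (Fin 4)),
  (⟨![2,0,3,1], ![1,3,0,2], by decide, by decide⟩ : Equiv.Perm (Fin 4)),
  (⟨![2,1,0,3], ![2,1,0,3], by decide, by decide⟩ : Equiv.Perm (Fin 4)),
  (⟨![2,1,3,0], ![3,1,0,2], by decide, by decide⟩ : Equiv.Perm (Fin 4)),
  (⟨![2,3,0,1], ![2,3,0,1], by decide, by decide⟩ : Equiv.Perm (Fin 4)),
  (⟨![2,3,1,0], ![3,2,0,1], by decide, by decide⟩ : Equiv.Perm (Fin 4)),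
  (⟨![3,0,1,2], ![1,2,3,0], by decide, by decide⟩ : Equiv.Perm (Fin 4)),
  (⟨![3,0,2,1], ![1,3,2,0], by decide, by decide⟩ : Equiv.Perm (Fin 4)),
  (⟨![3,1,0,2], ![2,1,3,0], by decide, by decide⟩ : Equiv.Perm (Fin 4)),
  (⟨![3,1,2,0], ![3,1,2,0], by decide, by decide⟩ : Equiv.Perm (Fin 4)),
  (⟨![3,2,0,1], ![2,3,1,0], by decide, by decide⟩ : Equiv.Perm (Fin 4)),
  (⟨![3,2,1,0], ![3,2,1,0], by decide, by decide⟩ : Equiv.Perm (Fin 4))]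

set_option maxHeartbeats 4000000 in

/-- Conjecture 1 for `n = 4`, path tree on the left-hand side: for pairwise distinct
`t_1, …, t_4`, kernels `k_{ab} = t_a t_b/(t_b - t_a)` and a skew-symmetric array `γ_{ab}`,
`∑_{σ ∈ S_4} γ_{σ(1)σ(2)} γ_{σ(2)σ(3)} γ_{σ(3)σ(4)} k_{σ(1)σ(2)} k_{σ(2)σ(3)} k_{σ(3)σ(4)}
  = (1/4) ∑_{σ ∈ S_4} P(σ) k_{σ(1)σ(2)} k_{σ(2)σ(3)} k_{σ(3)σ(4)}`,
where `P(σ)` is the sum of the twelve path-tree monomials with indices permuted by `σ`. -/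
theorem conjecture_n4_path (t : Fin 4 → ℂ) (ht : Function.Injective t)
    (γ : Fin 4 → Fin 4 → ℂ) (hγ : ∀ a b, γ a b = -γ b a)
    (k : Fin 4 → Fin 4 → ℂ) (hk : ∀ a b, k a b = t a * t b / (t b - t a)) :
    ∑ σ : Equiv.Perm (Fin 4),
        γ (σ 0) (σ 1) * γ (σ 1) (σ 2) * γ (σ 2) (σ 3) *
          (k (σ 0) (σ 1) * k (σ 1) (σ 2) * k (σ 2) (σ 3))
      = (1 / 4) * ∑ σ : Equiv.Perm (Fin 4),
          (γ (σ 0) (σ 1) * γ (σ 1) (σ 2) * γ (σ 2) (σ 3)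
            + γ (σ 0) (σ 1) * γ (σ 0) (σ 2) * γ (σ 2) (σ 3)
            + γ (σ 0) (σ 1) * γ (σ 1) (σ 3) * γ (σ 2) (σ 3)
            + γ (σ 0) (σ 1) * γ (σ 0) (σ 3) * γ (σ 2) (σ 3)
            + γ (σ 0) (σ 2) * γ (σ 1) (σ 2) * γ (σ 1) (σ 3)
            + γ (σ 0) (σ 3) * γ (σ 1) (σ 2) * γ (σ 1) (σ 3)
            + γ (σ 0) (σ 1) * γ (σ 1) (σ 2) * γ (σ 0) (σ 3)
            + γ (σ 0) (σ 2) * γ (σ 1) (σ 3) * γ (σ 2) (σ 3)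
            + γ (σ 0) (σ 1) * γ (σ 0) (σ 2) * γ (σ 1) (σ 3)
            + γ (σ 0) (σ 3) * γ (σ 1) (σ 2) * γ (σ 2) (σ 3)
            + γ (σ 0) (σ 2) * γ (σ 1) (σ 2) * γ (σ 0) (σ 3)
            + γ (σ 0) (σ 2) * γ (σ 0) (σ 3) * γ (σ 1) (σ 3)) *
            (k (σ 0) (σ 1) * k (σ 1) (σ 2) * k (σ 2) (σ 3)) := by
  have hu : (Finset.univ : Finset (Equiv.Perm (Fin 4))) = conj4_plist.toFinset := by decide
  have hnd : conj4_plist.Nodup := by decide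
  have d01 : t 0 - t 1 ≠ 0 := sub_ne_zero_of_ne (fun h => absurd (ht h) (by decide))
  have d02 : t 0 - t 2 ≠ 0 := sub_ne_zero_of_ne (fun h => absurd (ht h) (by decide))
  have d03 : t 0 - t 3 ≠ 0 := sub_ne_zero_of_ne (fun h => absurd (ht h) (by decide))
  have d10 : t 1 - t 0 ≠ 0 := sub_ne_zero_of_ne (fun h => absurd (ht h) (by decide))
  have d12 : t 1 - t 2 ≠ 0 := sub_ne_zero_of_ne (fun h => absurd (ht h) (by decide))
  have d13 : t 1 - t 3 ≠ 0 := sub_ne_zero_of_ne (fun h => absurd (ht h) (by decide))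
  have d20 : t 2 - t 0 ≠ 0 := sub_ne_zero_of_ne (fun h => absurd (ht h) (by decide))
  have d21 : t 2 - t 1 ≠ 0 := sub_ne_zero_of_ne (fun h => absurd (ht h) (by decide))
  have d23 : t 2 - t 3 ≠ 0 := sub_ne_zero_of_ne (fun h => absurd (ht h) (by decide))
  have d30 : t 3 - t 0 ≠ 0 := sub_ne_zero_of_ne (fun h => absurd (ht h) (by decide))
  have d31 : t 3 - t 1 ≠ 0 := sub_ne_zero_of_ne (fun h => absurd (ht h) (by decide))
  have d32 : t 3 - t 2 ≠ 0 := sub_ne_zero_of_ne (fun h => absurd (ht h) (by decide))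
  have hD : ((t 1 - t 0) * (t 2 - t 0) * (t 3 - t 0) * (t 2 - t 1) * (t 3 - t 1) * (t 3 - t 2)) ≠ 0 :=
    mul_ne_zero (mul_ne_zero (mul_ne_zero (mul_ne_zero (mul_ne_zero d10 d20) d30) d21) d31) d32
  have g10 : γ 1 0 = -γ 0 1 := hγ 1 0
  have g20 : γ 2 0 = -γ 0 2 := hγ 2 0
  have g30 : γ 3 0 = -γ 0 3 := hγ 3 0
  have g21 : γ 2 1 = -γ 1 2 := hγ 2 1
  have g31 : γ 3 1 = -γ 1 3 := hγ 3 1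
  have g32 : γ 3 2 = -γ 2 3 := hγ 3 2
  have e0 : k 0 1 * k 1 2 * k 2 3 = ((t 0 * t 1 * t 1 * t 2 * t 2 * t 3) * (t 2 - t 0) * (t 3 - t 0) * (t 3 - t 1)) / ((t 1 - t 0) * (t 2 - t 0) * (t 3 - t 0) * (t 2 - t 1) * (t 3 - t 1) * (t 3 - t 2)) := by
    rw [hk, hk, hk, div_mul_div_comm, div_mul_div_comm, div_eq_div_iff (mul_ne_zero (mul_ne_zero d10 d21) d32) hD]; ring
  have e1 : k 0 1 * k 1 3 * k 3 2 = -((t 0 * t 1 * t 1 * t 3 * t 3 * t 2) * (t 2 - t 0) * (t 3 - t 0) * (t 2 - t 1)) / ((t 1 - t 0) * (t 2 - t 0) * (t 3 - t 0) * (t 2 - t 1) * (t 3 - t 1) * (t 3 - t 2)) := by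
    rw [hk, hk, hk, div_mul_div_comm, div_mul_div_comm, div_eq_div_iff (mul_ne_zero (mul_ne_zero d10 d31) d23) hD]; ring
  have e2 : k 0 2 * k 2 1 * k 1 3 = -((t 0 * t 2 * t 2 * t 1 * t 1 * t 3) * (t 1 - t 0) * (t 3 - t 0) * (t 3 - t 2)) / ((t 1 - t 0) * (t 2 - t 0) * (t 3 - t 0) * (t 2 - t 1) * (t 3 - t 1) * (t 3 - t 2)) := by
    rw [hk, hk, hk, div_mul_div_comm, div_mul_div_comm, div_eq_div_iff (mul_ne_zero (mul_ne_zero d20 d12) d31) hD]; ring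
  have e3 : k 0 2 * k 2 3 * k 3 1 = -((t 0 * t 2 * t 2 * t 3 * t 3 * t 1) * (t 1 - t 0) * (t 3 - t 0) * (t 2 - t 1)) / ((t 1 - t 0) * (t 2 - t 0) * (t 3 - t 0) * (t 2 - t 1) * (t 3 - t 1) * (t 3 - t 2)) := by
    rw [hk, hk, hk, div_mul_div_comm, div_mul_div_comm, div_eq_div_iff (mul_ne_zero (mul_ne_zero d20 d32) d13) hD]; ring
  have e4 : k 0 3 * k 3 1 * k 1 2 = -((t 0 * t 3 * t 3 * t 1 * t 1 * t 2) * (t 1 - t 0) * (t 2 - t 0) * (t 3 - t 2)) / ((t 1 - t 0) * (t 2 - t 0) * (t 3 - t 0) * (t 2 - t 1) * (t 3 - t 1) * (t 3 - t 2)) := by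
    rw [hk, hk, hk, div_mul_div_comm, div_mul_div_comm, div_eq_div_iff (mul_ne_zero (mul_ne_zero d30 d13) d21) hD]; ring
  have e5 : k 0 3 * k 3 2 * k 2 1 = ((t 0 * t 3 * t 3 * t 2 * t 2 * t 1) * (t 1 - t 0) * (t 2 - t 0) * (t 3 - t 1)) / ((t 1 - t 0) * (t 2 - t 0) * (t 3 - t 0) * (t 2 - t 1) * (t 3 - t 1) * (t 3 - t 2)) := by
    rw [hk, hk, hk, div_mul_div_comm, div_mul_div_comm, div_eq_div_iff (mul_ne_zero (mul_ne_zero d30 d23) d12) hD]; ring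
  have e6 : k 1 0 * k 0 2 * k 2 3 = -((t 1 * t 0 * t 0 * t 2 * t 2 * t 3) * (t 3 - t 0) * (t 2 - t 1) * (t 3 - t 1)) / ((t 1 - t 0) * (t 2 - t 0) * (t 3 - t 0) * (t 2 - t 1) * (t 3 - t 1) * (t 3 - t 2)) := by
    rw [hk, hk, hk, div_mul_div_comm, div_mul_div_comm, div_eq_div_iff (mul_ne_zero (mul_ne_zero d01 d20) d32) hD]; ring
  have e7 : k 1 0 * k 0 3 * k 3 2 = ((t 1 * t 0 * t 0 * t 3 * t 3 * t 2) * (t 2 - t 0) * (t 2 - t 1) * (t 3 - t 1)) / ((t 1 - t 0) * (t 2 - t 0) * (t 3 - t 0) * (t 2 - t 1) * (t 3 - t 1) * (t 3 - t 2)) := by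
    rw [hk, hk, hk, div_mul_div_comm, div_mul_div_comm, div_eq_div_iff (mul_ne_zero (mul_ne_zero d01 d30) d23) hD]; ring
  have e8 : k 1 2 * k 2 0 * k 0 3 = -((t 1 * t 2 * t 2 * t 0 * t 0 * t 3) * (t 1 - t 0) * (t 3 - t 1) * (t 3 - t 2)) / ((t 1 - t 0) * (t 2 - t 0) * (t 3 - t 0) * (t 2 - t 1) * (t 3 - t 1) * (t 3 - t 2)) := by
    rw [hk, hk, hk, div_mul_div_comm, div_mul_div_comm, div_eq_div_iff (mul_ne_zero (mul_ne_zero d21 d02) d30) hD]; ring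
  have e9 : k 1 2 * k 2 3 * k 3 0 = -((t 1 * t 2 * t 2 * t 3 * t 3 * t 0) * (t 1 - t 0) * (t 2 - t 0) * (t 3 - t 1)) / ((t 1 - t 0) * (t 2 - t 0) * (t 3 - t 0) * (t 2 - t 1) * (t 3 - t 1) * (t 3 - t 2)) := by
    rw [hk, hk, hk, div_mul_div_comm, div_mul_div_comm, div_eq_div_iff (mul_ne_zero (mul_ne_zero d21 d32) d03) hD]; ring
  have e10 : k 1 3 * k 3 0 * k 0 2 = -((t 1 * t 3 * t 3 * t 0 * t 0 * t 2) * (t 1 - t 0) * (t 2 - t 1) * (t 3 - t 2)) / ((t 1 - t 0) * (t 2 - t 0) * (t 3 - t 0) * (t 2 - t 1) * (t 3 - t 1) * (t 3 - t 2)) := by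
    rw [hk, hk, hk, div_mul_div_comm, div_mul_div_comm, div_eq_div_iff (mul_ne_zero (mul_ne_zero d31 d03) d20) hD]; ring
  have e11 : k 1 3 * k 3 2 * k 2 0 = ((t 1 * t 3 * t 3 * t 2 * t 2 * t 0) * (t 1 - t 0) * (t 3 - t 0) * (t 2 - t 1)) / ((t 1 - t 0) * (t 2 - t 0) * (t 3 - t 0) * (t 2 - t 1) * (t 3 - t 1) * (t 3 - t 2)) := by
    rw [hk, hk, hk, div_mul_div_comm, div_mul_div_comm, div_eq_div_iff (mul_ne_zero (mul_ne_zero d31 d23) d02) hD]; ring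
  have e12 : k 2 0 * k 0 1 * k 1 3 = -((t 2 * t 0 * t 0 * t 1 * t 1 * t 3) * (t 3 - t 0) * (t 2 - t 1) * (t 3 - t 2)) / ((t 1 - t 0) * (t 2 - t 0) * (t 3 - t 0) * (t 2 - t 1) * (t 3 - t 1) * (t 3 - t 2)) := by
    rw [hk, hk, hk, div_mul_div_comm, div_mul_div_comm, div_eq_div_iff (mul_ne_zero (mul_ne_zero d02 d10) d31) hD]; ring
  have e13 : k 2 0 * k 0 3 * k 3 1 = ((t 2 * t 0 * t 0 * t 3 * t 3 * t 1) * (t 1 - t 0) * (t 2 - t 1) * (t 3 - t 2)) / ((t 1 - t 0) * (t 2 - t 0) * (t 3 - t 0) * (t 2 - t 1) * (t 3 - t 1) * (t 3 - t 2)) := by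
    rw [hk, hk, hk, div_mul_div_comm, div_mul_div_comm, div_eq_div_iff (mul_ne_zero (mul_ne_zero d02 d30) d13) hD]; ring
  have e14 : k 2 1 * k 1 0 * k 0 3 = ((t 2 * t 1 * t 1 * t 0 * t 0 * t 3) * (t 2 - t 0) * (t 3 - t 1) * (t 3 - t 2)) / ((t 1 - t 0) * (t 2 - t 0) * (t 3 - t 0) * (t 2 - t 1) * (t 3 - t 1) * (t 3 - t 2)) := by
    rw [hk, hk, hk, div_mul_div_comm, div_mul_div_comm, div_eq_div_iff (mul_ne_zero (mul_ne_zero d12 d01) d30) hD]; ring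
  have e15 : k 2 1 * k 1 3 * k 3 0 = ((t 2 * t 1 * t 1 * t 3 * t 3 * t 0) * (t 1 - t 0) * (t 2 - t 0) * (t 3 - t 2)) / ((t 1 - t 0) * (t 2 - t 0) * (t 3 - t 0) * (t 2 - t 1) * (t 3 - t 1) * (t 3 - t 2)) := by
    rw [hk, hk, hk, div_mul_div_comm, div_mul_div_comm, div_eq_div_iff (mul_ne_zero (mul_ne_zero d12 d31) d03) hD]; ring
  have e16 : k 2 3 * k 3 0 * k 0 1 = -((t 2 * t 3 * t 3 * t 0 * t 0 * t 1) * (t 2 - t 0) * (t 2 - t 1) * (t 3 - t 1)) / ((t 1 - t 0) * (t 2 - t 0) * (t 3 - t 0) * (t 2 - t 1) * (t 3 - t 1) * (t 3 - t 2)) := by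
    rw [hk, hk, hk, div_mul_div_comm, div_mul_div_comm, div_eq_div_iff (mul_ne_zero (mul_ne_zero d32 d03) d10) hD]; ring
  have e17 : k 2 3 * k 3 1 * k 1 0 = ((t 2 * t 3 * t 3 * t 1 * t 1 * t 0) * (t 2 - t 0) * (t 3 - t 0) * (t 2 - t 1)) / ((t 1 - t 0) * (t 2 - t 0) * (t 3 - t 0) * (t 2 - t 1) * (t 3 - t 1) * (t 3 - t 2)) := by
    rw [hk, hk, hk, div_mul_div_comm, div_mul_div_comm, div_eq_div_iff (mul_ne_zero (mul_ne_zero d32 d13) d01) hD]; ring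
  have e18 : k 3 0 * k 0 1 * k 1 2 = -((t 3 * t 0 * t 0 * t 1 * t 1 * t 2) * (t 2 - t 0) * (t 3 - t 1) * (t 3 - t 2)) / ((t 1 - t 0) * (t 2 - t 0) * (t 3 - t 0) * (t 2 - t 1) * (t 3 - t 1) * (t 3 - t 2)) := by
    rw [hk, hk, hk, div_mul_div_comm, div_mul_div_comm, div_eq_div_iff (mul_ne_zero (mul_ne_zero d03 d10) d21) hD]; ring
  have e19 : k 3 0 * k 0 2 * k 2 1 = ((t 3 * t 0 * t 0 * t 2 * t 2 * t 1) * (t 1 - t 0) * (t 3 - t 1) * (t 3 - t 2)) / ((t 1 - t 0) * (t 2 - t 0) * (t 3 - t 0) * (t 2 - t 1) * (t 3 - t 1) * (t 3 - t 2)) := by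
    rw [hk, hk, hk, div_mul_div_comm, div_mul_div_comm, div_eq_div_iff (mul_ne_zero (mul_ne_zero d03 d20) d12) hD]; ring
  have e20 : k 3 1 * k 1 0 * k 0 2 = ((t 3 * t 1 * t 1 * t 0 * t 0 * t 2) * (t 3 - t 0) * (t 2 - t 1) * (t 3 - t 2)) / ((t 1 - t 0) * (t 2 - t 0) * (t 3 - t 0) * (t 2 - t 1) * (t 3 - t 1) * (t 3 - t 2)) := by
    rw [hk, hk, hk, div_mul_div_comm, div_mul_div_comm, div_eq_div_iff (mul_ne_zero (mul_ne_zero d13 d01) d20) hD]; ring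
  have e21 : k 3 1 * k 1 2 * k 2 0 = ((t 3 * t 1 * t 1 * t 2 * t 2 * t 0) * (t 1 - t 0) * (t 3 - t 0) * (t 3 - t 2)) / ((t 1 - t 0) * (t 2 - t 0) * (t 3 - t 0) * (t 2 - t 1) * (t 3 - t 1) * (t 3 - t 2)) := by
    rw [hk, hk, hk, div_mul_div_comm, div_mul_div_comm, div_eq_div_iff (mul_ne_zero (mul_ne_zero d13 d21) d02) hD]; ring
  have e22 : k 3 2 * k 2 0 * k 0 1 = ((t 3 * t 2 * t 2 * t 0 * t 0 * t 1) * (t 3 - t 0) * (t 2 - t 1) * (t 3 - t 1)) / ((t 1 - t 0) * (t 2 - t 0) * (t 3 - t 0) * (t 2 - t 1) * (t 3 - t 1) * (t 3 - t 2)) := by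
    rw [hk, hk, hk, div_mul_div_comm, div_mul_div_comm, div_eq_div_iff (mul_ne_zero (mul_ne_zero d23 d02) d10) hD]; ring
  have e23 : k 3 2 * k 2 1 * k 1 0 = -((t 3 * t 2 * t 2 * t 1 * t 1 * t 0) * (t 2 - t 0) * (t 3 - t 0) * (t 3 - t 1)) / ((t 1 - t 0) * (t 2 - t 0) * (t 3 - t 0) * (t 2 - t 1) * (t 3 - t 1) * (t 3 - t 2)) := by
    rw [hk, hk, hk, div_mul_div_comm, div_mul_div_comm, div_eq_div_iff (mul_ne_zero (mul_ne_zero d23 d12) d01) hD]; ring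
  rw [hu, List.sum_toFinset _ hnd, List.sum_toFinset _ hnd]
  simp only [conj4_plist, List.map_cons, List.map_nil, List.sum_cons, List.sum_nil,
    Equiv.coe_fn_mk, Matrix.cons_val_zero, Matrix.cons_val_one, Matrix.head_cons,
    Matrix.cons_val_two, Matrix.tail_cons, Matrix.cons_val_three, add_zero,
    e0, e1, e2, e3, e4, e5, e6, e7, e8, e9, e10, e11, e12, e13, e14, e15, e16, e17, e18, e19, e20, e21, e22, e23, g10, g20, g30, g21, g31, g32]
  simp only [mul_div_assoc', ← add_div]
  congr 1
  ring
end

section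
/- Let t_1, t_2, t_3, t_4 be pairwise distinct complex numbers and set k_{ab} = t_a t_b/(t_b − t_a). Then k12k23k34 + k12k13k34 + k12k24k34 + k12k14k34 + k13k23k24 + k13k24k34 + k13k23k14 + k14k23k34 + k12k23k14 + k14k23k24 + k12k13k24 − k13k14k24 = 4 k12k23k34, where kab abbreviates k_{ab}. -/
set_option maxHeartbeats 1000000


/-- For pairwise distinct complex numbers `t_1, t_2, t_3, t_4` and kernels
`k_{ab} = t_a t_b/(t_b - t_a)`, the twelve-term identity
`k12k23k34 + k12k13k34 + k12k24k34 + k12k14k34 + k13k23k24 + k13k24k34 + k13k23k14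
  + k14k23k34 + k12k23k14 + k14k23k24 + k12k13k24 − k13k14k24 = 4 k12k23k34` holds. -/
theorem kernel_identity_n4_first (t1 t2 t3 t4 : ℂ)
    (h12 : t1 ≠ t2) (h13 : t1 ≠ t3) (h14 : t1 ≠ t4)
    (h23 : t2 ≠ t3) (h24 : t2 ≠ t4) (h34 : t3 ≠ t4)
    (k : ℂ → ℂ → ℂ) (hk : ∀ a b, k a b = a * b / (b - a)) :
    k t1 t2 * k t2 t3 * k t3 t4 + k t1 t2 * k t1 t3 * k t3 t4
      + k t1 t2 * k t2 t4 * k t3 t4 + k t1 t2 * k t1 t4 * k t3 t4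
      + k t1 t3 * k t2 t3 * k t2 t4 + k t1 t3 * k t2 t4 * k t3 t4
      + k t1 t3 * k t2 t3 * k t1 t4 + k t1 t4 * k t2 t3 * k t3 t4
      + k t1 t2 * k t2 t3 * k t1 t4 + k t1 t4 * k t2 t3 * k t2 t4
      + k t1 t2 * k t1 t3 * k t2 t4 - k t1 t3 * k t1 t4 * k t2 t4
      = 4 * (k t1 t2 * k t2 t3 * k t3 t4) := by
  have d12 : t2 - t1 ≠ 0 := sub_ne_zero.mpr (Ne.symm h12)
  have d13 : t3 - t1 ≠ 0 := sub_ne_zero.mpr (Ne.symm h13)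
  have d14 : t4 - t1 ≠ 0 := sub_ne_zero.mpr (Ne.symm h14)
  have d23 : t3 - t2 ≠ 0 := sub_ne_zero.mpr (Ne.symm h23)
  have d24 : t4 - t2 ≠ 0 := sub_ne_zero.mpr (Ne.symm h24)
  have d34 : t4 - t3 ≠ 0 := sub_ne_zero.mpr (Ne.symm h34)
  set D := (t2-t1)*(t3-t1)*(t4-t1)*(t3-t2)*(t4-t2)*(t4-t3) with hD
  have hDne : D ≠ 0 := by
    rw [hD]
    exact mul_ne_zero (mul_ne_zero (mul_ne_zero (mul_ne_zero (mul_ne_zero d12 d13) d14) d23) d24) d34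
  have e1 : k t1 t2 * k t2 t3 * k t3 t4 = t1*t2*t2*t3*t3*t4*(t3-t1)*(t4-t1)*(t4-t2) / D := by
    rw [hk, hk, hk, hD, div_mul_div_comm, div_mul_div_comm,
      div_eq_div_iff (mul_ne_zero (mul_ne_zero d12 d23) d34) hDne]
    ring
  have e2 : k t1 t2 * k t1 t3 * k t3 t4 = t1*t2*t1*t3*t3*t4*(t4-t1)*(t3-t2)*(t4-t2) / D := by
    rw [hk, hk, hk, hD, div_mul_div_comm, div_mul_div_comm,
      div_eq_div_iff (mul_ne_zero (mul_ne_zero d12 d13) d34) hDne]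
    ring
  have e3 : k t1 t2 * k t2 t4 * k t3 t4 = t1*t2*t2*t4*t3*t4*(t3-t1)*(t4-t1)*(t3-t2) / D := by
    rw [hk, hk, hk, hD, div_mul_div_comm, div_mul_div_comm,
      div_eq_div_iff (mul_ne_zero (mul_ne_zero d12 d24) d34) hDne]
    ring
  have e4 : k t1 t2 * k t1 t4 * k t3 t4 = t1*t2*t1*t4*t3*t4*(t3-t1)*(t3-t2)*(t4-t2) / D := by
    rw [hk, hk, hk, hD, div_mul_div_comm, div_mul_div_comm,
      div_eq_div_iff (mul_ne_zero (mul_ne_zero d12 d14) d34) hDne]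
    ring
  have e5 : k t1 t3 * k t2 t3 * k t2 t4 = t1*t3*t2*t3*t2*t4*(t2-t1)*(t4-t1)*(t4-t3) / D := by
    rw [hk, hk, hk, hD, div_mul_div_comm, div_mul_div_comm,
      div_eq_div_iff (mul_ne_zero (mul_ne_zero d13 d23) d24) hDne]
    ring
  have e6 : k t1 t3 * k t2 t4 * k t3 t4 = t1*t3*t2*t4*t3*t4*(t2-t1)*(t4-t1)*(t3-t2) / D := by
    rw [hk, hk, hk, hD, div_mul_div_comm, div_mul_div_comm,
      div_eq_div_iff (mul_ne_zero (mul_ne_zero d13 d24) d34) hDne]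
    ring
  have e7 : k t1 t3 * k t2 t3 * k t1 t4 = t1*t3*t2*t3*t1*t4*(t2-t1)*(t4-t2)*(t4-t3) / D := by
    rw [hk, hk, hk, hD, div_mul_div_comm, div_mul_div_comm,
      div_eq_div_iff (mul_ne_zero (mul_ne_zero d13 d23) d14) hDne]
    ring
  have e8 : k t1 t4 * k t2 t3 * k t3 t4 = t1*t4*t2*t3*t3*t4*(t2-t1)*(t3-t1)*(t4-t2) / D := by
    rw [hk, hk, hk, hD, div_mul_div_comm, div_mul_div_comm,
      div_eq_div_iff (mul_ne_zero (mul_ne_zero d14 d23) d34) hDne]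
    ring
  have e9 : k t1 t2 * k t2 t3 * k t1 t4 = t1*t2*t2*t3*t1*t4*(t3-t1)*(t4-t2)*(t4-t3) / D := by
    rw [hk, hk, hk, hD, div_mul_div_comm, div_mul_div_comm,
      div_eq_div_iff (mul_ne_zero (mul_ne_zero d12 d23) d14) hDne]
    ring
  have e10 : k t1 t4 * k t2 t3 * k t2 t4 = t1*t4*t2*t3*t2*t4*(t2-t1)*(t3-t1)*(t4-t3) / D := by
    rw [hk, hk, hk, hD, div_mul_div_comm, div_mul_div_comm,
      div_eq_div_iff (mul_ne_zero (mul_ne_zero d14 d23) d24) hDne]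
    ring
  have e11 : k t1 t2 * k t1 t3 * k t2 t4 = t1*t2*t1*t3*t2*t4*(t4-t1)*(t3-t2)*(t4-t3) / D := by
    rw [hk, hk, hk, hD, div_mul_div_comm, div_mul_div_comm,
      div_eq_div_iff (mul_ne_zero (mul_ne_zero d12 d13) d24) hDne]
    ring
  have e12 : k t1 t3 * k t1 t4 * k t2 t4 = t1*t3*t1*t4*t2*t4*(t2-t1)*(t3-t2)*(t4-t3) / D := by
    rw [hk, hk, hk, hD, div_mul_div_comm, div_mul_div_comm,
      div_eq_div_iff (mul_ne_zero (mul_ne_zero d13 d14) d24) hDne]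
    ring
  rw [e1, e2, e3, e4, e5, e6, e7, e8, e9, e10, e11, e12]
  simp only [← add_div, div_sub_div_same]
  rw [← mul_div_assoc]
  congr 1
  ring
end

section
/- Let t_1, t_2, t_3, t_4 be pairwise distinct complex numbers and set k_{ab} = t_a t_b/(t_b − t_a). Then k12k23k34 + k12k14k23 − k13k14k23 + k12k13k24 − k13k14k24 − k13k23k24 − k14k23k24 + k12k13k34 − k12k14k34 + k14k23k34 − k12k24k34 − k13k24k34 = 4 k12k13k14, where kab abbreviates k_{ab}. -/
/-- For pairwise distinct complex numbers `t_1, t_2, t_3, t_4` and kernels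
`k_{ab} = t_a t_b/(t_b - t_a)`, the twelve-term identity
`k12k23k34 + k12k14k23 − k13k14k23 + k12k13k24 − k13k14k24 − k13k23k24 − k14k23k24
  + k12k13k34 − k12k14k34 + k14k23k34 − k12k24k34 − k13k24k34 = 4 k12k13k14` holds. -/
theorem kernel_identity_n4_second (t1 t2 t3 t4 : ℂ)
    (h12 : t1 ≠ t2) (h13 : t1 ≠ t3) (h14 : t1 ≠ t4)
    (h23 : t2 ≠ t3) (h24 : t2 ≠ t4) (h34 : t3 ≠ t4)
    (k : ℂ → ℂ → ℂ) (hk : ∀ a b, k a b = a * b / (b - a)) :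
    k t1 t2 * k t2 t3 * k t3 t4 + k t1 t2 * k t1 t4 * k t2 t3
      - k t1 t3 * k t1 t4 * k t2 t3 + k t1 t2 * k t1 t3 * k t2 t4
      - k t1 t3 * k t1 t4 * k t2 t4 - k t1 t3 * k t2 t3 * k t2 t4
      - k t1 t4 * k t2 t3 * k t2 t4 + k t1 t2 * k t1 t3 * k t3 t4
      - k t1 t2 * k t1 t4 * k t3 t4 + k t1 t4 * k t2 t3 * k t3 t4
      - k t1 t2 * k t2 t4 * k t3 t4 - k t1 t3 * k t2 t4 * k t3 t4
      = 4 * (k t1 t2 * k t1 t3 * k t1 t4) := by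
  have d12 : t2 - t1 ≠ 0 := sub_ne_zero.mpr (Ne.symm h12)
  have d13 : t3 - t1 ≠ 0 := sub_ne_zero.mpr (Ne.symm h13)
  have d14 : t4 - t1 ≠ 0 := sub_ne_zero.mpr (Ne.symm h14)
  have d23 : t3 - t2 ≠ 0 := sub_ne_zero.mpr (Ne.symm h23)
  have d24 : t4 - t2 ≠ 0 := sub_ne_zero.mpr (Ne.symm h24)
  have d34 : t4 - t3 ≠ 0 := sub_ne_zero.mpr (Ne.symm h34)
  have hD : ((t2-t1)*(t3-t1)*(t4-t1)*(t3-t2)*(t4-t2)*(t4-t3)) ≠ 0 := by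
    exact mul_ne_zero (mul_ne_zero (mul_ne_zero (mul_ne_zero (mul_ne_zero d12 d13) d14) d23) d24) d34
  have T1 : k t1 t2 * k t2 t3 * k t3 t4 = ((t1*t2)*(t2*t3)*(t3*t4)*((t3-t1)*(t4-t1)*(t4-t2)))/((t2-t1)*(t3-t1)*(t4-t1)*(t3-t2)*(t4-t2)*(t4-t3)) := by
    rw [hk, hk, hk, div_mul_div_comm, div_mul_div_comm,
      div_eq_div_iff (by exact mul_ne_zero (mul_ne_zero d12 d23) d34) hD]
    ring
  have T2 : k t1 t2 * k t1 t4 * k t2 t3 = ((t1*t2)*(t1*t4)*(t2*t3)*((t3-t1)*(t4-t2)*(t4-t3)))/((t2-t1)*(t3-t1)*(t4-t1)*(t3-t2)*(t4-t2)*(t4-t3)) := by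
    rw [hk, hk, hk, div_mul_div_comm, div_mul_div_comm,
      div_eq_div_iff (by exact mul_ne_zero (mul_ne_zero d12 d14) d23) hD]
    ring
  have T3 : k t1 t3 * k t1 t4 * k t2 t3 = ((t1*t3)*(t1*t4)*(t2*t3)*((t2-t1)*(t4-t2)*(t4-t3)))/((t2-t1)*(t3-t1)*(t4-t1)*(t3-t2)*(t4-t2)*(t4-t3)) := by
    rw [hk, hk, hk, div_mul_div_comm, div_mul_div_comm,
      div_eq_div_iff (by exact mul_ne_zero (mul_ne_zero d13 d14) d23) hD]
    ring
  have T4 : k t1 t2 * k t1 t3 * k t2 t4 = ((t1*t2)*(t1*t3)*(t2*t4)*((t4-t1)*(t3-t2)*(t4-t3)))/((t2-t1)*(t3-t1)*(t4-t1)*(t3-t2)*(t4-t2)*(t4-t3)) := by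
    rw [hk, hk, hk, div_mul_div_comm, div_mul_div_comm,
      div_eq_div_iff (by exact mul_ne_zero (mul_ne_zero d12 d13) d24) hD]
    ring
  have T5 : k t1 t3 * k t1 t4 * k t2 t4 = ((t1*t3)*(t1*t4)*(t2*t4)*((t2-t1)*(t3-t2)*(t4-t3)))/((t2-t1)*(t3-t1)*(t4-t1)*(t3-t2)*(t4-t2)*(t4-t3)) := by
    rw [hk, hk, hk, div_mul_div_comm, div_mul_div_comm,
      div_eq_div_iff (by exact mul_ne_zero (mul_ne_zero d13 d14) d24) hD]
    ring
  have T6 : k t1 t3 * k t2 t3 * k t2 t4 = ((t1*t3)*(t2*t3)*(t2*t4)*((t2-t1)*(t4-t1)*(t4-t3)))/((t2-t1)*(t3-t1)*(t4-t1)*(t3-t2)*(t4-t2)*(t4-t3)) := by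
    rw [hk, hk, hk, div_mul_div_comm, div_mul_div_comm,
      div_eq_div_iff (by exact mul_ne_zero (mul_ne_zero d13 d23) d24) hD]
    ring
  have T7 : k t1 t4 * k t2 t3 * k t2 t4 = ((t1*t4)*(t2*t3)*(t2*t4)*((t2-t1)*(t3-t1)*(t4-t3)))/((t2-t1)*(t3-t1)*(t4-t1)*(t3-t2)*(t4-t2)*(t4-t3)) := by
    rw [hk, hk, hk, div_mul_div_comm, div_mul_div_comm,
      div_eq_div_iff (by exact mul_ne_zero (mul_ne_zero d14 d23) d24) hD]
    ring
  have T8 : k t1 t2 * k t1 t3 * k t3 t4 = ((t1*t2)*(t1*t3)*(t3*t4)*((t4-t1)*(t3-t2)*(t4-t2)))/((t2-t1)*(t3-t1)*(t4-t1)*(t3-t2)*(t4-t2)*(t4-t3)) := by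
    rw [hk, hk, hk, div_mul_div_comm, div_mul_div_comm,
      div_eq_div_iff (by exact mul_ne_zero (mul_ne_zero d12 d13) d34) hD]
    ring
  have T9 : k t1 t2 * k t1 t4 * k t3 t4 = ((t1*t2)*(t1*t4)*(t3*t4)*((t3-t1)*(t3-t2)*(t4-t2)))/((t2-t1)*(t3-t1)*(t4-t1)*(t3-t2)*(t4-t2)*(t4-t3)) := by
    rw [hk, hk, hk, div_mul_div_comm, div_mul_div_comm,
      div_eq_div_iff (by exact mul_ne_zero (mul_ne_zero d12 d14) d34) hD]
    ring
  have T10 : k t1 t4 * k t2 t3 * k t3 t4 = ((t1*t4)*(t2*t3)*(t3*t4)*((t2-t1)*(t3-t1)*(t4-t2)))/((t2-t1)*(t3-t1)*(t4-t1)*(t3-t2)*(t4-t2)*(t4-t3)) := by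
    rw [hk, hk, hk, div_mul_div_comm, div_mul_div_comm,
      div_eq_div_iff (by exact mul_ne_zero (mul_ne_zero d14 d23) d34) hD]
    ring
  have T11 : k t1 t2 * k t2 t4 * k t3 t4 = ((t1*t2)*(t2*t4)*(t3*t4)*((t3-t1)*(t4-t1)*(t3-t2)))/((t2-t1)*(t3-t1)*(t4-t1)*(t3-t2)*(t4-t2)*(t4-t3)) := by
    rw [hk, hk, hk, div_mul_div_comm, div_mul_div_comm,
      div_eq_div_iff (by exact mul_ne_zero (mul_ne_zero d12 d24) d34) hD]
    ring
  have T12 : k t1 t3 * k t2 t4 * k t3 t4 = ((t1*t3)*(t2*t4)*(t3*t4)*((t2-t1)*(t4-t1)*(t3-t2)))/((t2-t1)*(t3-t1)*(t4-t1)*(t3-t2)*(t4-t2)*(t4-t3)) := by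
    rw [hk, hk, hk, div_mul_div_comm, div_mul_div_comm,
      div_eq_div_iff (by exact mul_ne_zero (mul_ne_zero d13 d24) d34) hD]
    ring
  have T13 : k t1 t2 * k t1 t3 * k t1 t4 = ((t1*t2)*(t1*t3)*(t1*t4)*((t3-t2)*(t4-t2)*(t4-t3)))/((t2-t1)*(t3-t1)*(t4-t1)*(t3-t2)*(t4-t2)*(t4-t3)) := by
    rw [hk, hk, hk, div_mul_div_comm, div_mul_div_comm,
      div_eq_div_iff (by exact mul_ne_zero (mul_ne_zero d12 d13) d14) hD]
    ring
  rw [T1, T2, T3, T4, T5, T6, T7, T8, T9, T10, T11, T12, T13]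
  rw [← add_div, div_sub_div_same, ← add_div, div_sub_div_same,
    div_sub_div_same, div_sub_div_same, ← add_div, div_sub_div_same,
    ← add_div, div_sub_div_same, div_sub_div_same, mul_div_assoc]
  ring
end

section
/- Let n ≥ 2 and let z_1, …, z_n be complex numbers. Define the (n−1)×(n−1) complex matrix M by: for 1 ≤ i ≤ n−2, M_{i,i} = z_{i+1}, M_{i,i+1} = −z_i, and M_{i,j} = 0 for all other j; and for the last row, M_{n−1,j} = z_{n−1} for 1 ≤ j ≤ n−2 and M_{n−1,n−1} = z_{n−1} + z_n. Then det M = (z_1 + z_2 + ⋯ + z_n) · ∏_{i=2}^{n−1} z_i. -/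
/-- Determinant of the Jacobian matrix of the change of variables
`w_i = z_{i+1} u_i - z_i u_{i+1}`: for `n ≥ 2` (encoded as `n = m + 2`) and complex numbers
`z_1, …, z_n`, the `(n-1) × (n-1)` matrix `M` with `M_{i,i} = z_{i+1}`, `M_{i,i+1} = -z_i`
for `1 ≤ i ≤ n-2` (other entries of those rows zero), and last row
`M_{n-1,j} = z_{n-1}` for `j ≤ n-2`, `M_{n-1,n-1} = z_{n-1} + z_n`, has determinant
`(z_1 + ⋯ + z_n) ∏_{i=2}^{n-1} z_i`. Indices here are 0-based: `z k` is `z_{k+1}`. -/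
theorem det_jacobian (m : ℕ) (z : Fin (m + 2) → ℂ) :
    (Matrix.of fun i j : Fin (m + 1) =>
      if (i : ℕ) < m then
        (if j = i then z i.succ
          else if (j : ℕ) = (i : ℕ) + 1 then -z i.castSucc else 0)
      else
        (if (j : ℕ) < m then z ⟨m, by omega⟩
          else z ⟨m, by omega⟩ + z ⟨m + 1, by omega⟩)).det
    = (∑ a, z a) * ∏ b : Fin m, z b.succ.castSucc := by
  induction m with
  | zero =>
    simp [Matrix.det_fin_one, Fin.sum_univ_two]
  | succ m ih =>
    have zcongr : ∀ a b : Fin (m + 3), (a : ℕ) = (b : ℕ) → z a = z b :=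
      fun a b h => congrArg z (Fin.ext h)
    set A : Matrix (Fin (m+2)) (Fin (m+2)) ℂ := Matrix.of fun i j : Fin (m + 2) =>
      if (i : ℕ) < m + 1 then
        (if j = i then z i.succ
          else if (j : ℕ) = (i : ℕ) + 1 then -z i.castSucc else 0)
      else
        (if (j : ℕ) < m + 1 then z ⟨m + 1, by omega⟩
          else z ⟨m + 1, by omega⟩ + z ⟨m + 2, by omega⟩) with hA
    rw [Matrix.det_succ_column_zero, Fin.sum_univ_succ]
    have hmid : ∀ i : Fin (m+1),
        (-1:ℂ) ^ ((i.succ : Fin (m+2)) : ℕ) * A i.succ 0 *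
          (A.submatrix i.succ.succAbove Fin.succ).det
        = if i = Fin.last m then
            (-1:ℂ) ^ (m+1) * A (Fin.last (m+1)) 0 *
              (A.submatrix (Fin.last (m+1)).succAbove Fin.succ).det
          else 0 := by
      intro i
      by_cases hi : i = Fin.last m
      · subst hi
        simp [Fin.succ_last]
      · have hi' : (i : ℕ) < m := by
          have h2 := i.isLt
          rcases lt_or_eq_of_le (Nat.lt_succ_iff.mp i.isLt) with h | h
          · exact h
          · exact absurd (Fin.ext h) hi
        have hA0 : A i.succ 0 = 0 := by
          simp only [hA, Matrix.of_apply, Fin.val_succ, Fin.ext_iff, Fin.val_zero]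
          split_ifs <;> first | rfl | omega | (exfalso; omega) | simp_all
        simp [hA0, hi]
    rw [Finset.sum_congr rfl (fun i _ => hmid i), Finset.sum_ite_eq' Finset.univ (Fin.last m)]
    simp only [Finset.mem_univ, if_pos]
    have hA00 : A 0 0 = z 1 := by
      simp only [hA, Matrix.of_apply, Fin.val_zero, Fin.ext_iff]
      split_ifs <;>
        first
          | omega
          | (exfalso; omega)
          | exact zcongr _ _ (by simp [Fin.val_succ]; try omega)
          | simp_all
    have hAl0 : A (Fin.last (m+1)) 0 = z ⟨m+1, by omega⟩ := by
      simp only [hA, Matrix.of_apply, Fin.val_last, Fin.val_zero, Fin.ext_iff]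
      split_ifs <;>
        first
          | omega
          | (exfalso; omega)
          | exact zcongr _ _ (by simp [Fin.val_succ]; try omega)
          | simp_all
    have hsub0 : A.submatrix (0 : Fin (m+2)).succAbove Fin.succ
        = Matrix.of (fun i j : Fin (m + 1) =>
          if (i : ℕ) < m then
            (if j = i then (z ∘ Fin.succ) i.succ
              else if (j : ℕ) = (i : ℕ) + 1 then -(z ∘ Fin.succ) i.castSucc else 0)
          else
            (if (j : ℕ) < m then (z ∘ Fin.succ) ⟨m, by omega⟩
              else (z ∘ Fin.succ) ⟨m, by omega⟩ + (z ∘ Fin.succ) ⟨m + 1, by omega⟩)) := by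
      ext i j
      simp only [Fin.succAbove_zero, Matrix.submatrix_apply, Matrix.of_apply, hA,
        Function.comp_apply, Fin.val_succ, Fin.ext_iff, Fin.coe_castSucc]
      split_ifs <;>
        first
          | rfl
          | omega
          | (exfalso; omega)
          | exact zcongr _ _ (by simp [Fin.val_succ, Fin.coe_castSucc]; try omega)
          | (congr 1 <;> exact zcongr _ _ (by simp [Fin.val_succ, Fin.coe_castSucc]; try omega))
          | simp_all
    have hsub1 : (A.submatrix (Fin.last (m+1)).succAbove Fin.succ).det
        = ∏ i : Fin (m+1), -z i.castSucc.castSucc := by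
      rw [Fin.succAbove_last, Matrix.det_of_lowerTriangular]
      · apply Finset.prod_congr rfl
        intro i _
        simp only [Matrix.submatrix_apply, Matrix.of_apply, hA, Fin.coe_castSucc,
          Fin.val_succ, Fin.ext_iff]
        split_ifs <;>
          first
            | rfl
            | omega
            | (exfalso; omega)
            | (congr 1; exact zcongr _ _ (by simp [Fin.val_succ, Fin.coe_castSucc]; try omega))
            | simp_all
      · intro i j hij
        have hij' : (i : ℕ) < (j : ℕ) := hij
        simp only [Matrix.submatrix_apply, Matrix.of_apply, hA, Fin.coe_castSucc,
          Fin.val_succ, Fin.ext_iff]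
        split_ifs <;> first | rfl | omega | (exfalso; omega) | simp_all
    rw [hA00, hAl0, hsub0, ih, hsub1]
    have hprodneg : (∏ i : Fin (m+1), -z i.castSucc.castSucc)
        = (-1:ℂ)^(m+1) * ∏ i : Fin (m+1), z i.castSucc.castSucc := by
      have he : ∀ i : Fin (m+1), -z i.castSucc.castSucc
          = (-1:ℂ) * z i.castSucc.castSucc := fun i => by ring
      rw [Finset.prod_congr rfl fun i _ => he i, Finset.prod_mul_distrib, Finset.prod_const]
      simp
    rw [hprodneg]
    have hQ : (∏ b : Fin (m+1), z b.succ.castSucc)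
        = z 1 * ∏ b : Fin m, (z ∘ Fin.succ) b.succ.castSucc := by
      rw [Fin.prod_univ_succ]
      exact congrArg₂ (· * ·) (zcongr _ _ (by simp))
        (Finset.prod_congr rfl fun b _ => zcongr _ _ (by simp [Fin.val_succ, Fin.coe_castSucc]))
    have hP : z ⟨m+1, by omega⟩ * (∏ i : Fin (m+1), z i.castSucc.castSucc)
        = z 0 * ∏ b : Fin (m+1), z b.succ.castSucc := by
      rw [Fin.prod_univ_succ (f := fun i : Fin (m+1) => z i.castSucc.castSucc),
        Fin.prod_univ_castSucc (f := fun b : Fin (m+1) => z b.succ.castSucc)]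
      have h1 : ∏ i : Fin m, z i.succ.castSucc.castSucc
          = ∏ b : Fin m, z b.castSucc.succ.castSucc :=
        Finset.prod_congr rfl fun b _ =>
          zcongr _ _ (by simp [Fin.val_succ, Fin.coe_castSucc])
      have h2 : z ((Fin.last m).succ.castSucc) = z ⟨m+1, by omega⟩ :=
        zcongr _ _ (by simp)
      have h3 : z ((0 : Fin (m+1)).castSucc.castSucc) = z 0 :=
        zcongr _ _ (by simp)
      rw [h1, h2, h3]
      ring
    have hsum : (∑ a : Fin (m+3), z a) = z 0 + ∑ a : Fin (m+2), (z ∘ Fin.succ) a :=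
      Fin.sum_univ_succ _
    rw [hQ] at hP ⊢
    rw [hsum]
    simp only [Fin.val_zero, pow_zero, Fin.val_last]
    have hsq : ((-1:ℂ)^(m+1)) * ((-1:ℂ)^(m+1)) = 1 := by
      rw [← pow_add]
      exact Even.neg_one_pow ⟨m+1, by ring⟩
    linear_combination hP + (z ⟨m+1, by omega⟩ * ∏ i : Fin (m+1), z i.castSucc.castSucc) * hsq
end

section
/- Let a, b be complex numbers with Re a > 0 and Re b > 0. Then ∫_0^∞ x^{−2} [ e^{−ax} − (1 − (a−b)x) e^{−bx} ] dx = b − a + a (log a − log b), where log denotes the principal branch of the complex logarithm. -/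
open MeasureTheory Complex Set Filter

lemma hasDerivAt_cexp_real (c : ℂ) (x : ℝ) :
    HasDerivAt (fun y : ℝ => Complex.exp (c * y)) (c * Complex.exp (c * x)) x := by
  have h1 : HasDerivAt (fun y : ℝ => (y : ℂ)) 1 x := by
    simpa using (hasDerivAt_id _).ofReal_comp
  simpa [mul_comm] using (h1.const_mul c).cexp

lemma integrable_of_exp_bound {f : ℝ → ℂ} {K m : ℝ} (hm : 0 < m)
    (hcont : ContinuousOn f (Ioi 0))
    (hbound : ∀ x ∈ Ioi (0:ℝ), ‖f x‖ ≤ K * Real.exp (-m * x)) :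
    IntegrableOn f (Ioi (0:ℝ)) := by
  have hg : IntegrableOn (fun x : ℝ => K * Real.exp (-m * x)) (Ioi 0) :=
    (exp_neg_integrableOn_Ioi 0 hm).const_mul K
  refine hg.integrable.mono' (hcont.aestronglyMeasurable measurableSet_Ioi) ?_
  filter_upwards [ae_restrict_mem measurableSet_Ioi] with x hx
  simpa [Real.norm_eq_abs, abs_of_nonneg] using hbound x hx

lemma integrableOn_cexp_neg {c : ℂ} (hc : 0 < c.re) :
    IntegrableOn (fun x : ℝ => Complex.exp (-c * x)) (Ioi (0:ℝ)) := by
  refine integrable_of_exp_bound (K := 1) hc (by fun_prop) fun x hx => ?_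
  simp [Complex.norm_exp]

lemma tendsto_cexp_neg_atTop {c : ℂ} (hc : 0 < c.re) :
    Tendsto (fun x : ℝ => Complex.exp (-c * x)) atTop (nhds 0) := by
  rw [tendsto_zero_iff_norm_tendsto_zero]
  simp only [Complex.norm_exp]
  have : (fun x : ℝ => Real.exp ((-c * x).re)) = fun x : ℝ => Real.exp (-c.re * x) := by
    ext x; norm_num
  rw [this]
  exact Real.tendsto_exp_atBot.comp (tendsto_id.const_mul_atTop_of_neg (neg_neg_iff_pos.mpr hc) )

lemma integral_cexp_neg_Ioi {c : ℂ} (hc : 0 < c.re) :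
    ∫ x in Ioi (0:ℝ), Complex.exp (-c * x) = 1 / c := by
  have hcne : c ≠ 0 := fun h => by simp [h] at hc
  have hderiv : ∀ x ∈ Ici (0:ℝ),
      HasDerivAt (fun x : ℝ => -Complex.exp (-c * x) / c) (Complex.exp (-c * x)) x := by
    intro x _
    have h := ((hasDerivAt_cexp_real (-c) x).neg).div_const c
    convert h using 1
    rfl
    rfl
    field_simp
  have key := integral_Ioi_of_hasDerivAt_of_tendsto' hderiv
    (integrableOn_cexp_neg hc)
    (by simpa using ((tendsto_cexp_neg_atTop hc).neg.div_const c))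
  rw [key]
  simp [neg_div, hcne]

lemma frullani_aux {a b : ℂ} (ha : 0 < a.re) (hb : 0 < b.re) :
    ∫ x in Ioi (0:ℝ), (Complex.exp (-b * x) - Complex.exp (-a * x)) / x
      = Complex.log a - Complex.log b := by
  set m : ℝ := min a.re b.re with hm_def
  have hm : 0 < m := lt_min ha hb
  have hre : ∀ s ∈ Icc (0:ℝ) 1, m ≤ (b + (s:ℂ) * (a - b)).re := by
    intro s hs
    simp only [Complex.add_re, Complex.mul_re, Complex.ofReal_re, Complex.ofReal_im,
      Complex.sub_re, Complex.sub_im, zero_mul, sub_zero]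
    have h1 : m ≤ a.re := min_le_left _ _
    have h2 : m ≤ b.re := min_le_right _ _
    nlinarith [hs.1, hs.2]
  have hrepos : ∀ s ∈ Icc (0:ℝ) 1, 0 < (b + (s:ℂ) * (a - b)).re :=
    fun s hs => lt_of_lt_of_le hm (hre s hs)
  -- derivative of s ↦ b + s(a-b)
  have he : ∀ s : ℝ, HasDerivAt (fun s : ℝ => b + (s:ℂ) * (a - b)) (a - b) s := by
    intro s
    have h1 : HasDerivAt (fun s : ℝ => (s : ℂ)) 1 s := by
      simpa using (hasDerivAt_id _).ofReal_comp
    simpa using (h1.mul_const (a - b)).const_add b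
  -- Step 1: pointwise formula
  have step1 : ∀ x ∈ Ioi (0:ℝ),
      (Complex.exp (-b * x) - Complex.exp (-a * x)) / x
        = ∫ s in Ioc (0:ℝ) 1, (a - b) * Complex.exp (-(b + (s:ℂ) * (a - b)) * x) := by
    intro x hx
    have hxne : (x:ℂ) ≠ 0 := by exact_mod_cast (ne_of_gt hx)
    rw [← intervalIntegral.integral_of_le zero_le_one]
    have hderiv : ∀ s ∈ uIcc (0:ℝ) 1,
        HasDerivAt (fun s : ℝ => -Complex.exp (-(b + (s:ℂ) * (a - b)) * x) / x)
          ((a - b) * Complex.exp (-(b + (s:ℂ) * (a - b)) * x)) s := by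
      intro s _
      have h := ((((he s).neg.mul_const (x:ℂ)).cexp).neg).div_const (x:ℂ)
      convert h using 1
      rfl
      rfl
      simp only [Pi.neg_apply]
      field_simp
    rw [intervalIntegral.integral_eq_sub_of_hasDerivAt hderiv (by apply Continuous.intervalIntegrable; fun_prop)]
    push_cast
    field_simp
    ring_nf
  -- Fubini integrability
  have hint : Integrable
      (Function.uncurry fun (x : ℝ) (s : ℝ) =>
        (a - b) * Complex.exp (-(b + (s:ℂ) * (a - b)) * x))
      ((volume.restrict (Ioi (0:ℝ))).prod (volume.restrict (Ioc (0:ℝ) 1))) := by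
    have hg : Integrable (fun p : ℝ × ℝ => Real.exp (-m * p.1) * ‖a - b‖)
        ((volume.restrict (Ioi (0:ℝ))).prod (volume.restrict (Ioc (0:ℝ) 1))) := by
      exact Integrable.mul_prod (g := fun _ : ℝ => ‖a - b‖)
        (exp_neg_integrableOn_Ioi 0 hm)
        (integrableOn_const measure_Ioc_lt_top.ne)
    refine hg.mono' ?_ ?_
    · exact (Continuous.aestronglyMeasurable (by fun_prop))
    · rw [Measure.prod_restrict]
      filter_upwards [ae_restrict_mem (measurableSet_Ioi.prod measurableSet_Ioc)] with p hp
      obtain ⟨hx, hs⟩ := hp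
      simp only [Function.uncurry, norm_mul, Complex.norm_exp,
        Real.norm_eq_abs]
      rw [mul_comm (Real.exp (-m * p.1))]
      refine mul_le_mul_of_nonneg_left (Real.exp_le_exp.mpr ?_) (norm_nonneg _)
      have hre' := hre p.2 ⟨le_of_lt hs.1, hs.2⟩
      have hxpos : (0:ℝ) < p.1 := hx
      have : (-(b + (p.2:ℂ) * (a - b)) * (p.1:ℂ)).re
          = -(b + (p.2:ℂ) * (a - b)).re * p.1 := by
        simp [Complex.mul_re]
      rw [this]
      nlinarith
  -- put it together
  calc ∫ x in Ioi (0:ℝ), (Complex.exp (-b * x) - Complex.exp (-a * x)) / x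
      = ∫ x in Ioi (0:ℝ), ∫ s in Ioc (0:ℝ) 1,
          (a - b) * Complex.exp (-(b + (s:ℂ) * (a - b)) * x) :=
        setIntegral_congr_fun measurableSet_Ioi step1
    _ = ∫ s in Ioc (0:ℝ) 1, ∫ x in Ioi (0:ℝ),
          (a - b) * Complex.exp (-(b + (s:ℂ) * (a - b)) * x) :=
        integral_integral_swap hint
    _ = ∫ s in Ioc (0:ℝ) 1, (a - b) / (b + (s:ℂ) * (a - b)) := by
        refine setIntegral_congr_fun measurableSet_Ioc fun s hs => ?_
        rw [integral_const_mul, integral_cexp_neg_Ioi (hrepos s ⟨le_of_lt hs.1, hs.2⟩)]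
        rw [mul_one_div]
    _ = ∫ s in (0:ℝ)..1, (a - b) / (b + (s:ℂ) * (a - b)) :=
        (intervalIntegral.integral_of_le zero_le_one).symm
    _ = Complex.log a - Complex.log b := by
        have hderiv : ∀ s ∈ uIcc (0:ℝ) 1,
            HasDerivAt (fun s : ℝ => Complex.log (b + (s:ℂ) * (a - b)))
              ((a - b) / (b + (s:ℂ) * (a - b))) s := by
          intro s hs
          rw [uIcc_of_le zero_le_one] at hs
          exact (he s).clog_real (Complex.mem_slitPlane_iff.mpr (Or.inl (hrepos s hs)))
        have hcont : IntervalIntegrable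
            (fun s : ℝ => (a - b) / (b + (s:ℂ) * (a - b))) volume 0 1 := by
          apply ContinuousOn.intervalIntegrable
          rw [uIcc_of_le zero_le_one]
          exact ContinuousOn.div continuousOn_const (by fun_prop)
            (fun s hs => by
              intro h
              have := hrepos s hs
              rw [h] at this; simp at this)
        rw [intervalIntegral.integral_eq_sub_of_hasDerivAt hderiv hcont]
        norm_num

lemma integrableOn_of_two_bounds {f : ℝ → ℂ} {m δ A B : ℝ} (hm : 0 < m) (hδ : 0 < δ)
    (hA : 0 ≤ A) (hcont : ContinuousOn f (Ioi 0))
    (h1 : ∀ x : ℝ, 0 < x → x ≤ δ → ‖f x‖ ≤ A)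
    (h2 : ∀ x : ℝ, δ ≤ x → ‖f x‖ ≤ B * Real.exp (-m * x)) :
    IntegrableOn f (Ioi (0:ℝ)) := by
  refine integrable_of_exp_bound (K := max (A * Real.exp (m * δ)) B) hm hcont ?_
  intro x hx
  rcases le_or_gt x δ with h | h
  · calc ‖f x‖ ≤ A := h1 x hx h
      _ ≤ A * Real.exp (m * δ) * Real.exp (-m * x) := by
          have h2 : Real.exp (m * δ) * Real.exp (-m * x) = Real.exp (m * δ + -m * x) :=
            (Real.exp_add _ _).symm
          have h3 : (1:ℝ) ≤ Real.exp (m * δ + -m * x) :=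
            Real.one_le_exp (by nlinarith)
          nlinarith
      _ ≤ max (A * Real.exp (m * δ)) B * Real.exp (-m * x) := by
          have := Real.exp_pos (-m * x)
          nlinarith [le_max_left (A * Real.exp (m * δ)) B]
  · exact le_trans (h2 x h.le) (by
      have := Real.exp_pos (-m * x)
      nlinarith [le_max_right (A * Real.exp (m * δ)) B])

-- factorization identities
lemma factor_main (a b : ℂ) (x : ℝ) :
    Complex.exp (-a * x) - (1 - (a - b) * x) * Complex.exp (-b * x)
      = Complex.exp (-b * x) * (Complex.exp (-(a - b) * x) - 1 - (-(a - b) * x)) := by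
  have e1 : Complex.exp (-b * x) * Complex.exp (-(a - b) * x) = Complex.exp (-a * x) := by
    rw [← Complex.exp_add]; ring_nf
  linear_combination -e1

lemma factor_h (a b : ℂ) (x : ℝ) :
    Complex.exp (-b * x) - Complex.exp (-a * x)
      = -(Complex.exp (-b * x) * (Complex.exp (-(a - b) * x) - 1)) := by
  have e1 : Complex.exp (-b * x) * Complex.exp (-(a - b) * x) = Complex.exp (-a * x) := by
    rw [← Complex.exp_add]; ring_nf
  linear_combination e1

lemma integrable_main {a b : ℂ} (ha : 0 < a.re) (hb : 0 < b.re) :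
    IntegrableOn (fun x : ℝ =>
      (Complex.exp (-a * x) - (1 - (a - b) * x) * Complex.exp (-b * x)) / (x:ℂ) ^ 2)
      (Ioi (0:ℝ)) := by
  set m : ℝ := min a.re b.re with hm_def
  have hm : 0 < m := lt_min ha hb
  set δ : ℝ := (1 + ‖a - b‖)⁻¹ with hδ_def
  have hδ : 0 < δ := by positivity
  have habs := norm_nonneg (a - b)
  refine integrableOn_of_two_bounds (A := ‖a - b‖ ^ 2)
    (B := 2 / δ ^ 2 + ‖a - b‖ / δ)
    hm hδ (by positivity) ?_ ?_ ?_
  · apply ContinuousOn.div (by fun_prop) (by fun_prop)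
    intro x hx
    simp only [ne_eq, OfNat.ofNat_ne_zero, not_false_eq_true, pow_eq_zero_iff]
    exact_mod_cast ne_of_gt (hx : (0:ℝ) < x)
  · -- small x bound
    intro x hx hxδ
    have hxne : (x:ℂ) ≠ 0 := by exact_mod_cast ne_of_gt hx
    rw [factor_main, norm_div, norm_mul, norm_pow, Complex.norm_real, Real.norm_eq_abs, abs_of_pos hx]
    have hz : ‖-(a - b) * x‖ ≤ 1 := by
      rw [norm_mul, norm_neg, Complex.norm_real, Real.norm_eq_abs, abs_of_pos hx]
      rw [hδ_def] at hxδ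
      calc ‖a - b‖ * x ≤ ‖a - b‖ * (1 + ‖a-b‖)⁻¹ :=
            mul_le_mul_of_nonneg_left hxδ habs
        _ ≤ 1 := by
            rw [mul_inv_le_iff₀ (by positivity)]
            linarith
    have hb1 : ‖Complex.exp (-(a - b) * x) - 1 - (-(a - b) * x)‖
        ≤ ‖-(a - b) * x‖ ^ 2 := Complex.norm_exp_sub_one_sub_id_le hz
    have hb2 : ‖Complex.exp (-b * x)‖ ≤ 1 := by
      rw [Complex.norm_exp]
      apply Real.exp_le_one_iff.mpr
      simp only [neg_mul, neg_re, Complex.mul_re, Complex.ofReal_re, Complex.ofReal_im,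
        mul_zero, sub_zero]
      nlinarith
    have hzx : ‖-(a - b) * x‖ = ‖a - b‖ * x := by
      rw [norm_mul, norm_neg, Complex.norm_real, Real.norm_eq_abs, abs_of_pos hx]
    rw [div_le_iff₀ (by positivity)]
    calc ‖Complex.exp (-b * x)‖ *
          ‖Complex.exp (-(a - b) * x) - 1 - (-(a - b) * x)‖
        ≤ 1 * (‖a - b‖ * x) ^ 2 := by
          apply mul_le_mul hb2 (by rw [← hzx]; exact hb1) (norm_nonneg _) zero_le_one
      _ = ‖a - b‖ ^ 2 * x ^ 2 := by ring
  · -- large x bound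
    intro x hx
    have hxpos : 0 < x := lt_of_lt_of_le hδ hx
    have hxne : (x:ℂ) ≠ 0 := by exact_mod_cast ne_of_gt hxpos
    have hea : ‖Complex.exp (-a * x)‖ ≤ Real.exp (-m * x) := by
      rw [Complex.norm_exp, Real.exp_le_exp]
      simp only [neg_mul, neg_re, Complex.mul_re, Complex.ofReal_re, Complex.ofReal_im,
        mul_zero, sub_zero]
      have : m ≤ a.re := min_le_left _ _
      nlinarith
    have heb : ‖Complex.exp (-b * x)‖ ≤ Real.exp (-m * x) := by
      rw [Complex.norm_exp, Real.exp_le_exp]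
      simp only [neg_mul, neg_re, Complex.mul_re, Complex.ofReal_re, Complex.ofReal_im,
        mul_zero, sub_zero]
      have : m ≤ b.re := min_le_right _ _
      nlinarith
    rw [norm_div, norm_pow, Complex.norm_real, Real.norm_eq_abs, abs_of_pos hxpos, div_le_iff₀ (by positivity)]
    have tri : ‖Complex.exp (-a * x) - (1 - (a - b) * x) * Complex.exp (-b * x)‖
        ≤ Real.exp (-m * x) + (1 + ‖a - b‖ * x) * Real.exp (-m * x) := by
      refine le_trans (norm_sub_le _ _) ?_
      gcongr
      rw [norm_mul]
      refine mul_le_mul ?_ heb (norm_nonneg _) (by positivity)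
      refine le_trans (norm_sub_le _ _) ?_
      simp only [norm_one, norm_mul, Complex.norm_real, Real.norm_eq_abs, abs_of_pos hxpos]
      exact le_rfl
    refine le_trans tri ?_
    have h1 : 1 ≤ x / δ := (one_le_div hδ).mpr hx
    have hexp := Real.exp_pos (-m * x)
    have expand : (2 / δ ^ 2 + ‖a - b‖ / δ) * Real.exp (-m * x) * x ^ 2
        = (2 * (x/δ)^2 + ‖a-b‖ * x * (x/δ)) * Real.exp (-m*x) := by
      field_simp
    rw [expand]
    have key : 0 ≤ 2 * ((x/δ)^2 - 1) + ‖a - b‖ * x * (x/δ - 1) := by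
      nlinarith [mul_nonneg (mul_nonneg habs hxpos.le) (by linarith : (0:ℝ) ≤ x/δ - 1)]
    nlinarith [mul_nonneg hexp.le key]

lemma integrable_h {a b : ℂ} (ha : 0 < a.re) (hb : 0 < b.re) :
    IntegrableOn (fun x : ℝ =>
      (Complex.exp (-b * x) - Complex.exp (-a * x)) / (x:ℂ)) (Ioi (0:ℝ)) := by
  set m : ℝ := min a.re b.re with hm_def
  have hm : 0 < m := lt_min ha hb
  set δ : ℝ := (1 + ‖a - b‖)⁻¹ with hδ_def
  have hδ : 0 < δ := by positivity
  have habs := norm_nonneg (a - b)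
  refine integrableOn_of_two_bounds (A := 2 * ‖a - b‖) (B := 2 / δ)
    hm hδ (by positivity) ?_ ?_ ?_
  · apply ContinuousOn.div (by fun_prop) (by fun_prop)
    intro x hx
    exact_mod_cast ne_of_gt (hx : (0:ℝ) < x)
  · intro x hx hxδ
    have hxne : (x:ℂ) ≠ 0 := by exact_mod_cast ne_of_gt hx
    rw [factor_h, norm_div, norm_neg, norm_mul, Complex.norm_real, Real.norm_eq_abs, abs_of_pos hx]
    have hz : ‖-(a - b) * x‖ ≤ 1 := by
      rw [norm_mul, norm_neg, Complex.norm_real, Real.norm_eq_abs, abs_of_pos hx]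
      rw [hδ_def] at hxδ
      calc ‖a - b‖ * x ≤ ‖a - b‖ * (1 + ‖a - b‖)⁻¹ :=
            mul_le_mul_of_nonneg_left hxδ habs
        _ ≤ 1 := by
            rw [mul_inv_le_iff₀ (by positivity)]
            linarith
    have hb1 : ‖Complex.exp (-(a - b) * x) - 1‖
        ≤ 2 * ‖-(a - b) * x‖ := Complex.norm_exp_sub_one_le hz
    have hb2 : ‖Complex.exp (-b * x)‖ ≤ 1 := by
      rw [Complex.norm_exp]
      apply Real.exp_le_one_iff.mpr
      simp only [neg_mul, neg_re, Complex.mul_re, Complex.ofReal_re, Complex.ofReal_im,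
        mul_zero, sub_zero]
      nlinarith
    have hzx : ‖-(a - b) * x‖ = ‖a - b‖ * x := by
      rw [norm_mul, norm_neg, Complex.norm_real, Real.norm_eq_abs, abs_of_pos hx]
    rw [div_le_iff₀ (by positivity)]
    calc ‖Complex.exp (-b * x)‖ * ‖Complex.exp (-(a - b) * x) - 1‖
        ≤ 1 * (2 * (‖a - b‖ * x)) := by
          refine mul_le_mul hb2 ?_ (norm_nonneg _) zero_le_one
          rw [← hzx]; exact hb1
      _ = 2 * ‖a - b‖ * x := by ring
  · intro x hx
    have hxpos : 0 < x := lt_of_lt_of_le hδ hx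
    have hea : ‖Complex.exp (-a * x)‖ ≤ Real.exp (-m * x) := by
      rw [Complex.norm_exp, Real.exp_le_exp]
      simp only [neg_mul, neg_re, Complex.mul_re, Complex.ofReal_re, Complex.ofReal_im,
        mul_zero, sub_zero]
      have : m ≤ a.re := min_le_left _ _
      nlinarith
    have heb : ‖Complex.exp (-b * x)‖ ≤ Real.exp (-m * x) := by
      rw [Complex.norm_exp, Real.exp_le_exp]
      simp only [neg_mul, neg_re, Complex.mul_re, Complex.ofReal_re, Complex.ofReal_im,
        mul_zero, sub_zero]
      have : m ≤ b.re := min_le_right _ _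
      nlinarith
    rw [norm_div, Complex.norm_real, Real.norm_eq_abs, abs_of_pos hxpos, div_le_iff₀ hxpos]
    have tri := norm_sub_le (Complex.exp (-b * x)) (Complex.exp (-a * x))
    have h1 : 1 ≤ x / δ := (one_le_div hδ).mpr hx
    have hexp := Real.exp_pos (-m * x)
    have expand : 2 / δ * Real.exp (-m * x) * x = 2 * (x / δ) * Real.exp (-m * x) := by
      field_simp
    rw [expand]
    nlinarith [mul_nonneg hexp.le (by linarith : (0:ℝ) ≤ x / δ - 1)]

/-- For complex `a, b` with positive real part,
`∫_0^∞ x^{-2} [e^{-ax} - (1 - (a-b)x) e^{-bx}] dx = b - a + a (log a - log b)`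
(principal branch). -/
theorem integral_exp_sub_div_sq (a b : ℂ) (ha : 0 < a.re) (hb : 0 < b.re) :
    ∫ x in Set.Ioi (0 : ℝ),
        (Complex.exp (-a * x) - (1 - (a - b) * x) * Complex.exp (-b * x)) / (x : ℂ) ^ 2
      = b - a + a * (Complex.log a - Complex.log b) := by
  set m : ℝ := min a.re b.re with hm_def
  have hm : 0 < m := lt_min ha hb
  set U : ℝ → ℂ := fun x =>
    ((-a * Complex.exp (-a * x) + b * Complex.exp (-b * x)) * x
      - (Complex.exp (-a * x) - Complex.exp (-b * x))) / (x:ℂ) ^ 2 with hU_def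
  set u : ℝ → ℂ := fun x =>
    if x = 0 then b - a else (Complex.exp (-a * x) - Complex.exp (-b * x)) / x with hu_def
  -- U is integrable: U = a * h - g on Ioi 0
  have hint_h := integrable_h ha hb
  have hint_g := integrable_main ha hb
  have hid : ∀ x ∈ Ioi (0:ℝ),
      a * ((Complex.exp (-b * x) - Complex.exp (-a * x)) / (x:ℂ))
        - (Complex.exp (-a * x) - (1 - (a - b) * x) * Complex.exp (-b * x)) / (x:ℂ) ^ 2
      = U x := by
    intro x hx
    have hxne : (x:ℂ) ≠ 0 := by exact_mod_cast ne_of_gt (hx : (0:ℝ) < x)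
    rw [hU_def]
    field_simp
    ring
  have hint_U : IntegrableOn U (Ioi (0:ℝ)) := by
    refine IntegrableOn.congr_fun ((hint_h.const_mul a).sub hint_g) hid measurableSet_Ioi
  -- f and its derivative
  have hf_deriv : ∀ x : ℝ, HasDerivAt
      (fun y : ℝ => Complex.exp (-a * y) - Complex.exp (-b * y))
      (-a * Complex.exp (-a * x) + b * Complex.exp (-b * x)) x := by
    intro x
    have h := (hasDerivAt_cexp_real (-a) x).sub (hasDerivAt_cexp_real (-b) x)
    convert h using 1
    rfl
    rfl
    ring
  -- derivative of u on Ioi 0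
  have hu_deriv : ∀ x ∈ Ioi (0:ℝ), HasDerivAt u (U x) x := by
    intro x hx
    have hxpos : (0:ℝ) < x := hx
    have hxne : (x:ℂ) ≠ 0 := by exact_mod_cast ne_of_gt hxpos
    have hd : HasDerivAt (fun y : ℝ => (y:ℂ)) 1 x := by
      simpa using (hasDerivAt_id _).ofReal_comp
    have h := (hf_deriv x).div hd hxne
    have heq : u =ᶠ[nhds x]
        fun y : ℝ => (Complex.exp (-a * y) - Complex.exp (-b * y)) / (y:ℂ) := by
      filter_upwards [eventually_ne_nhds (ne_of_gt hxpos)] with y hy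
      rw [hu_def]; simp [hy]
    refine HasDerivAt.congr_of_eventuallyEq ?_ heq
    convert h using 1
    rfl
    rfl
    rw [hU_def]
    simp only [mul_one]
  -- continuity of u at 0 within Ici 0
  have hu_cont : ContinuousWithinAt u (Ici (0:ℝ)) 0 := by
    rw [← continuousWithinAt_Ioi_iff_Ici]
    have h0 : HasDerivAt (fun y : ℝ => Complex.exp (-a * y) - Complex.exp (-b * y))
        (b - a) 0 := by
      have := hf_deriv 0
      simpa using this.congr_deriv (by simp; ring)
    have hslope := hasDerivAt_iff_tendsto_slope.mp h0
    have : Tendsto u (nhdsWithin 0 (Ioi 0)) (nhds (b - a)) := by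
      refine Tendsto.congr' ?_ (hslope.mono_left (nhdsWithin_mono 0 ?_))
      · filter_upwards [self_mem_nhdsWithin] with y hy
        have hyne : y ≠ 0 := ne_of_gt hy
        rw [slope_def_module]
        rw [hu_def]
        simp only [hyne, if_false, sub_zero]
        rw [Complex.real_smul, Complex.ofReal_inv]
        simp only [mul_zero, Complex.ofReal_zero, zero_mul, neg_zero, Complex.exp_zero, sub_self]
        rw [sub_zero, inv_mul_eq_div]
      · intro y hy
        exact ne_of_gt hy
    have hu0 : u 0 = b - a := by rw [hu_def]; simp
    rw [ContinuousWithinAt, hu0]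
    exact this
  -- u tends to 0 at infinity
  have hu_top : Tendsto u atTop (nhds 0) := by
    have hexp : Tendsto (fun x : ℝ => 2 * Real.exp (-m * x)) atTop (nhds 0) := by
      have h := Real.tendsto_exp_atBot.comp
        (tendsto_id.const_mul_atTop_of_neg (neg_neg_iff_pos.mpr hm))
      simpa using h.const_mul 2
    refine squeeze_zero_norm' ?_ hexp
    filter_upwards [eventually_ge_atTop 1] with x hx1
    have hxpos : (0:ℝ) < x := lt_of_lt_of_le one_pos hx1
    have hxne : x ≠ 0 := ne_of_gt hxpos
    rw [hu_def]
    simp only [hxne, if_false, norm_div, Complex.norm_real, Real.norm_eq_abs,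
      abs_of_pos hxpos]
    have hea : ‖Complex.exp (-a * x)‖ ≤ Real.exp (-m * x) := by
      rw [Complex.norm_exp, Real.exp_le_exp]
      simp only [neg_mul, neg_re, Complex.mul_re, Complex.ofReal_re, Complex.ofReal_im,
        mul_zero, sub_zero]
      have : m ≤ a.re := min_le_left _ _
      nlinarith
    have heb : ‖Complex.exp (-b * x)‖ ≤ Real.exp (-m * x) := by
      rw [Complex.norm_exp, Real.exp_le_exp]
      simp only [neg_mul, neg_re, Complex.mul_re, Complex.ofReal_re, Complex.ofReal_im,
        mul_zero, sub_zero]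
      have : m ≤ b.re := min_le_right _ _
      nlinarith
    have tri := norm_sub_le (Complex.exp (-a * x)) (Complex.exp (-b * x))
    rw [div_le_iff₀ hxpos]
    nlinarith [Real.exp_pos (-m * x)]
  -- FTC on Ioi 0 for U
  have hU_int : ∫ x in Ioi (0:ℝ), U x = 0 - u 0 :=
    integral_Ioi_of_hasDerivAt_of_tendsto hu_cont hu_deriv hint_U hu_top
  have hu0 : u 0 = b - a := by rw [hu_def]; simp
  -- assemble
  calc ∫ x in Ioi (0:ℝ),
        (Complex.exp (-a * x) - (1 - (a - b) * x) * Complex.exp (-b * x)) / (x:ℂ) ^ 2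
      = ∫ x in Ioi (0:ℝ),
          (a * ((Complex.exp (-b * x) - Complex.exp (-a * x)) / (x:ℂ)) - U x) := by
        refine setIntegral_congr_fun measurableSet_Ioi fun x hx => ?_
        rw [← hid x hx]; ring
    _ = (∫ x in Ioi (0:ℝ), a * ((Complex.exp (-b * x) - Complex.exp (-a * x)) / (x:ℂ)))
          - ∫ x in Ioi (0:ℝ), U x :=
        integral_sub (hint_h.const_mul a) hint_U
    _ = a * (Complex.log a - Complex.log b) - (0 - (b - a)) := by
        rw [integral_const_mul, frullani_aux ha hb, hU_int, hu0]
    _ = b - a + a * (Complex.log a - Complex.log b) := by ring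
end

section
/- Let a, b be complex numbers with Re a > 0 and Re b > 0. Then ∫_0^∞ x^{−3} [ e^{−ax} − (1 − (a−b)x + (1/2)(a−b)² x²) e^{−bx} ] dx = (3a² + b²)/4 − a b − (a²/2)(log a − log b), where log denotes the principal branch of the complex logarithm. -/
open MeasureTheory Complex Set Filter Topology intervalIntegral


lemma my_integrableOn_cexp {w : ℂ} (hw : 0 < w.re) :
    IntegrableOn (fun x : ℝ => Complex.exp (-w * x)) (Ioi 0) := by
  apply Integrable.mono' (g := fun x : ℝ => Real.exp (-w.re * x))
  · simpa [IntegrableOn] using (exp_neg_integrableOn_Ioi 0 hw)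
  · exact (Complex.continuous_exp.comp (by continuity)).aestronglyMeasurable
  · filter_upwards with x
    rw [Complex.norm_exp]
    simp [neg_mul]

lemma my_integral_cexp {w : ℂ} (hw : 0 < w.re) :
    ∫ x in Ioi (0:ℝ), Complex.exp (-w * x) = 1 / w := by
  have hw0 : w ≠ 0 := fun h => by simp [h] at hw
  have hd : ∀ x ∈ Ici (0:ℝ), HasDerivAt (fun x : ℝ => -Complex.exp (-w * x) / w)
      (Complex.exp (-w * x)) x := by
    intro x _
    have : HasDerivAt (fun z : ℂ => -Complex.exp (-w * z) / w) (Complex.exp (-w * x)) (x : ℂ) := by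
      have h0 : HasDerivAt (fun z : ℂ => -w * z) (-w) (x:ℂ) := by
        simpa using (hasDerivAt_id (x:ℂ)).const_mul (-w)
      have h1 := h0.cexp
      have := (h1.neg).div_const w
      refine this.congr_deriv ?_
      field_simp
    exact this.comp_ofReal
  have ht : Tendsto (fun x : ℝ => -Complex.exp (-w * x) / w) atTop (𝓝 0) := by
    have : Tendsto (fun x : ℝ => Complex.exp (-w * x)) atTop (𝓝 0) := by
      rw [tendsto_zero_iff_norm_tendsto_zero]
      have : ∀ x : ℝ, ‖Complex.exp (-w * x)‖ = Real.exp (-w.re * x) := by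
        intro x; rw [Complex.norm_exp]; simp [neg_mul]
      simp only [this]
      exact Real.tendsto_exp_atBot.comp (tendsto_id.const_mul_atTop_of_neg (neg_lt_zero.mpr hw))
    simpa using (this.neg).div_const w
  have := integral_Ioi_of_hasDerivAt_of_tendsto' hd (my_integrableOn_cexp hw) ht
  rw [this]
  simp [hw0]
  ring


lemma my_taylor2 (z : ℂ) :
    Complex.exp (-z) - (1 - z + (1/2) * z^2)
      = -(z^3/2) * ∫ s in (0:ℝ)..1, (1-(s:ℂ))^2 * Complex.exp (-z*s) := by
  rcases eq_or_ne z 0 with rfl | hz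
  · simp
  · set F : ℝ → ℂ := fun s => Complex.exp (-z*s) * (-(1-(s:ℂ))^2/z + 2*(1-(s:ℂ))/z^2 - 2/z^3)
      with hF
    have key : ∫ s in (0:ℝ)..1, (1-(s:ℂ))^2 * Complex.exp (-z*s) = F 1 - F 0 := by
      apply integral_eq_sub_of_hasDerivAt
      · intro s _
        have hc : HasDerivAt (fun w : ℂ =>
            Complex.exp (-z*w) * (-(1-w)^2/z + 2*(1-w)/z^2 - 2/z^3))
            ((1-(s:ℂ))^2 * Complex.exp (-z*s)) (s:ℂ) := by
          have h0 : HasDerivAt (fun w : ℂ => -z * w) (-z) (s:ℂ) := by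
            simpa using (hasDerivAt_id (s:ℂ)).const_mul (-z)
          have h1 := h0.cexp
          have hp : HasDerivAt (fun w : ℂ => -(1-w)^2/z + 2*(1-w)/z^2 - 2/z^3)
              (2*(1-(s:ℂ))/z - 2/z^2) (s:ℂ) := by
            have ha : HasDerivAt (fun w : ℂ => (1-w)) (-1) (s:ℂ) := by
              simpa using (hasDerivAt_id (s:ℂ)).const_sub 1
            have hb := ((ha.pow 2).neg).div_const z
            have hcc := (ha.const_mul 2).div_const (z^2)
            have := (hb.add hcc).sub_const (2/z^3)
            refine this.congr_deriv ?_
            ring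
          have := h1.mul hp
          refine this.congr_deriv ?_
          symm
          linear_combination (-(Complex.exp (-z*(s:ℂ)) *
            ((1-(s:ℂ))^2 - 2*(1-(s:ℂ))*z⁻¹ + 2*(z⁻¹)^2))) * mul_inv_cancel₀ hz
        exact hc.comp_ofReal
      · apply ContinuousOn.intervalIntegrable
        exact (Continuous.continuousOn (by continuity))
    rw [key, hF]
    simp only [Complex.ofReal_one, Complex.ofReal_zero, mul_one, mul_zero, Complex.exp_zero]
    linear_combination (-(Complex.exp (-z) * (1 + z*z⁻¹ + (z*z⁻¹)^2))
      + (1 + z*z⁻¹ + (z*z⁻¹)^2) - z*(1 + z*z⁻¹) + z^2/2) * mul_inv_cancel₀ hz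


variable {a b : ℂ}

lemma my_repos (ha : 0 < a.re) (hb : 0 < b.re) {s : ℝ} (hs : s ∈ Icc (0:ℝ) 1) :
    0 < (b + (a - b) * (s:ℂ)).re := by
  have h1 : (b + (a - b) * (s:ℂ)).re = b.re + (a.re - b.re) * s := by
    simp [Complex.add_re, Complex.mul_re, Complex.sub_re, Complex.ofReal_re,
      Complex.ofReal_im]
  rw [h1]
  rcases eq_or_lt_of_le hs.1 with h | h
  · simp [← h, hb]
  · nlinarith [mul_pos h ha, mul_nonneg (sub_nonneg.2 hs.2) hb.le]

lemma my_sInt (ha : 0 < a.re) (hb : 0 < b.re) :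
    ∫ s in (0:ℝ)..1, -((a-b)^3/2) * (1-(s:ℂ))^2 / (b + (a-b)*s)
      = (3 * a ^ 2 + b ^ 2) / 4 - a * b
          - (a ^ 2 / 2) * (Complex.log a - Complex.log b) := by
  set c := a - b with hc
  set G : ℝ → ℂ := fun s =>
    -(a^2/2) * Complex.log (b + c*(s:ℂ)) + a*c*(s:ℂ) - (b + c*(s:ℂ))^2/4 with hG
  have hne : ∀ s : ℝ, s ∈ Icc (0:ℝ) 1 → (b + c*(s:ℂ)) ≠ 0 := by
    intro s hs h
    have := my_repos ha hb hs
    rw [h] at this; simp at this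
  have key : ∫ s in (0:ℝ)..1, -((a-b)^3/2) * (1-(s:ℂ))^2 / (b + (a-b)*s) = G 1 - G 0 := by
    apply integral_eq_sub_of_hasDerivAt
    · intro s hs
      rw [uIcc_of_le zero_le_one] at hs
      have hu : (b + c*(s:ℂ)) ≠ 0 := hne s hs
      have hmem : (b + c*(s:ℂ)) ∈ slitPlane := Or.inl (my_repos ha hb hs)
      have hcx : HasDerivAt (fun w : ℂ => b + c*w) c (s:ℂ) := by
        simpa using ((hasDerivAt_id (s:ℂ)).const_mul c).const_add b
      have hlog : HasDerivAt (fun w : ℂ => Complex.log (b + c*w)) (c / (b + c*(s:ℂ))) (s:ℂ) :=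
        hcx.clog hmem
      have hGc : HasDerivAt (fun w : ℂ =>
          -(a^2/2) * Complex.log (b + c*w) + a*c*w - (b + c*w)^2/4)
          (-((a-b)^3/2) * (1-(s:ℂ))^2 / (b + (a-b)*(s:ℂ))) (s:ℂ) := by
        have h1 := hlog.const_mul (-(a^2/2))
        have h2 : HasDerivAt (fun w : ℂ => a*c*w) (a*c) (s:ℂ) := by
          simpa using (hasDerivAt_id (s:ℂ)).const_mul (a*c)
        have h3 := ((hcx.pow 2).div_const 4)
        have := (h1.add h2).sub h3
        refine this.congr_deriv ?_
        symm
        rw [← hc]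
        push_cast
        linear_combination ((c/2) * (2*a - (b + c*(s:ℂ)))) * mul_inv_cancel₀ hu
      exact hGc.comp_ofReal
    · apply ContinuousOn.intervalIntegrable
      apply ContinuousOn.div
      · exact Continuous.continuousOn (by continuity)
      · exact Continuous.continuousOn (by continuity)
      · intro s hs
        rw [uIcc_of_le zero_le_one] at hs
        exact hne s hs
  rw [key, hG]
  have e1 : b + c*((1:ℝ):ℂ) = a := by rw [hc]; push_cast; ring
  have e0 : b + c*((0:ℝ):ℂ) = b := by push_cast; ring
  simp only [e1, e0]
  rw [hc]
  push_cast
  ring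


variable {a b : ℂ}

lemma my_rege (ha : 0 < a.re) (hb : 0 < b.re) {s : ℝ} (hs : s ∈ Icc (0:ℝ) 1) :
    min a.re b.re ≤ (b + (a - b) * (s:ℂ)).re := by
  have h1 : (b + (a - b) * (s:ℂ)).re = b.re + (a.re - b.re) * s := by
    simp [Complex.add_re, Complex.mul_re, Complex.sub_re, Complex.ofReal_re,
      Complex.ofReal_im]
  rw [h1]
  rcases le_total a.re b.re with h | h
  · rw [min_eq_left h]; nlinarith [hs.1, hs.2]
  · rw [min_eq_right h]; nlinarith [hs.1, hs.2]

set_option maxHeartbeats 1000000 in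
lemma my_fubini_int (ha : 0 < a.re) (hb : 0 < b.re) :
    Integrable (Function.uncurry fun (x s : ℝ) =>
        -((a-b)^3/2) * (1-(s:ℂ))^2 * Complex.exp (-(b + (a-b)*(s:ℂ)) * x))
      ((volume.restrict (Ioi (0:ℝ))).prod (volume.restrict (Ioc (0:ℝ) 1))) := by
  obtain ⟨m, hm0, hmina, hminb⟩ : ∃ m : ℝ, 0 < m ∧ m ≤ a.re ∧ m ≤ b.re :=
    ⟨min a.re b.re, lt_min ha hb, min_le_left _ _, min_le_right _ _⟩
  obtain ⟨K, hK⟩ : ∃ K : ℝ, ‖-((a-b)^3/2)‖ ≤ K := ⟨‖-((a-b)^3/2)‖, le_rfl⟩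
  have hcont : Continuous (Function.uncurry fun (x s : ℝ) =>
      -((a-b)^3/2) * (1-(s:ℂ))^2 * Complex.exp (-(b + (a-b)*(s:ℂ)) * x)) := by
    apply Continuous.mul
    · continuity
    · exact Complex.continuous_exp.comp (by continuity)
  haveI : IsFiniteMeasure (volume.restrict (Ioc (0:ℝ) 1)) := by
    constructor
    rw [Measure.restrict_apply MeasurableSet.univ]
    simp [Real.volume_Ioc]
  rw [Function.uncurry_def]
  apply Integrable.mono' (g := fun p : ℝ × ℝ => K * Real.exp (-m * p.1))
  · have h1 : Integrable (fun x : ℝ => K * Real.exp (-m * x))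
        (volume.restrict (Ioi (0:ℝ))) := by
      simpa using (exp_neg_integrableOn_Ioi 0 hm0).const_mul K
    have h2 : Integrable (fun _ : ℝ => (1:ℝ)) (volume.restrict (Ioc (0:ℝ) 1)) :=
      integrable_const 1
    simpa using h1.mul_prod h2
  · exact hcont.aestronglyMeasurable
  · rw [Measure.prod_restrict]
    filter_upwards [ae_restrict_mem (measurableSet_Ioi.prod measurableSet_Ioc)] with p hp
    obtain ⟨hx, hs⟩ := hp
    rw [norm_mul, norm_mul]
    have hb1 : ‖(1 - (p.2:ℂ))^2‖ ≤ 1 := by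
      rw [norm_pow]
      apply pow_le_one₀ (norm_nonneg _)
      rw [show (1 : ℂ) - (p.2:ℂ) = ((1 - p.2 : ℝ) : ℂ) by push_cast; ring]
      rw [Complex.norm_real]
      rw [Real.norm_eq_abs, abs_le]
      constructor <;> [linarith [hs.2]; linarith [hs.1]]
    have hb2 : ‖Complex.exp (-(b + (a-b)*(p.2:ℂ)) * p.1)‖ ≤ Real.exp (-m * p.1) := by
      rw [Complex.norm_exp]
      apply Real.exp_le_exp.2
      have : ((-(b + (a-b)*(p.2:ℂ))) * (p.1:ℂ)).re = -(b + (a-b)*(p.2:ℂ)).re * p.1 := by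
        simp [Complex.mul_re, Complex.ofReal_re, Complex.ofReal_im]
      rw [this]
      have hge := my_rege ha hb (mem_Icc.mpr ⟨le_of_lt hs.1, hs.2⟩)
      have hx0 : (0:ℝ) ≤ p.1 := le_of_lt hx
      have : m ≤ (b + (a - b) * (p.2:ℂ)).re := le_trans (le_min hmina hminb) hge
      nlinarith
    have hKnn : (0:ℝ) ≤ K := le_trans (norm_nonneg _) hK
    calc ‖-((a-b)^3/2)‖ * ‖(1 - (p.2:ℂ))^2‖ * ‖Complex.exp (-(b + (a-b)*(p.2:ℂ)) * p.1)‖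
        ≤ K * 1 * Real.exp (-m * p.1) := by
          apply mul_le_mul (mul_le_mul hK hb1 (norm_nonneg _) hKnn) hb2
            (norm_nonneg _) (by positivity)
      _ = K * Real.exp (-m * p.1) := by rw [mul_one]


set_option maxHeartbeats 1000000 in
/-- For complex `a, b` with positive real part,
`∫_0^∞ x^{-3} [e^{-ax} - (1 - (a-b)x + (1/2)(a-b)² x²) e^{-bx}] dx
  = (3a² + b²)/4 - ab - (a²/2)(log a - log b)` (principal branch). -/
theorem integral_exp_sub_div_cube (a b : ℂ) (ha : 0 < a.re) (hb : 0 < b.re) :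
    ∫ x in Set.Ioi (0 : ℝ),
        (Complex.exp (-a * x)
          - (1 - (a - b) * x + (1 / 2) * (a - b) ^ 2 * (x : ℂ) ^ 2) * Complex.exp (-b * x))
          / (x : ℂ) ^ 3
      = (3 * a ^ 2 + b ^ 2) / 4 - a * b
          - (a ^ 2 / 2) * (Complex.log a - Complex.log b) := by
  have step1 : EqOn (fun x : ℝ =>
      (Complex.exp (-a * x)
          - (1 - (a - b) * x + (1 / 2) * (a - b) ^ 2 * (x : ℂ) ^ 2) * Complex.exp (-b * x))
          / (x : ℂ) ^ 3)
      (fun x : ℝ => ∫ s in Ioc (0:ℝ) 1,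
        -((a-b)^3/2) * (1-(s:ℂ))^2 * Complex.exp (-(b + (a-b)*(s:ℂ)) * x))
      (Ioi (0:ℝ)) := by
    intro x hx
    have hx0 : (0:ℝ) < x := hx
    have hx3 : ((x:ℂ))^3 ≠ 0 := pow_ne_zero _ (by exact_mod_cast hx0.ne')
    have h3 : ((x:ℂ))^3 * (((x:ℂ))^3)⁻¹ = 1 := mul_inv_cancel₀ hx3
    simp only
    rw [← intervalIntegral.integral_of_le zero_le_one]
    have e1 : Complex.exp (-b*x) * Complex.exp (-((a-b)*x)) = Complex.exp (-a*x) := by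
      rw [← Complex.exp_add]; congr 1; ring
    have hnum : Complex.exp (-a * x)
          - (1 - (a - b) * x + (1 / 2) * (a - b) ^ 2 * (x : ℂ) ^ 2) * Complex.exp (-b * x)
        = Complex.exp (-b*x) * (Complex.exp (-((a-b)*x))
            - (1 - (a-b)*x + (1/2)*((a-b)*x)^2)) := by
      linear_combination (-1 : ℂ) * e1
    rw [hnum, my_taylor2 ((a-b)*x)]
    rw [show Complex.exp (-b*(x:ℂ)) * (-(((a-b)*(x:ℂ))^3/2) *
        ∫ s in (0:ℝ)..1, (1-(s:ℂ))^2 * Complex.exp (-((a-b)*(x:ℂ))*s)) / (x:ℂ)^3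
      = ∫ s in (0:ℝ)..1, (Complex.exp (-b*(x:ℂ)) * (-(((a-b)*(x:ℂ))^3/2)) / (x:ℂ)^3) *
          ((1-(s:ℂ))^2 * Complex.exp (-((a-b)*(x:ℂ))*s)) from by
      rw [intervalIntegral.integral_const_mul]; ring]
    apply intervalIntegral.integral_congr
    intro s _
    simp only
    have e2 : Complex.exp (-b*(x:ℂ)) * Complex.exp (-((a-b)*(x:ℂ))*(s:ℂ))
        = Complex.exp (-(b + (a-b)*(s:ℂ)) * x) := by
      rw [← Complex.exp_add]; congr 1; ring
    linear_combination (-((a-b)^3/2*(1-(s:ℂ))^2)) * e2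
      + (-((a-b)^3/2*(1-(s:ℂ))^2*Complex.exp (-b*(x:ℂ))
          * Complex.exp (-((a-b)*(x:ℂ))*(s:ℂ)))) * h3
  calc ∫ x in Set.Ioi (0 : ℝ),
        (Complex.exp (-a * x)
          - (1 - (a - b) * x + (1 / 2) * (a - b) ^ 2 * (x : ℂ) ^ 2) * Complex.exp (-b * x))
          / (x : ℂ) ^ 3
      = ∫ x in Ioi (0:ℝ), ∫ s in Ioc (0:ℝ) 1,
          -((a-b)^3/2) * (1-(s:ℂ))^2 * Complex.exp (-(b + (a-b)*(s:ℂ)) * x) :=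
        setIntegral_congr_fun measurableSet_Ioi step1
    _ = ∫ s in Ioc (0:ℝ) 1, ∫ x in Ioi (0:ℝ),
          -((a-b)^3/2) * (1-(s:ℂ))^2 * Complex.exp (-(b + (a-b)*(s:ℂ)) * x) :=
        integral_integral_swap (my_fubini_int ha hb)
    _ = ∫ s in Ioc (0:ℝ) 1, -((a-b)^3/2) * (1-(s:ℂ))^2 / (b + (a-b)*(s:ℂ)) := by
        apply setIntegral_congr_fun measurableSet_Ioc
        intro s hs
        simp only
        rw [show (fun x : ℝ => -((a-b)^3/2) * (1-(s:ℂ))^2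
            * Complex.exp (-(b + (a-b)*(s:ℂ)) * x))
          = (fun x : ℝ => (-((a-b)^3/2) * (1-(s:ℂ))^2)
            * Complex.exp (-(b + (a-b)*(s:ℂ)) * x)) from rfl]
        rw [MeasureTheory.integral_const_mul, my_integral_cexp (my_repos ha hb ⟨hs.1.le, hs.2⟩),
          mul_one_div]
    _ = ∫ s in (0:ℝ)..1, -((a-b)^3/2) * (1-(s:ℂ))^2 / (b + (a-b)*(s:ℂ)) :=
        (intervalIntegral.integral_of_le zero_le_one).symm
    _ = (3 * a ^ 2 + b ^ 2) / 4 - a * b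
          - (a ^ 2 / 2) * (Complex.log a - Complex.log b) := my_sInt ha hb
end

section
/- (Reflection property of the generalized Gamma function, upper half-plane case.) Let z, η be complex numbers with Im z > 0 and z − η ∉ ℤ, and define Λ(w,η) = e^w Γ(w+η) / (√(2π) · w^{w+η−1/2}) with principal-branch complex powers. Then Λ(−z, η) · Λ(z, 1−η) = ( 1 − e^{2πi(z−η)} )^{−1}. -/
open Complex

/-- Reflection property of the generalized Gamma function
`Λ(w,η) = e^w Γ(w+η) / (√(2π) w^{w+η-1/2})`, upper half-plane case: for `Im z > 0`
and `z - η ∉ ℤ`, `Λ(-z, η) Λ(z, 1-η) = (1 - e^{2πi(z-η)})⁻¹`. -/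
theorem generalizedGamma_reflection_upper (z η : ℂ) (hz : 0 < z.im)
    (hint : ∀ k : ℤ, z - η ≠ (k : ℂ))
    (Λ : ℂ → ℂ → ℂ)
    (hΛ : ∀ w μ, Λ w μ = Complex.exp w * Complex.Gamma (w + μ)
      / ((Real.sqrt (2 * Real.pi) : ℂ) * w ^ (w + μ - 1 / 2))) :
    Λ (-z) η * Λ z (1 - η)
      = (1 - Complex.exp (2 * Real.pi * Complex.I * (z - η)))⁻¹ := by
  have hzne : z ≠ 0 := by
    intro h; rw [h] at hz; simp at hz
  have hnzne : (-z) ≠ 0 := neg_ne_zero.mpr hzne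
  have hπ : (Real.pi : ℂ) ≠ 0 := by simpa using Real.pi_ne_zero
  have hlog : Complex.log (-z) = Complex.log z - Real.pi * I := by
    rw [Complex.log, Complex.log, norm_neg,
      arg_neg_eq_arg_sub_pi_of_im_pos hz]
    push_cast
    ring
  set A : ℂ := -z + η - 1/2 with hA
  have hB : z + (1 - η) - 1/2 = -A := by rw [hA]; ring
  have hpow : (-z) ^ (-z + η - 1/2) * z ^ (z + (1 - η) - 1/2)
      = Complex.exp (-(Real.pi * I * A)) := by
    rw [hB, Complex.cpow_def_of_ne_zero hnzne, Complex.cpow_def_of_ne_zero hzne,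
      ← Complex.exp_add, hlog, ← hA]
    congr 1
    ring
  have hrefl : Complex.Gamma (-z + η) * Complex.Gamma (z + (1 - η))
      = Real.pi / Complex.sin (Real.pi * (η - z)) := by
    have h := Complex.Gamma_mul_Gamma_one_sub (η - z)
    rw [show (1 : ℂ) - (η - z) = z + (1 - η) by ring] at h
    rw [show (-z + η : ℂ) = η - z by ring, h]
  have hsin : Complex.sin (Real.pi * (η - z)) ≠ 0 := by
    rw [Complex.sin_ne_zero_iff]
    intro k h
    apply hint (-k)
    have h2 : (Real.pi : ℂ) * (η - z) = (Real.pi : ℂ) * k := by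
      rw [h]; ring
    have h3 : (η - z : ℂ) = k := mul_left_cancel₀ hπ h2
    push_cast
    linear_combination -h3
  have hsq : ((Real.sqrt (2 * Real.pi) : ℂ)) * (Real.sqrt (2 * Real.pi) : ℂ)
      = 2 * Real.pi := by
    rw [← Complex.ofReal_mul, Real.mul_self_sqrt (by positivity)]
    push_cast; ring
  have hexpne : ∀ w : ℂ, Complex.exp w ≠ 0 := Complex.exp_ne_zero
  have hI : Complex.exp ((Real.pi : ℂ) * I / 2) = I := by
    rw [show ((Real.pi : ℂ) * I / 2) = ((Real.pi : ℂ) / 2) * I by ring,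
      Complex.exp_mul_I]
    norm_num [Complex.sin_pi_div_two, Complex.cos_pi_div_two]
  -- key exponential identity
  have hkey : Complex.sin (Real.pi * (η - z)) * 2 * Complex.exp (-(Real.pi * I * A))
      = 1 - Complex.exp (2 * Real.pi * I * (z - η)) := by
    rw [Complex.sin, hA]
    rw [show (Complex.exp (-(↑Real.pi * (η - z)) * I) - Complex.exp (↑Real.pi * (η - z) * I)) * I / 2 * 2 *
        Complex.exp (-(↑Real.pi * I * (-z + η - 1 / 2)))
      = Complex.exp (-(↑Real.pi * (η - z)) * I + -(↑Real.pi * I * (-z + η - 1 / 2))) * I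
        - Complex.exp (↑Real.pi * (η - z) * I + -(↑Real.pi * I * (-z + η - 1 / 2))) * I by
        rw [Complex.exp_add, Complex.exp_add]; ring]
    rw [show -(↑Real.pi * (η - z)) * I + -(↑Real.pi * I * (-z + η - 1 / 2))
        = (Real.pi : ℂ) * I / 2 + 2 * Real.pi * I * (z - η) by ring,
      show (↑Real.pi * (η - z)) * I + -(↑Real.pi * I * (-z + η - 1 / 2))
        = (Real.pi : ℂ) * I / 2 by ring,
      Complex.exp_add, hI]
    ring_nf
    rw [Complex.I_sq]
    ring
  rw [hΛ, hΛ, div_mul_div_comm,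
    show ((Real.sqrt (2 * Real.pi) : ℂ) * (-z) ^ (-z + η - 1 / 2) *
      ((Real.sqrt (2 * Real.pi) : ℂ) * z ^ (z + (1 - η) - 1 / 2)))
      = ((Real.sqrt (2 * Real.pi) : ℂ) * (Real.sqrt (2 * Real.pi) : ℂ)) *
        ((-z) ^ (-z + η - 1/2) * z ^ (z + (1 - η) - 1/2)) by ring,
    hsq, hpow,
    show Complex.exp (-z) * Complex.Gamma (-z + η) * (Complex.exp z * Complex.Gamma (z + (1 - η)))
      = (Complex.exp (-z) * Complex.exp z) * (Complex.Gamma (-z + η) * Complex.Gamma (z + (1 - η))) by ring,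
    ← Complex.exp_add, hrefl, neg_add_cancel, Complex.exp_zero, one_mul]
  rw [← hkey]
  field_simp
end

section
/- (Reflection property of the generalized Gamma function, lower half-plane case.) Let z, η be complex numbers with Im z < 0 and z − η ∉ ℤ, and define Λ(w,η) = e^w Γ(w+η) / (√(2π) · w^{w+η−1/2}) with principal-branch complex powers. Then Λ(−z, η) · Λ(z, 1−η) = ( 1 − e^{2πi(η−z)} )^{−1}. -/
open Complex

/-- Reflection property of the generalized Gamma function
`Λ(w,η) = e^w Γ(w+η) / (√(2π) w^{w+η-1/2})`, lower half-plane case: for `Im z < 0`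
and `z - η ∉ ℤ`, `Λ(-z, η) Λ(z, 1-η) = (1 - e^{2πi(η-z)})⁻¹`. -/
theorem generalizedGamma_reflection_lower (z η : ℂ) (hz : z.im < 0)
    (hint : ∀ k : ℤ, z - η ≠ (k : ℂ))
    (Λ : ℂ → ℂ → ℂ)
    (hΛ : ∀ w μ, Λ w μ = Complex.exp w * Complex.Gamma (w + μ)
      / ((Real.sqrt (2 * Real.pi) : ℂ) * w ^ (w + μ - 1 / 2))) :
    Λ (-z) η * Λ z (1 - η)
      = (1 - Complex.exp (2 * Real.pi * Complex.I * (η - z)))⁻¹ := by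
  have hz0 : z ≠ 0 := by
    intro h; rw [h] at hz; simp at hz
  have hnz0 : (-z) ≠ 0 := neg_ne_zero.mpr hz0
  have hπ : (Real.pi : ℂ) ≠ 0 := ofReal_ne_zero.mpr Real.pi_ne_zero
  set s : ℂ := η - z with hs
  -- branch relation
  have hlog : Complex.log (-z) = Complex.log z + Real.pi * I := by
    unfold Complex.log
    rw [norm_neg, arg_neg_eq_arg_add_pi_of_im_neg hz]
    push_cast
    ring
  have hcpow : ∀ w : ℂ, (-z) ^ w = z ^ w * Complex.exp (Real.pi * I * w) := by
    intro w
    rw [cpow_def_of_ne_zero hnz0, cpow_def_of_ne_zero hz0, hlog, ← Complex.exp_add]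
    congr 1
    ring
  -- Gamma reflection
  have hΓ : Complex.Gamma s * Complex.Gamma (1 - s)
      = (Real.pi : ℂ) / Complex.sin (Real.pi * s) := Complex.Gamma_mul_Gamma_one_sub s
  have hsin : Complex.sin ((Real.pi : ℂ) * s) ≠ 0 := by
    rw [Complex.sin_ne_zero_iff]
    intro k h
    have hsk : s = (k : ℂ) := by
      have h' : (Real.pi : ℂ) * s = (Real.pi : ℂ) * (k : ℂ) := by rw [h]; ring
      exact mul_left_cancel₀ hπ h'
    refine hint (-k) ?_
    rw [show z - η = -s by rw [hs]; ring, hsk]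
    push_cast
    ring
  have hc : ((Real.sqrt (2 * Real.pi) : ℝ) : ℂ) * ((Real.sqrt (2 * Real.pi) : ℝ) : ℂ)
      = 2 * (Real.pi : ℂ) := by
    rw [← ofReal_mul, Real.mul_self_sqrt (by positivity)]
    push_cast
    ring
  have hA : (-z) ^ (-z + η - 1 / 2) = z ^ (s - 1 / 2) * Complex.exp (Real.pi * I * (s - 1 / 2)) := by
    rw [show -z + η - 1 / 2 = s - 1 / 2 by rw [hs]; ring]
    exact hcpow _
  have hB : z ^ (z + (1 - η) - 1 / 2) = z ^ (1 / 2 - s) := by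
    rw [show z + (1 - η) - 1 / 2 = 1 / 2 - s by rw [hs]; ring]
  have hzz : z ^ (s - 1 / 2) * z ^ (1 / 2 - s) = 1 := by
    rw [← cpow_add _ _ hz0, show s - 1 / 2 + (1 / 2 - s) = (0 : ℂ) by ring, cpow_zero]
  set c : ℂ := ((Real.sqrt (2 * Real.pi) : ℝ) : ℂ) with hcdef
  set E : ℂ := Complex.exp (Real.pi * I * (s - 1 / 2)) with hE
  set u : ℂ := Complex.exp ((Real.pi : ℂ) * I * s) with hu
  have hu0 : u ≠ 0 := Complex.exp_ne_zero _
  have hE0 : E ≠ 0 := Complex.exp_ne_zero _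
  have hEu : E = u * (-I) := by
    rw [hE, hu, show (Real.pi : ℂ) * I * (s - 1 / 2)
        = (Real.pi : ℂ) * I * s + -((Real.pi : ℂ) / 2) * I by ring, Complex.exp_add]
    congr 1
    rw [Complex.exp_mul_I]
    have : (-((Real.pi : ℂ) / 2)) = ((-(Real.pi / 2) : ℝ) : ℂ) := by push_cast; ring
    rw [this, ← Complex.ofReal_cos, ← Complex.ofReal_sin, Real.cos_neg, Real.sin_neg,
      Real.cos_pi_div_two, Real.sin_pi_div_two]
    simp
  have huinv : Complex.exp (-((Real.pi : ℂ) * s) * I) = u⁻¹ := by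
    rw [hu, ← Complex.exp_neg]
    congr 1
    ring
  have hufwd : Complex.exp ((Real.pi : ℂ) * s * I) = u := by
    rw [hu]; congr 1; ring
  have husq : Complex.exp (2 * (Real.pi : ℂ) * I * s) = u * u := by
    rw [hu, ← Complex.exp_add]; congr 1; ring
  -- key exponential identity
  have hkey : 1 - Complex.exp (2 * (Real.pi : ℂ) * I * (η - z))
      = Complex.sin ((Real.pi : ℂ) * s) * (2 * E) := by
    rw [show η - z = s from rfl, husq, Complex.sin, huinv, hufwd, hEu]
    field_simp
    ring_nf
    rw [Complex.I_sq]
    ring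
  rw [hΛ, hΛ, hA, hB, show -z + η = s by rw [hs]; ring, show z + (1 - η) = 1 - s by rw [hs]; ring]
  rw [hkey]
  have hnum : Complex.exp (-z) * Complex.Gamma s * (Complex.exp z * Complex.Gamma (1 - s))
      = (Real.pi : ℂ) / Complex.sin ((Real.pi : ℂ) * s) := by
    rw [mul_mul_mul_comm, ← Complex.exp_add, neg_add_cancel, Complex.exp_zero, one_mul, hΓ]
  have hden : (c * (z ^ (s - 1 / 2) * E)) * (c * z ^ (1 / 2 - s)) = 2 * (Real.pi : ℂ) * E := by
    have h1 : (c * (z ^ (s - 1 / 2) * E)) * (c * z ^ (1 / 2 - s))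
        = (c * c) * (z ^ (s - 1 / 2) * z ^ (1 / 2 - s)) * E := by ring
    rw [h1, hzz, mul_one, hcdef, hc]
  rw [div_mul_div_comm, hnum, hden]
  field_simp
end

section
/- For every real z > 0, ∫_0^∞ (1/s) ( 1/s² − 1/12 − e^{s}/(e^{s}−1)² ) e^{−zs} ds = z log Γ(z) − z (z − 1/2) log z + z² − (z/2) log(2π) − 1/12 − ∫_0^∞ (1/s²) ( 1/2 + 1/s + s/12 − e^{s}/(e^{s}−1) ) e^{−zs} ds, where Γ is the Gamma function and log the real logarithm. -/
open MeasureTheory Real Set Filter Topology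

namespace BinetAux


lemma nonneg_of_hasDerivAt (f f' : ℝ → ℝ) (h0 : f 0 = 0)
    (hd : ∀ x : ℝ, HasDerivAt f (f' x) x) (h' : ∀ x : ℝ, 0 ≤ x → 0 ≤ f' x) :
    ∀ x : ℝ, 0 ≤ x → 0 ≤ f x := by
  intro x hx
  have hmono : MonotoneOn f (Ici 0) := by
    apply monotoneOn_of_deriv_nonneg (convex_Ici 0)
      (fun y _ => (hd y).continuousAt.continuousWithinAt)
      (fun y _ => (hd y).differentiableAt.differentiableWithinAt)
    intro y hy
    rw [(hd y).deriv]
    rw [interior_Ici] at hy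
    exact h' y hy.le
  calc (0:ℝ) = f 0 := h0.symm
  _ ≤ f x := hmono self_mem_Ici hx hx

lemma hasDerivAt_cubic (a b c d x : ℝ) :
    HasDerivAt (fun s : ℝ => a*s^3 + b*s^2 + c*s + d) (3*a*x^2 + 2*b*x + c) x := by
  have h3 := (hasDerivAt_pow 3 x).const_mul a
  have h2 := (hasDerivAt_pow 2 x).const_mul b
  have h1 := (hasDerivAt_id' (𝕜 := ℝ) x).const_mul c
  have h := ((h3.add h2).add h1).add_const d
  refine h.congr_deriv ?_
  push_cast
  ring

lemma hasDerivAt_mix (a b c d e f g h i j k l x : ℝ) :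
    HasDerivAt (fun s : ℝ => Real.exp s * (a*s^3 + b*s^2 + c*s + d)
        + Real.exp (-s) * (e*s^3 + f*s^2 + g*s + h) + (i*s^3 + j*s^2 + k*s + l))
      (Real.exp x * (a*x^3 + (3*a+b)*x^2 + (2*b+c)*x + (c+d))
        + Real.exp (-x) * ((-e)*x^3 + (3*e-f)*x^2 + (2*f-g)*x + (g-h))
        + (0*x^3 + (3*i)*x^2 + (2*j)*x + k)) x := by
  have h1 := (Real.hasDerivAt_exp x).mul (hasDerivAt_cubic a b c d x)
  have h2 := ((hasDerivAt_neg x).exp).mul (hasDerivAt_cubic e f g h x)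
  have h3 := hasDerivAt_cubic i j k l x
  have := (h1.add h2).add h3
  refine this.congr_deriv ?_
  ring

lemma mix_nonneg (a b c d e f g h i j k l : ℝ) (h0 : d + h + l = 0)
    (hnext : ∀ x : ℝ, 0 ≤ x → 0 ≤ Real.exp x * (a*x^3 + (3*a+b)*x^2 + (2*b+c)*x + (c+d))
        + Real.exp (-x) * ((-e)*x^3 + (3*e-f)*x^2 + (2*f-g)*x + (g-h))
        + (0*x^3 + (3*i)*x^2 + (2*j)*x + k)) :
    ∀ s : ℝ, 0 ≤ s → 0 ≤ Real.exp s * (a*s^3 + b*s^2 + c*s + d)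
        + Real.exp (-s) * (e*s^3 + f*s^2 + g*s + h) + (i*s^3 + j*s^2 + k*s + l) := by
  apply nonneg_of_hasDerivAt _ _ (by simp; linarith) (fun x => hasDerivAt_mix a b c d e f g h i j k l x) hnext



/-! ### chain w : `0 ≤ (2+s) - (2-s) e^s`  -/

lemma w_nonneg : ∀ s : ℝ, 0 ≤ s → 0 ≤ (2+s) - (2-s)*Real.exp s := by
  have hnext : ∀ x : ℝ, 0 ≤ x → 0 ≤ Real.exp x * ((0:ℝ)*x^3 + (3*0+0)*x^2 + (2*0+1)*x + (1+(-2)))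
      + Real.exp (-x) * ((-(0:ℝ))*x^3 + (3*0-0)*x^2 + (2*0-0)*x + (0-0)) + ((0:ℝ)*x^3 + (3*0)*x^2 + (2*0)*x + 1) := by
    intro x hx
    have h := Real.add_one_le_exp (-x)
    have h2 := mul_le_mul_of_nonneg_right h (Real.exp_pos x).le
    rw [← Real.exp_add, neg_add_cancel, Real.exp_zero] at h2
    nlinarith [h2]
  have := mix_nonneg 0 0 1 (-2) 0 0 0 0 0 0 1 2 (by norm_num) hnext
  intro s hs
  have h := this s hs
  nlinarith [h]

/-! ### inequality u : `0 ≤ e^s (s²-6s+12) - (s²+6s+12)` -/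

lemma taylor5 (s : ℝ) (hs : 0 ≤ s) :
    1 + s + s^2/2 + s^3/6 + s^4/24 + s^5/120 ≤ Real.exp s := by
  have h := Real.sum_le_exp_of_nonneg hs 6
  have : ∑ i ∈ Finset.range 6, s ^ i / (Nat.factorial i : ℝ) = 1 + s + s^2/2 + s^3/6 + s^4/24 + s^5/120 := by
    norm_num [Finset.sum_range_succ, Nat.factorial]
  linarith [this ▸ h]

lemma u_nonneg : ∀ s : ℝ, 0 ≤ s → 0 ≤ Real.exp s * (s^2-6*s+12) - (s^2+6*s+12) := by
  intro s hs
  have hT := taylor5 s hs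
  have hq : (0:ℝ) ≤ s^2 - 6*s + 12 := by nlinarith [sq_nonneg (s-3)]
  have hP : 0 ≤ (Real.exp s - (1 + s + s^2/2 + s^3/6 + s^4/24 + s^5/120)) * (s^2-6*s+12) :=
    mul_nonneg (by linarith) hq
  have hP2 : 0 ≤ s^5 * (s^2 - s + 2) :=
    mul_nonneg (pow_nonneg hs 5) (by nlinarith [sq_nonneg (s-1), sq_nonneg s])
  nlinarith [hP, hP2]

/-! ### chain y : `0 ≤ e^s (s³-2s²+12s-24) + (-s³+2s²+12s+24)` -/

lemma y4 : ∀ x : ℝ, 0 ≤ x → 0 ≤ Real.exp x * (x^3+10*x^2+32*x+24) := by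
  intro x hx
  have h1 : (0:ℝ) ≤ x^3+10*x^2+32*x+24 := by nlinarith [pow_nonneg hx 3, pow_nonneg hx 2]
  exact mul_nonneg (Real.exp_pos x).le h1

lemma y3 : ∀ s : ℝ, 0 ≤ s → 0 ≤ Real.exp s * (s^3+7*s^2+18*s+6) - 6 := by
  have := mix_nonneg 1 7 18 6 0 0 0 0 0 0 0 (-6) (by norm_num)
    (fun x hx => by nlinarith [y4 x hx])
  intro s hs; nlinarith [this s hs]

lemma y2 : ∀ s : ℝ, 0 ≤ s → 0 ≤ Real.exp s * (s^3+4*s^2+10*s-4) + (-6*s+4) := by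
  have := mix_nonneg 1 4 10 (-4) 0 0 0 0 0 0 (-6) 4 (by norm_num)
    (fun x hx => by nlinarith [y3 x hx])
  intro s hs; nlinarith [this s hs]

lemma y1 : ∀ s : ℝ, 0 ≤ s → 0 ≤ Real.exp s * (s^3+s^2+8*s-12) + (-3*s^2+4*s+12) := by
  have := mix_nonneg 1 1 8 (-12) 0 0 0 0 0 (-3) 4 12 (by norm_num)
    (fun x hx => by nlinarith [y2 x hx])
  intro s hs; nlinarith [this s hs]

lemma y0 : ∀ s : ℝ, 0 ≤ s → 0 ≤ Real.exp s * (s^3-2*s^2+12*s-24) + (-s^3+2*s^2+12*s+24) := by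
  have := mix_nonneg 1 (-2) 12 (-24) 0 0 0 0 (-1) 2 12 24 (by norm_num)
    (fun x hx => by nlinarith [y1 x hx])
  intro s hs; nlinarith [this s hs]

/-! ### chain d : `0 ≤ e^s + e^{-s} - 2 - s²` -/

lemma d2 : ∀ x : ℝ, 0 ≤ x → 0 ≤ Real.exp x + Real.exp (-x) - 2 := by
  intro x _
  nlinarith [Real.add_one_le_exp x, Real.add_one_le_exp (-x)]

lemma d1 : ∀ s : ℝ, 0 ≤ s → 0 ≤ Real.exp s - Real.exp (-s) - 2*s := by
  have := mix_nonneg 0 0 0 1 0 0 0 (-1) 0 0 (-2) 0 (by norm_num)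
    (fun x hx => by nlinarith [d2 x hx])
  intro s hs; nlinarith [this s hs]

lemma d0 : ∀ s : ℝ, 0 ≤ s → 0 ≤ Real.exp s + Real.exp (-s) - 2 - s^2 := by
  have := mix_nonneg 0 0 0 1 0 0 0 1 0 (-1) 0 (-2) (by norm_num)
    (fun x hx => by nlinarith [d1 x hx])
  intro s hs; nlinarith [this s hs]

/-! ### chain n : `0 ≤ e^s (s²-12) + e^{-s}(s²-12) + 10s² + 24` -/

lemma n4 : ∀ x : ℝ, 0 ≤ x → 0 ≤ Real.exp x * (x^2+8*x) + Real.exp (-x) * (x^2-8*x) := by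
  intro x hx
  have h1 : (1:ℝ) ≤ Real.exp x := Real.one_le_exp hx
  have h2 : Real.exp (-x) ≤ 1 := Real.exp_le_one_iff.mpr (by linarith)
  have h3 := (Real.exp_pos (-x)).le
  rcases le_or_gt 0 (x^2 - 8*x) with hc | hc
  · have := mul_nonneg (Real.exp_pos x).le (by nlinarith : (0:ℝ) ≤ x^2+8*x)
    nlinarith [mul_nonneg h3 hc]
  · nlinarith [mul_le_mul_of_nonneg_right h2 (le_of_lt (neg_pos.mpr hc)),
      mul_le_mul_of_nonneg_right h1 (by nlinarith : (0:ℝ) ≤ x^2+8*x)]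

lemma n3 : ∀ s : ℝ, 0 ≤ s → 0 ≤ Real.exp s * (s^2+6*s-6) + Real.exp (-s) * (-s^2+6*s+6) := by
  have := mix_nonneg 0 1 6 (-6) 0 (-1) 6 6 0 0 0 0 (by norm_num)
    (fun x hx => by nlinarith [n4 x hx])
  intro s hs; nlinarith [this s hs]

lemma n2 : ∀ s : ℝ, 0 ≤ s → 0 ≤ Real.exp s * (s^2+4*s-10) + Real.exp (-s) * (s^2-4*s-10) + 20 := by
  have := mix_nonneg 0 1 4 (-10) 0 1 (-4) (-10) 0 0 0 20 (by norm_num)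
    (fun x hx => by nlinarith [n3 x hx])
  intro s hs; nlinarith [this s hs]

lemma n1 : ∀ s : ℝ, 0 ≤ s → 0 ≤ Real.exp s * (s^2+2*s-12) + Real.exp (-s) * (-s^2+2*s+12) + 20*s := by
  have := mix_nonneg 0 1 2 (-12) 0 (-1) 2 12 0 0 20 0 (by norm_num)
    (fun x hx => by nlinarith [n2 x hx])
  intro s hs; nlinarith [this s hs]

lemma n0 : ∀ s : ℝ, 0 ≤ s → 0 ≤ Real.exp s * (s^2-12) + Real.exp (-s) * (s^2-12) + (10*s^2+24) := by
  have := mix_nonneg 0 1 0 (-12) 0 1 0 (-12) 0 10 0 24 (by norm_num)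
    (fun x hx => by nlinarith [n1 x hx])
  intro s hs; nlinarith [this s hs]

/-! ### chain f : `0 ≤ e^s (s³-2s²+24) + e^{-s}(s³-2s²+24) - 2s³ - 20s² - 48` -/

lemma f5 : ∀ x : ℝ, 0 ≤ x → 0 ≤ Real.exp x * (x^3+13*x^2+40*x+44) + Real.exp (-x) * (-x^3+17*x^2-80*x+76) := by
  intro x hx
  have h1 : (1:ℝ) ≤ Real.exp x := Real.one_le_exp hx
  have h2 : Real.exp (-x) ≤ 1 := Real.exp_le_one_iff.mpr (by linarith)
  have hA : (0:ℝ) ≤ x^3+13*x^2+40*x+44 := by nlinarith [pow_nonneg hx 3, pow_nonneg hx 2]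
  rcases le_or_gt 0 (-x^3+17*x^2-80*x+76) with hc | hc
  · nlinarith [mul_nonneg (Real.exp_pos x).le hA, mul_nonneg (Real.exp_pos (-x)).le hc]
  · nlinarith [mul_le_mul_of_nonneg_right h2 (le_of_lt (neg_pos.mpr hc)),
      mul_le_mul_of_nonneg_right h1 hA, sq_nonneg (x - 2/3)]
lemma f4 : ∀ s : ℝ, 0 ≤ s → 0 ≤ Real.exp s * (s^3+10*s^2+20*s+24) + Real.exp (-s) * (s^3-14*s^2+52*s-24) := by
  have := mix_nonneg 1 10 20 24 1 (-14) 52 (-24) 0 0 0 0 (by norm_num)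
    (fun x hx => by nlinarith [f5 x hx])
  intro s hs; nlinarith [this s hs]

lemma f3 : ∀ s : ℝ, 0 ≤ s → 0 ≤ Real.exp s * (s^3+7*s^2+6*s+18) + Real.exp (-s) * (-s^3+11*s^2-30*s-6) - 12 := by
  have := mix_nonneg 1 7 6 18 (-1) 11 (-30) (-6) 0 0 0 (-12) (by norm_num)
    (fun x hx => by nlinarith [f4 x hx])
  intro s hs; nlinarith [this s hs]

lemma f2 : ∀ s : ℝ, 0 ≤ s → 0 ≤ Real.exp s * (s^3+4*s^2-2*s+20) + Real.exp (-s) * (s^3-8*s^2+14*s+20) + (-12*s-40) := by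
  have := mix_nonneg 1 4 (-2) 20 1 (-8) 14 20 0 0 (-12) (-40) (by norm_num)
    (fun x hx => by nlinarith [f3 x hx])
  intro s hs; nlinarith [this s hs]

lemma f1 : ∀ s : ℝ, 0 ≤ s → 0 ≤ Real.exp s * (s^3+s^2-4*s+24) + Real.exp (-s) * (-s^3+5*s^2-4*s-24) + (-6*s^2-40*s) := by
  have := mix_nonneg 1 1 (-4) 24 (-1) 5 (-4) (-24) 0 (-6) (-40) 0 (by norm_num)
    (fun x hx => by nlinarith [f2 x hx])
  intro s hs; nlinarith [this s hs]

lemma f0 : ∀ s : ℝ, 0 ≤ s → 0 ≤ Real.exp s * (s^3-2*s^2+24) + Real.exp (-s) * (s^3-2*s^2+24) + (-2*s^3-20*s^2-48) := by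
  have := mix_nonneg 1 (-2) 0 24 1 (-2) 0 24 (-2) (-20) 0 (-48) (by norm_num)
    (fun x hx => by nlinarith [f1 x hx])
  intro s hs; nlinarith [this s hs]



noncomputable def phi (s : ℝ) : ℝ := 1/2 - 1/s + 1/(Real.exp s - 1)

noncomputable def phider (s : ℝ) : ℝ := 1/s^2 - Real.exp s/(Real.exp s - 1)^2

lemma expm1_pos {s : ℝ} (hs : 0 < s) : 0 < Real.exp s - 1 := by
  have h : Real.exp 0 < Real.exp s := Real.exp_lt_exp.mpr hs
  rw [Real.exp_zero] at h; linarith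

lemma phi_nonneg {s : ℝ} (hs : 0 < s) : 0 ≤ phi s := by
  have hE := expm1_pos hs
  have key := w_nonneg s hs.le
  have h : phi s = ((2+s) - (2-s)*Real.exp s) / (2*s*(Real.exp s - 1)) := by
    rw [phi]; field_simp; ring
  rw [h]
  exact div_nonneg key (by positivity)

lemma phi_le {s : ℝ} (hs : 0 < s) : phi s ≤ s/12 := by
  have hE := expm1_pos hs
  have key := u_nonneg s hs.le
  have h : s/12 - phi s = (Real.exp s * (s^2-6*s+12) - (s^2+6*s+12)) / (12*s*(Real.exp s - 1)) := by
    rw [phi]; field_simp; ring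
  nlinarith [div_nonneg key (by positivity : (0:ℝ) ≤ 12*s*(Real.exp s - 1)), h]

lemma phi_lb {s : ℝ} (hs : 0 < s) : s/12 - phi s ≤ s^2/24 := by
  have hE := expm1_pos hs
  have key := y0 s hs.le
  have h : s^2/24 - (s/12 - phi s)
      = (Real.exp s * (s^3-2*s^2+12*s-24) + (-s^3+2*s^2+12*s+24)) / (24*s*(Real.exp s - 1)) := by
    rw [phi]; field_simp; ring
  nlinarith [div_nonneg key (by positivity : (0:ℝ) ≤ 24*s*(Real.exp s - 1)), h]

lemma phider_nonneg {s : ℝ} (hs : 0 < s) : 0 ≤ phider s := by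
  have hE := expm1_pos hs
  have key := d0 s hs.le
  have h : phider s = Real.exp s * (Real.exp s + Real.exp (-s) - 2 - s^2) / (s^2*(Real.exp s - 1)^2) := by
    rw [phider, Real.exp_neg]; field_simp; ring
  rw [h]
  exact div_nonneg (mul_nonneg (Real.exp_pos s).le key) (by positivity)

lemma phider_le {s : ℝ} (hs : 0 < s) : phider s ≤ 1/12 := by
  have hE := expm1_pos hs
  have key := n0 s hs.le
  have h : 1/12 - phider s
      = Real.exp s * (Real.exp s * (s^2-12) + Real.exp (-s) * (s^2-12) + (10*s^2+24)) / (12*s^2*(Real.exp s - 1)^2) := by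
    rw [phider, Real.exp_neg]; field_simp; ring
  nlinarith [div_nonneg (mul_nonneg (Real.exp_pos s).le key)
    (by positivity : (0:ℝ) ≤ 12*s^2*(Real.exp s - 1)^2), h]

lemma phider_lb {s : ℝ} (hs : 0 < s) : 1/12 - phider s ≤ s/24 := by
  have hE := expm1_pos hs
  have key := f0 s hs.le
  have h : s/24 - (1/12 - phider s)
      = Real.exp s * (Real.exp s * (s^3-2*s^2+24) + Real.exp (-s) * (s^3-2*s^2+24) + (-2*s^3-20*s^2-48)) / (24*s^2*(Real.exp s - 1)^2) := by
    rw [phider, Real.exp_neg]; field_simp; ring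
  nlinarith [div_nonneg (mul_nonneg (Real.exp_pos s).le key)
    (by positivity : (0:ℝ) ≤ 24*s^2*(Real.exp s - 1)^2), h]




lemma cont_phi : ContinuousOn phi (Ioi 0) := by
  unfold phi
  refine ContinuousOn.add (ContinuousOn.sub continuousOn_const ?_) ?_
  · exact continuousOn_const.div continuousOn_id fun x hx => ne_of_gt hx
  · exact continuousOn_const.div (Real.continuous_exp.continuousOn.sub continuousOn_const)
      fun x hx => ne_of_gt (expm1_pos hx)

lemma cont_phider : ContinuousOn phider (Ioi 0) := by
  unfold phider
  refine ContinuousOn.sub ?_ ?_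
  · exact continuousOn_const.div (continuousOn_id.pow 2) fun x hx => by have h0 : (0:ℝ) < x := hx; positivity
  · exact Real.continuous_exp.continuousOn.div
      (((Real.continuous_exp.continuousOn.sub continuousOn_const)).pow 2)
      fun x hx => by have := expm1_pos hx; positivity

lemma integral_exp_Ioi {c : ℝ} (hc : 0 < c) : ∫ s in Ioi (0:ℝ), Real.exp (-c*s) = 1/c := by
  have hd : ∀ x ∈ Ici (0:ℝ), HasDerivAt (fun s => -(Real.exp (-c*s))/c) (Real.exp (-c*x)) x := by
    intro x _
    have h1 : HasDerivAt (fun s : ℝ => -c*s) (-c) x := by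
      simpa using (hasDerivAt_id' x).const_mul (-c)
    simp only [neg_div]
    refine ((h1.exp.div_const c).neg).congr_deriv (Eq.symm ?_)
    have hcc : c / c = 1 := div_self hc.ne'
    linear_combination (-(Real.exp (-c*x))) * hcc
  have htd : Tendsto (fun s : ℝ => -(Real.exp (-c*s))/c) atTop (𝓝 0) := by
    have h1 : Tendsto (fun s : ℝ => c*s) atTop atTop :=
      Tendsto.const_mul_atTop hc tendsto_id
    have h2 : Tendsto (fun s : ℝ => Real.exp (-(c*s))) atTop (𝓝 0) :=
      Real.tendsto_exp_neg_atTop_nhds_zero.comp h1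
    have h3 := (h2.div_const c).neg
    have h4 : (fun s : ℝ => -(Real.exp (-c*s))/c) = fun s => -(Real.exp (-(c*s))/c) := by
      funext s; rw [neg_mul, neg_div]
    rw [h4]
    simpa using h3
  have := integral_Ioi_of_hasDerivAt_of_tendsto' hd (exp_neg_integrableOn_Ioi 0 hc) htd
  rw [this]
  rw [mul_zero, Real.exp_zero]
  field_simp
  ring

lemma int_J {z : ℝ} (hz : 0 < z) :
    IntegrableOn (fun s => phi s / s * Real.exp (-z*s)) (Ioi 0) := by
  apply Integrable.mono' ((exp_neg_integrableOn_Ioi 0 hz).const_mul (1/12))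
  · exact ((cont_phi.div continuousOn_id fun x hx => ne_of_gt hx).mul
      ((Real.continuous_exp.comp (continuous_const.mul continuous_id)).continuousOn)).aestronglyMeasurable
      measurableSet_Ioi
  · rw [ae_restrict_iff' measurableSet_Ioi]
    filter_upwards with s hs
    have h1 : 0 ≤ phi s / s := div_nonneg (phi_nonneg hs) hs.le
    have h2 : phi s / s ≤ 1/12 := by
      rw [div_le_iff₀ hs]; linarith [phi_le hs]
    rw [Real.norm_eq_abs, abs_of_nonneg (by positivity)]
    have := (Real.exp_pos (-z*s)).le
    gcongr

lemma int_I2 {z : ℝ} (hz : 0 < z) :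
    IntegrableOn (fun s => (s/12 - phi s)/s^2 * Real.exp (-z*s)) (Ioi 0) := by
  apply Integrable.mono' ((exp_neg_integrableOn_Ioi 0 hz).const_mul (1/24))
  · exact (((continuousOn_id.div_const 12 |>.sub cont_phi).div (continuousOn_id.pow 2)
      fun x hx => by have h0 : (0:ℝ) < x := hx; exact pow_ne_zero 2 h0.ne').mul
      ((Real.continuous_exp.comp (continuous_const.mul continuous_id)).continuousOn)).aestronglyMeasurable
      measurableSet_Ioi
  · rw [ae_restrict_iff' measurableSet_Ioi]
    filter_upwards with s hs
    have hs0 : (0:ℝ) < s := hs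
    have hs2 : (0:ℝ) < s^2 := by positivity
    have h1 : 0 ≤ (s/12 - phi s)/s^2 := div_nonneg (by linarith [phi_le hs]) hs2.le
    have h2 : (s/12 - phi s)/s^2 ≤ 1/24 := by
      rw [div_le_iff₀ hs2]; nlinarith [phi_lb hs]
    rw [Real.norm_eq_abs, abs_of_nonneg (by positivity)]
    have := (Real.exp_pos (-z*s)).le
    gcongr

lemma int_I1 {z : ℝ} (hz : 0 < z) :
    IntegrableOn (fun s => (phider s - 1/12)/s * Real.exp (-z*s)) (Ioi 0) := by
  apply Integrable.mono' ((exp_neg_integrableOn_Ioi 0 hz).const_mul (1/24))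
  · exact (((cont_phider.sub continuousOn_const).div continuousOn_id
      fun x hx => ne_of_gt hx).mul
      ((Real.continuous_exp.comp (continuous_const.mul continuous_id)).continuousOn)).aestronglyMeasurable
      measurableSet_Ioi
  · rw [ae_restrict_iff' measurableSet_Ioi]
    filter_upwards with s hs
    have hs' : (0:ℝ) < s := hs
    have h2 : |(phider s - 1/12)/s| ≤ 1/24 := by
      rw [abs_div, abs_of_pos hs', div_le_iff₀ hs]
      rw [abs_le]
      constructor
      · nlinarith [phider_lb hs]
      · nlinarith [phider_le hs, hs]
    rw [Real.norm_eq_abs, abs_mul, abs_of_pos (Real.exp_pos _)]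
    calc |(phider s - 1/12)/s| * Real.exp (-z*s) ≤ 1/24 * Real.exp (-z*s) := by
          have := (Real.exp_pos (-z*s)).le; gcongr
    _ = 1/24 * Real.exp (-z*s) := rfl

noncomputable def J (z : ℝ) : ℝ := ∫ s in Ioi (0:ℝ), phi s / s * Real.exp (-z*s)

lemma J_nonneg {z : ℝ} (hz : 0 < z) : 0 ≤ J z := by
  apply setIntegral_nonneg measurableSet_Ioi
  intro s hs
  have := (Real.exp_pos (-z*s)).le
  exact mul_nonneg (div_nonneg (phi_nonneg hs) (le_of_lt hs)) this

lemma J_le {z : ℝ} (hz : 0 < z) : J z ≤ 1/(12*z) := by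
  have h := setIntegral_mono_on (int_J hz) ((exp_neg_integrableOn_Ioi 0 hz).const_mul (1/12))
    measurableSet_Ioi (fun s hs => by
      have h2 : phi s / s ≤ 1/12 := by
        rw [div_le_iff₀ hs]; linarith [phi_le hs]
      have := (Real.exp_pos (-z*s)).le
      gcongr)
  rw [J]
  calc ∫ s in Ioi (0:ℝ), phi s / s * Real.exp (-z*s)
      ≤ ∫ s in Ioi (0:ℝ), 1/12 * Real.exp (-z*s) := h
  _ = 1/12 * (1/z) := by rw [integral_const_mul, integral_exp_Ioi hz]
  _ = 1/(12*z) := by ring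

lemma J_tendsto : Tendsto (fun n : ℕ => J n) atTop (𝓝 0) := by
  have hb : Tendsto (fun n : ℕ => 1/12 * (1/(n:ℝ))) atTop (𝓝 0) := by
    have := tendsto_one_div_atTop_nhds_zero_nat.const_mul (1/12:ℝ)
    rw [mul_zero] at this
    exact this.congr fun n => by ring
  apply tendsto_of_tendsto_of_tendsto_of_le_of_le' tendsto_const_nhds hb
  · filter_upwards [eventually_ge_atTop 1] with n hn
    exact J_nonneg (by positivity)
  · filter_upwards [eventually_ge_atTop 1] with n hn
    have hn' : (0:ℝ) < n := by positivity
    calc J n ≤ 1/(12*(n:ℝ)) := J_le hn'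
    _ = 1/12 * (1/(n:ℝ)) := by ring



lemma hasDerivAt_phi {x : ℝ} (hx : 0 < x) : HasDerivAt phi (phider x) x := by
  have h1 : HasDerivAt (fun s : ℝ => 1/s) (-(1/x^2)) x := by
    simpa [one_div] using hasDerivAt_inv (ne_of_gt hx)
  have h2 : HasDerivAt (fun s : ℝ => Real.exp s - 1) (Real.exp x) x :=
    (Real.hasDerivAt_exp x).sub_const 1
  have h3 := h2.inv (ne_of_gt (expm1_pos hx))
  have h4 : HasDerivAt (fun s : ℝ => 1/(Real.exp s - 1))
      (-Real.exp x / (Real.exp x - 1)^2) x := by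
    have e : (fun s : ℝ => 1/(Real.exp s - 1)) = (fun s => Real.exp s - 1)⁻¹ := by
      funext s; simp [one_div]
    rw [e]; exact h3
  have h := ((hasDerivAt_const x (1/2:ℝ)).sub h1).add h4
  have hfun : (fun s : ℝ => 1/2 - 1/s + 1/(Real.exp s - 1)) = phi := rfl
  rw [← hfun]
  refine h.congr_deriv ?_
  rw [phider]; ring

noncomputable def Hf (z : ℝ) : ℝ → ℝ :=
  fun s => if s ≤ 0 then 0 else (phi s - s/12)/s * Real.exp (-z*s)

noncomputable def DHf (z : ℝ) : ℝ → ℝ := fun s =>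
  ((phider s - 1/12)/s - (phi s - s/12)/s^2 - z*((phi s - s/12)/s)) * Real.exp (-z*s)

lemma I1_key {z : ℝ} (hz : 0 < z) :
    ∫ s in Ioi (0:ℝ), (phider s - 1/12)/s * Real.exp (-z*s)
      = z * J z - 1/12 - ∫ s in Ioi (0:ℝ), (s/12 - phi s)/s^2 * Real.exp (-z*s) := by
  -- derivative of Hf on Ioi 0
  have hH : ∀ x ∈ Ioi (0:ℝ), HasDerivAt (Hf z) (DHf z x) x := by
    intro x hx
    have hx' : (0:ℝ) < x := hx
    have hnum := (hasDerivAt_phi hx').sub ((hasDerivAt_id' (𝕜 := ℝ) x).div_const 12)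
    have hq := hnum.div (hasDerivAt_id' (𝕜 := ℝ) x) (ne_of_gt hx')
    have hexp := ((hasDerivAt_id' (𝕜 := ℝ) x).const_mul (-z)).exp
    have h := hq.mul hexp
    have heq : (fun s : ℝ => (phi s - s/12)/s * Real.exp (-z*s)) =ᶠ[𝓝 x] Hf z := by
      filter_upwards [Ioi_mem_nhds hx'] with y hy
      simp only [Hf, if_neg (not_le.mpr (mem_Ioi.mp hy))]
    have h2 := h.congr_of_eventuallyEq heq.symm
    have hval : ((phider x - 1/12) * x - (phi x - x/12) * 1) / x^2 * Real.exp (-z*x)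
        + (phi x - x/12)/x * (Real.exp (-z*x) * (-z*1)) = DHf z x := by
      simp only [DHf]
      field_simp [hx'.ne']
      ring
    exact hval ▸ h2
  -- continuity at 0 from the right
  have hcont : ContinuousWithinAt (Hf z) (Ici 0) 0 := by
    have hH0 : Hf z 0 = 0 := by simp [Hf]
    unfold ContinuousWithinAt
    rw [hH0]
    have hb : Tendsto (fun s : ℝ => s/24) (𝓝[Ici (0:ℝ)] 0) (𝓝 0) := by
      have : Tendsto (fun s : ℝ => s/24) (𝓝 0) (𝓝 0) := by
        simpa using (continuous_id.div_const (24:ℝ)).tendsto 0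
      exact this.mono_left nhdsWithin_le_nhds
    apply squeeze_zero_norm' _ hb
    filter_upwards [eventually_mem_nhdsWithin] with s hs
    rcases eq_or_lt_of_le (mem_Ici.mp hs) with h | h
    · simp [Hf, ← h]
    · have hs' : (0:ℝ) < s := h
      have h1 : |phi s - s/12| ≤ s^2/24 :=
        abs_le.mpr ⟨by nlinarith [phi_lb hs'], by nlinarith [phi_le hs']⟩
      have he : Real.exp (-z*s) ≤ 1 := Real.exp_le_one_iff.mpr (by nlinarith)
      simp only [Hf, if_neg (not_le.mpr hs')]
      rw [Real.norm_eq_abs, abs_mul, abs_div, abs_of_pos hs', abs_of_pos (Real.exp_pos _)]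
      calc |phi s - s/12|/s * Real.exp (-z*s) ≤ (s^2/24)/s * 1 := by
            apply mul_le_mul _ he (Real.exp_pos _).le (by positivity)
            gcongr
      _ = s/24 := by field_simp [hs'.ne']
  -- limit at infinity
  have htop : Tendsto (Hf z) atTop (𝓝 0) := by
    have hb : Tendsto (fun s : ℝ => 1/12 * Real.exp (-z*s)) atTop (𝓝 0) := by
      have h1 : Tendsto (fun s : ℝ => z*s) atTop atTop := Tendsto.const_mul_atTop hz tendsto_id
      have h2 : Tendsto (fun s : ℝ => Real.exp (-(z*s))) atTop (𝓝 0) :=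
        Real.tendsto_exp_neg_atTop_nhds_zero.comp h1
      have h3 := h2.const_mul (1/12:ℝ)
      rw [mul_zero] at h3
      exact h3.congr fun s => by rw [neg_mul]
    apply squeeze_zero_norm' _ hb
    filter_upwards [eventually_gt_atTop 0] with s hs
    have h1 : |phi s - s/12| ≤ s/12 :=
      abs_le.mpr ⟨by nlinarith [phi_nonneg hs], by nlinarith [phi_le hs]⟩
    simp only [Hf, if_neg (not_le.mpr hs)]
    rw [Real.norm_eq_abs, abs_mul, abs_div, abs_of_pos hs, abs_of_pos (Real.exp_pos _)]
    have h2 : |phi s - s/12|/s ≤ 1/12 := by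
      rw [div_le_iff₀ hs]
      calc |phi s - s/12| ≤ s/12 := h1
      _ = 1/12*s := by ring
    have he := (Real.exp_pos (-z*s)).le
    gcongr
  -- integrability of DHf
  have hDHi : IntegrableOn (DHf z) (Ioi 0) := by
    have base := (((int_I1 hz).add (int_I2 hz)).add
      (((exp_neg_integrableOn_Ioi 0 hz).const_mul (z/12)))).sub ((int_J hz).const_mul z)
    apply IntegrableOn.congr_fun base _ measurableSet_Ioi
    intro s hs
    have hs' : (0:ℝ) < s := hs
    simp only [DHf, Pi.add_apply, Pi.sub_apply]
    field_simp [hs'.ne']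
    ring
  -- FTC
  have hFTC := integral_Ioi_of_hasDerivAt_of_tendsto hcont hH hDHi htop
  have hH0 : Hf z 0 = 0 := by simp [Hf]
  rw [hH0, sub_zero] at hFTC
  -- expand the integral of DHf
  have hsplit : ∫ s in Ioi (0:ℝ), DHf z s
      = ((∫ s in Ioi (0:ℝ), (phider s - 1/12)/s * Real.exp (-z*s))
        + (∫ s in Ioi (0:ℝ), (s/12 - phi s)/s^2 * Real.exp (-z*s))
        + (z/12) * (1/z)) - z * J z := by
    have hcongr : ∫ s in Ioi (0:ℝ), DHf z s
        = ∫ s in Ioi (0:ℝ), ((phider s - 1/12)/s * Real.exp (-z*s)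
            + (s/12 - phi s)/s^2 * Real.exp (-z*s)
            + (z/12) * Real.exp (-z*s)) - z * (phi s / s * Real.exp (-z*s)) := by
      apply setIntegral_congr_fun measurableSet_Ioi
      intro s hs
      have hs' : (0:ℝ) < s := hs
      simp only [DHf]
      field_simp [hs'.ne']
      ring
    rw [hcongr]
    have hA : Integrable (fun s => (phider s - 1/12)/s * Real.exp (-z*s)
        + (s/12 - phi s)/s^2 * Real.exp (-z*s) + (z/12) * Real.exp (-z*s))
        (volume.restrict (Ioi 0)) :=
      ((int_I1 hz).add (int_I2 hz)).add ((exp_neg_integrableOn_Ioi 0 hz).const_mul (z/12))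
    have hB : Integrable (fun s => z * (phi s / s * Real.exp (-z*s)))
        (volume.restrict (Ioi 0)) := (int_J hz).const_mul z
    rw [integral_sub hA hB]
    have hA1 : Integrable (fun s => (phider s - 1/12)/s * Real.exp (-z*s)
        + (s/12 - phi s)/s^2 * Real.exp (-z*s)) (volume.restrict (Ioi 0)) :=
      (int_I1 hz).add (int_I2 hz)
    rw [integral_add hA1 ((exp_neg_integrableOn_Ioi 0 hz).const_mul (z/12))]
    rw [integral_add (int_I1 hz) (int_I2 hz)]
    rw [integral_const_mul, integral_const_mul, integral_exp_Ioi hz]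
    rw [J]
  rw [hsplit] at hFTC
  have hz' : z/12 * (1/z) = 1/12 := by field_simp
  rw [hz'] at hFTC
  linarith


lemma inner_eq {s : ℝ} (hs : 0 < s) (z : ℝ) :
    ∫ u in Ioc (0:ℝ) 1, (1/2 - u) * Real.exp (-(z+u)*s)
      = phi s / s * (Real.exp (-z*s) - Real.exp (-(z+1)*s)) := by
  rw [← intervalIntegral.integral_of_le zero_le_one]
  have hderiv : ∀ u ∈ uIcc (0:ℝ) 1,
      HasDerivAt (fun u => Real.exp (-(z+u)*s) * (u/s + (1/s^2 - 1/(2*s))))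
        ((1/2 - u) * Real.exp (-(z+u)*s)) u := by
    intro u _
    have h1 : HasDerivAt (fun u : ℝ => -(z+u)*s) (-s) u := by
      simpa using (((hasDerivAt_id' (𝕜 := ℝ) u).const_add z).neg).mul_const s
    have h2 := h1.exp
    have h3 := ((hasDerivAt_id' (𝕜 := ℝ) u).div_const s).add_const (1/s^2 - 1/(2*s))
    have h := h2.mul h3
    refine h.congr_deriv ?_
    field_simp [hs.ne']
    ring
  have hci : IntervalIntegrable (fun u : ℝ => (1/2 - u) * Real.exp (-(z+u)*s)) volume 0 1 := by
    apply Continuous.intervalIntegrable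
    have : Continuous fun u : ℝ => -(z+u)*s := by continuity
    exact (continuous_const.sub continuous_id).mul (Real.continuous_exp.comp this)
  rw [intervalIntegral.integral_eq_sub_of_hasDerivAt hderiv hci]
  have hE := expm1_pos hs
  have h2 : -(z+1)*s = -z*s + -s := by ring
  have h3 : -(z+(0:ℝ))*s = -z*s := by ring
  rw [h2, h3, Real.exp_add, Real.exp_neg]
  rw [phi]
  field_simp
  ring

lemma outer_eq {z : ℝ} (hz : 0 < z) :
    ∫ u in Ioc (0:ℝ) 1, (1/2 - u) * (1/(z+u))
      = (z + 1/2)*(Real.log (z+1) - Real.log z) - 1 := by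
  rw [← intervalIntegral.integral_of_le zero_le_one]
  have hderiv : ∀ u ∈ uIcc (0:ℝ) 1,
      HasDerivAt (fun u => (z + 1/2) * Real.log (z+u) - u)
        ((1/2 - u) * (1/(z+u))) u := by
    intro u hu
    have hu' : (0:ℝ) ≤ u ∧ u ≤ 1 := by
      rw [uIcc_of_le zero_le_one] at hu
      exact ⟨hu.1, hu.2⟩
    have hzu : (0:ℝ) < z + u := by linarith [hu'.1]
    have h1 : HasDerivAt (fun u : ℝ => z + u) 1 u := (hasDerivAt_id' (𝕜 := ℝ) u).const_add z
    have h2 := (h1.log hzu.ne').const_mul (z + 1/2)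
    have h := h2.sub (hasDerivAt_id' (𝕜 := ℝ) u)
    refine h.congr_deriv ?_
    field_simp
    ring
  have hci : IntervalIntegrable (fun u : ℝ => (1/2 - u) * (1/(z+u))) volume 0 1 := by
    apply ContinuousOn.intervalIntegrable
    apply ContinuousOn.mul (continuous_const.sub continuous_id).continuousOn
    apply continuousOn_const.div (continuous_const.add continuous_id).continuousOn
    intro x hx
    rw [uIcc_of_le zero_le_one] at hx
    have : (0:ℝ) ≤ x := hx.1
    exact (by linarith : (0:ℝ) < z + x).ne'
  rw [intervalIntegral.integral_eq_sub_of_hasDerivAt hderiv hci]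
  rw [add_zero]
  ring

lemma J_rec {z : ℝ} (hz : 0 < z) :
    J z - J (z+1) = (z + 1/2)*(Real.log (z+1) - Real.log z) - 1 := by
  have hz1 : (0:ℝ) < z + 1 := by linarith
  -- step C : difference of the two integrals
  have hC : J z - J (z+1)
      = ∫ s in Ioi (0:ℝ), phi s / s * (Real.exp (-z*s) - Real.exp (-(z+1)*s)) := by
    rw [J, J, ← integral_sub (int_J hz) (int_J hz1)]
    apply setIntegral_congr_fun measurableSet_Ioi
    intro s _
    simp only
    ring
  -- step D : Fubini
  have hmeas : Continuous (fun p : ℝ × ℝ => (1/2 - p.2) * Real.exp (-(z+p.2)*p.1)) := by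
    apply (continuous_const.sub continuous_snd).mul
    apply Real.continuous_exp.comp
    exact ((continuous_const.add continuous_snd).neg).mul continuous_fst
  have hint : Integrable (fun p : ℝ × ℝ => (1/2 - p.2) * Real.exp (-(z+p.2)*p.1))
      ((volume.restrict (Ioi (0:ℝ))).prod (volume.restrict (Ioc (0:ℝ) 1))) := by
    apply Integrable.mono'
      (g := fun p : ℝ × ℝ => (1/2) * Real.exp (-z * p.1) * 1)
    · exact (((exp_neg_integrableOn_Ioi 0 hz).const_mul (1/2)).mul_prod
        (integrableOn_const (by simp)))
    · exact hmeas.aestronglyMeasurable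
    · rw [Measure.prod_restrict]
      rw [ae_restrict_iff' (measurableSet_Ioi.prod measurableSet_Ioc)]
      filter_upwards with p hp
      obtain ⟨hp1, hp2⟩ := mem_prod.mp hp
      have hs : (0:ℝ) < p.1 := hp1
      have hu1 : (0:ℝ) < p.2 := hp2.1
      have hu2 : p.2 ≤ 1 := hp2.2
      rw [Real.norm_eq_abs, abs_mul, abs_of_pos (Real.exp_pos _), mul_one]
      have h1 : |1/2 - p.2| ≤ 1/2 := abs_le.mpr (by constructor <;> linarith)
      have h2 : Real.exp (-(z+p.2)*p.1) ≤ Real.exp (-z*p.1) := by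
        apply Real.exp_le_exp.mpr
        nlinarith
      calc |1/2 - p.2| * Real.exp (-(z+p.2)*p.1) ≤ 1/2 * Real.exp (-z*p.1) := by
            apply mul_le_mul h1 h2 (Real.exp_pos _).le (by norm_num)
      _ = 1/2 * Real.exp (-z*p.1) := rfl
  have hswap := integral_integral_swap (f := fun s u => (1/2 - u) * Real.exp (-(z+u)*s)) hint
  -- assemble
  rw [hC]
  have e1 : ∫ s in Ioi (0:ℝ), phi s / s * (Real.exp (-z*s) - Real.exp (-(z+1)*s))
      = ∫ s in Ioi (0:ℝ), ∫ u in Ioc (0:ℝ) 1, (1/2 - u) * Real.exp (-(z+u)*s) := by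
    apply setIntegral_congr_fun measurableSet_Ioi
    intro s hs
    exact (inner_eq hs z).symm
  have e2 : ∫ u in Ioc (0:ℝ) 1, (∫ s in Ioi (0:ℝ), (1/2 - u) * Real.exp (-(z+u)*s))
      = ∫ u in Ioc (0:ℝ) 1, (1/2 - u) * (1/(z+u)) := by
    apply setIntegral_congr_fun measurableSet_Ioc
    intro u hu
    have hzu : (0:ℝ) < z + u := by linarith [hu.1]
    show (∫ s in Ioi (0:ℝ), (1/2 - u) * Real.exp (-(z+u)*s)) = (1/2 - u) * (1/(z+u))
    rw [integral_const_mul, integral_exp_Ioi hzu]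
  rw [e1, hswap, e2, outer_eq hz]



noncomputable def G0 : ℝ → ℝ := fun z => (z - 1/2) * Real.log z - z + J z

lemma convexOn_congr {s : Set ℝ} {f g : ℝ → ℝ} (h : ConvexOn ℝ s f)
    (he : ∀ x ∈ s, f x = g x) : ConvexOn ℝ s g := by
  refine ⟨h.1, fun x hx y hy a b ha hb hab => ?_⟩
  rw [← he x hx, ← he y hy, ← he _ (h.1 hx hy ha hb hab)]
  exact h.2 hx hy ha hb hab

lemma J_convex : ConvexOn ℝ (Ioi 0) J := by
  refine ⟨convex_Ioi 0, fun x hx y hy a b ha hb hab => ?_⟩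
  have hx' : (0:ℝ) < x := hx
  have hy' : (0:ℝ) < y := hy
  have hmin : (0:ℝ) < min x y := lt_min hx' hy'
  have hxy : (0:ℝ) < a*x + b*y := by
    nlinarith [mul_le_mul_of_nonneg_left (min_le_left x y) ha,
      mul_le_mul_of_nonneg_left (min_le_right x y) hb]
  simp only [smul_eq_mul]
  have step : J (a*x + b*y) ≤ ∫ s in Ioi (0:ℝ),
      (a * (phi s / s * Real.exp (-x*s)) + b * (phi s / s * Real.exp (-y*s))) := by
    rw [J]
    apply setIntegral_mono_on (int_J hxy)
      (((int_J hx').const_mul a).add ((int_J hy').const_mul b)) measurableSet_Ioi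
    intro s hs
    have hs' : (0:ℝ) < s := hs
    have hphis : 0 ≤ phi s / s := div_nonneg (phi_nonneg hs') hs'.le
    have hconv := convexOn_exp.2 (mem_univ (-x*s)) (mem_univ (-y*s)) ha hb hab
    simp only [smul_eq_mul] at hconv
    have h0 : -(a*x+b*y)*s = a*(-x*s) + b*(-y*s) := by ring
    rw [h0]
    simp only [Pi.add_apply]
    nlinarith [mul_le_mul_of_nonneg_left hconv hphis]
  calc J (a*x + b*y) ≤ _ := step
  _ = a * J x + b * J y := by
      rw [integral_add ((int_J hx').const_mul a) ((int_J hy').const_mul b),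
        integral_const_mul, integral_const_mul]
      rfl

lemma G0_convex : ConvexOn ℝ (Ioi 0) G0 := by
  have c1 : ConvexOn ℝ (Ioi 0) (fun z : ℝ => z * Real.log z) :=
    Real.convexOn_mul_log.subset Ioi_subset_Ici_self (convex_Ioi 0)
  have c2 : ConvexOn ℝ (Ioi 0) (fun z : ℝ => (1/2 : ℝ) • (-Real.log z)) := by
    have := (strictConcaveOn_log_Ioi.concaveOn.neg).smul (by norm_num : (0:ℝ) ≤ 1/2)
    exact convexOn_congr this (fun x _ => by simp)
  have c3 : ConvexOn ℝ (Ioi 0) (fun z : ℝ => -z) := by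
    refine ⟨convex_Ioi 0, fun x _ y _ a b _ _ _ => ?_⟩
    simp only [smul_eq_mul]
    exact le_of_eq (by ring)
  have hsum := ((c1.add c2).add c3).add J_convex
  apply convexOn_congr hsum
  intro x _
  simp only [Pi.add_apply, smul_eq_mul, G0]
  ring

lemma G0_rec : ∀ {y : ℝ}, 0 < y → G0 (y+1) = G0 y + Real.log y := by
  intro y hy
  simp only [G0]
  linear_combination (-1 : ℝ) * J_rec hy

lemma log_Gamma_eq {x : ℝ} (hx : 0 < x) : Real.log (Real.Gamma x) = G0 x - G0 1 :=
  tendsto_nhds_unique (Real.BohrMollerup.tendsto_log_gamma hx)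
    (Real.BohrMollerup.tendsto_logGammaSeq G0_convex (fun {y} hy => G0_rec hy) hx)

lemma const_eq : 1 - J 1 = Real.log (2*Real.pi) / 2 := by
  have hπ : (0:ℝ) < Real.sqrt Real.pi := Real.sqrt_pos.mpr Real.pi_pos
  have h1 : Tendsto (fun n : ℕ => Real.log (Stirling.stirlingSeq n)) atTop
      (𝓝 (Real.log (Real.sqrt Real.pi))) :=
    Stirling.tendsto_stirlingSeq_sqrt_pi.log hπ.ne'
  have h2 : ∀ᶠ n : ℕ in atTop, Real.log (Stirling.stirlingSeq n)
      = J n + (1 - J 1) - Real.log 2 / 2 := by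
    filter_upwards [eventually_ge_atTop 1] with n hn
    have hn0 : (0:ℝ) < (n:ℝ) := by exact_mod_cast hn
    rw [Stirling.log_stirlingSeq_formula]
    have hfac : Real.log ((Nat.factorial n : ℕ) : ℝ) = Real.log n + Real.log (Real.Gamma n) := by
      rw [← Real.Gamma_nat_eq_factorial, Real.Gamma_add_one hn0.ne']
      rw [Real.log_mul hn0.ne' (Real.Gamma_pos_of_pos hn0).ne']
    have hG : Real.log (Real.Gamma n) = ((n:ℝ) - 1/2) * Real.log n - n + J n - (J 1 - 1) := by
      rw [log_Gamma_eq hn0]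
      simp only [G0, Real.log_one]
      ring
    have hl2 : Real.log (2*(n:ℝ)) = Real.log 2 + Real.log n :=
      Real.log_mul two_ne_zero hn0.ne'
    have hle : Real.log ((n:ℝ) / Real.exp 1) = Real.log n - 1 := by
      rw [Real.log_div hn0.ne' (Real.exp_ne_zero 1), Real.log_exp]
    rw [hfac, hG, hl2, hle]
    ring
  have h3 : Tendsto (fun n : ℕ => J n + (1 - J 1) - Real.log 2 / 2) atTop
      (𝓝 (0 + (1 - J 1) - Real.log 2 / 2)) := by
    exact Tendsto.sub_const (J_tendsto.add_const (1 - J 1)) (Real.log 2 / 2)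
  have h4 := tendsto_nhds_unique (h1.congr' h2) h3
  have h5 : Real.log (Real.sqrt Real.pi) = Real.log Real.pi / 2 :=
    Real.log_sqrt Real.pi_pos.le
  have h6 : Real.log (2*Real.pi) = Real.log 2 + Real.log Real.pi :=
    Real.log_mul two_ne_zero Real.pi_ne_zero
  rw [h5] at h4
  linarith

lemma binet_formula {z : ℝ} (hz : 0 < z) :
    Real.log (Real.Gamma z)
      = (z - 1/2) * Real.log z - z + Real.log (2*Real.pi) / 2 + J z := by
  rw [log_Gamma_eq hz]
  have hG1 : G0 1 = J 1 - 1 := by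
    simp only [G0, Real.log_one]
    ring
  rw [hG1]
  simp only [G0]
  linear_combination const_eq

end BinetAux

open BinetAux in
/-- For every real `z > 0`,
`∫_0^∞ (1/s)(1/s² - 1/12 - e^s/(e^s-1)²) e^{-zs} ds
  = z log Γ(z) - z(z - 1/2) log z + z² - (z/2) log(2π) - 1/12
    - ∫_0^∞ (1/s²)(1/2 + 1/s + s/12 - e^s/(e^s-1)) e^{-zs} ds`. -/
theorem binet_integral_identity (z : ℝ) (hz : 0 < z) :
    ∫ s in Set.Ioi (0 : ℝ),
        (1 / s) * (1 / s ^ 2 - 1 / 12 - Real.exp s / (Real.exp s - 1) ^ 2) *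
          Real.exp (-z * s)
      = z * Real.log (Real.Gamma z) - z * (z - 1 / 2) * Real.log z + z ^ 2
          - (z / 2) * Real.log (2 * Real.pi) - 1 / 12
          - ∫ s in Set.Ioi (0 : ℝ),
              (1 / s ^ 2) * (1 / 2 + 1 / s + s / 12 - Real.exp s / (Real.exp s - 1)) *
                Real.exp (-z * s) := by
  have e1 : ∫ s in Set.Ioi (0 : ℝ),
        (1 / s) * (1 / s ^ 2 - 1 / 12 - Real.exp s / (Real.exp s - 1) ^ 2) *
          Real.exp (-z * s)
      = ∫ s in Set.Ioi (0:ℝ), (phider s - 1/12)/s * Real.exp (-z*s) := by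
    apply MeasureTheory.setIntegral_congr_fun measurableSet_Ioi
    intro s _
    simp only [phider]
    ring
  have e2 : ∫ s in Set.Ioi (0 : ℝ),
        (1 / s ^ 2) * (1 / 2 + 1 / s + s / 12 - Real.exp s / (Real.exp s - 1)) *
          Real.exp (-z * s)
      = ∫ s in Set.Ioi (0:ℝ), (s/12 - phi s)/s^2 * Real.exp (-z*s) := by
    apply MeasureTheory.setIntegral_congr_fun measurableSet_Ioi
    intro s hs
    have hs' : (0:ℝ) < s := hs
    have hE := expm1_pos hs'
    simp only [phi]
    field_simp
    ring
  rw [e1, e2, I1_key hz]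
  linear_combination (-z) * binet_formula hz
end
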